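/- arXiv:1902.00368 — 9 statements merged into one kernel-verified Lean document; each statement's English description precedes it below -/
import Mathlib

section
/- Let b ∈ (0,1). There exists a strictly decreasing continuous function c_* : [0,∞) → (2,∞) with c_*(0) = 2·(1−b)^{−1/2} and c_*(τ) → 2 as τ → +∞, such that for every τ ≥ 0 and c > 0: the function χ₀ has at least one positive real zero if and only if c ≥ c_*(τ); moreover, when c > c_*(τ), χ₀ has exactly two positive real zeros λ₂(c) < λ₁(c), and when c = c_*(τ), χ₀ has exactly one positive real zero, which is a double zero (χ₀ and χ₀' both vanish there). -/
open Filter Set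

/-- Characteristic function χ₀(z) = z² − c·z + 1/(1 − b·e^{−z·c·τ}). -/
noncomputable def chi0 (b c τ z : ℝ) : ℝ :=
  z ^ 2 - c * z + 1 / (1 - b * Real.exp (-(z * c * τ)))

section basic
variable {b c τ z : ℝ}

lemma den_pos (hb : b ∈ Set.Ioo (0:ℝ) 1) (h : 0 ≤ z * c * τ) :
    1 - b < 1 - b * Real.exp (-(z * c * τ)) ∨ 1 - b ≤ 1 - b * Real.exp (-(z * c * τ)) := by
  right
  have h1 : Real.exp (-(z * c * τ)) ≤ 1 := Real.exp_le_one_iff.mpr (by linarith)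
  nlinarith [hb.1, hb.2]

lemma den_ge (hb : b ∈ Set.Ioo (0:ℝ) 1) (h : 0 ≤ z * c * τ) :
    1 - b ≤ 1 - b * Real.exp (-(z * c * τ)) := by
  have h1 : Real.exp (-(z * c * τ)) ≤ 1 := Real.exp_le_one_iff.mpr (by linarith)
  nlinarith [hb.1]

lemma den_pos' (hb : b ∈ Set.Ioo (0:ℝ) 1) (h : 0 ≤ z * c * τ) :
    0 < 1 - b * Real.exp (-(z * c * τ)) :=
  lt_of_lt_of_le (by linarith [hb.2]) (den_ge hb h)

lemma den_lt_one (hb : b ∈ Set.Ioo (0:ℝ) 1) :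
    1 - b * Real.exp (-(z * c * τ)) < 1 := by
  nlinarith [Real.exp_pos (-(z * c * τ)), hb.1]

lemma frac_gt_one (hb : b ∈ Set.Ioo (0:ℝ) 1) (h : 0 ≤ z * c * τ) :
    1 < 1 / (1 - b * Real.exp (-(z * c * τ))) := by
  rw [lt_div_iff₀ (den_pos' hb h)]
  simpa using den_lt_one (z := z) (c := c) (τ := τ) hb

lemma frac_le (hb : b ∈ Set.Ioo (0:ℝ) 1) (h : 0 ≤ z * c * τ) :
    1 / (1 - b * Real.exp (-(z * c * τ))) ≤ 1 / (1 - b) :=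
  one_div_le_one_div_of_le (by linarith [hb.2]) (den_ge hb h)

/-- χ₀ > 0 when z ≥ c (and z ≥ 0). -/
lemma chi0_pos_of_ge (hb : b ∈ Set.Ioo (0:ℝ) 1) (hc : 0 < c) (hτ : 0 ≤ τ)
    (hz : 0 ≤ z) (hzc : c ≤ z) : 0 < chi0 b c τ z := by
  have h : 0 ≤ z * c * τ := by positivity
  have := frac_gt_one hb h
  have : z ^ 2 - c * z ≥ 0 := by nlinarith
  unfold chi0; nlinarith [frac_gt_one hb h]

/-- χ₀ > 0 when c ≤ 2. -/
lemma chi0_pos_of_c_le_two (hb : b ∈ Set.Ioo (0:ℝ) 1) (hc : 0 < c) (hc2 : c ≤ 2)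
    (hτ : 0 ≤ τ) (hz : 0 ≤ z) : 0 < chi0 b c τ z := by
  have h : 0 ≤ z * c * τ := by positivity
  have h1 := frac_gt_one hb h
  unfold chi0; nlinarith [sq_nonneg (z - 1)]

lemma chi0_zero_pos (hb : b ∈ Set.Ioo (0:ℝ) 1) (hc : 0 < c) (hτ : 0 ≤ τ) :
    0 < chi0 b c τ 0 := by
  have h : (0:ℝ) ≤ 0 * c * τ := by simp
  have h1 := frac_gt_one (z := 0) (c := c) (τ := τ) hb h
  unfold chi0; nlinarith

/-- χ₀ is antitone in c (z ≥ 0), strictly if z > 0. -/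
lemma chi0_anti_c (hb : b ∈ Set.Ioo (0:ℝ) 1) {c' : ℝ} (hc : 0 < c) (hcc : c ≤ c')
    (hτ : 0 ≤ τ) (hz : 0 ≤ z) : chi0 b c' τ z ≤ chi0 b c τ z := by
  have hc' : 0 < c' := lt_of_lt_of_le hc hcc
  have h : 0 ≤ z * c * τ := by positivity
  have h' : 0 ≤ z * c' * τ := by positivity
  have hexp : Real.exp (-(z * c' * τ)) ≤ Real.exp (-(z * c * τ)) := by
    apply Real.exp_le_exp.mpr; nlinarith
  have hden : 1 - b * Real.exp (-(z * c * τ)) ≤ 1 - b * Real.exp (-(z * c' * τ)) := by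
    nlinarith [hb.1]
  have hfr : 1 / (1 - b * Real.exp (-(z * c' * τ))) ≤ 1 / (1 - b * Real.exp (-(z * c * τ))) :=
    one_div_le_one_div_of_le (den_pos' hb h) hden
  unfold chi0; nlinarith

lemma chi0_strict_anti_c (hb : b ∈ Set.Ioo (0:ℝ) 1) {c' : ℝ} (hc : 0 < c) (hcc : c < c')
    (hτ : 0 ≤ τ) (hz : 0 < z) : chi0 b c' τ z < chi0 b c τ z := by
  have h := chi0_anti_c (z := z) hb (hc := hc) (hcc := le_of_lt hcc) hτ (le_of_lt hz)
  -- improve: the -c z term is strictly smaller; redo directly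
  have hc' : 0 < c' := lt_of_lt_of_le hc (le_of_lt hcc)
  have hkey : 0 ≤ z * c * τ := by positivity
  have hexp : Real.exp (-(z * c' * τ)) ≤ Real.exp (-(z * c * τ)) := by
    apply Real.exp_le_exp.mpr; nlinarith
  have hden : 1 - b * Real.exp (-(z * c * τ)) ≤ 1 - b * Real.exp (-(z * c' * τ)) := by
    nlinarith [hb.1]
  have hfr : 1 / (1 - b * Real.exp (-(z * c' * τ))) ≤ 1 / (1 - b * Real.exp (-(z * c * τ))) :=
    one_div_le_one_div_of_le (den_pos' hb hkey) hden
  unfold chi0; nlinarith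

/-- χ₀ is strictly antitone in τ for z > 0, c > 0. -/
lemma chi0_strict_anti_tau (hb : b ∈ Set.Ioo (0:ℝ) 1) {τ' : ℝ} (hc : 0 < c)
    (hτ : 0 ≤ τ) (hττ : τ < τ') (hz : 0 < z) : chi0 b c τ' z < chi0 b c τ z := by
  have h : 0 ≤ z * c * τ := by positivity
  have hexp : Real.exp (-(z * c * τ')) < Real.exp (-(z * c * τ)) := by
    apply Real.exp_lt_exp.mpr
    nlinarith [mul_pos (mul_pos hz hc) (sub_pos.2 hττ)]
  have hden : 1 - b * Real.exp (-(z * c * τ)) < 1 - b * Real.exp (-(z * c * τ')) := by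
    nlinarith [hb.1]
  have hfr : 1 / (1 - b * Real.exp (-(z * c * τ'))) < 1 / (1 - b * Real.exp (-(z * c * τ))) :=
    one_div_lt_one_div_of_lt (den_pos' hb h) hden
  unfold chi0; nlinarith

end basic

section lip
variable {b c τ z : ℝ}

/-- exp(-x) - exp(-y) ≤ y - x for 0 ≤ x ≤ y. -/
lemma exp_neg_lip {x y : ℝ} (hx : 0 ≤ x) (hxy : x ≤ y) :
    Real.exp (-x) - Real.exp (-y) ≤ y - x := by
  have h1 : Real.exp (-x) ≤ 1 := Real.exp_le_one_iff.mpr (by linarith)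
  have h2 : 1 + -(y - x) ≤ Real.exp (-(y - x)) := by
    have := Real.add_one_le_exp (-(y - x)); linarith
  have h3 : Real.exp (-y) = Real.exp (-x) * Real.exp (-(y - x)) := by
    rw [← Real.exp_add]; ring_nf
  nlinarith [Real.exp_pos (-(y-x)), Real.exp_pos (-x)]

lemma frac_diff_bounds (hb : b ∈ Set.Ioo (0:ℝ) 1) {x y : ℝ} (hx : 0 ≤ x) (hxy : x ≤ y) :
    0 ≤ 1 / (1 - b * Real.exp (-x)) - 1 / (1 - b * Real.exp (-y)) ∧
    1 / (1 - b * Real.exp (-x)) - 1 / (1 - b * Real.exp (-y)) ≤ b * (y - x) / (1 - b)^2 := by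
  have hy : 0 ≤ y := le_trans hx hxy
  have hex : Real.exp (-x) ≤ 1 := Real.exp_le_one_iff.mpr (by linarith)
  have hey : Real.exp (-y) ≤ 1 := Real.exp_le_one_iff.mpr (by linarith)
  have hDx : 1 - b ≤ 1 - b * Real.exp (-x) := by nlinarith [hb.1]
  have hDy : 1 - b ≤ 1 - b * Real.exp (-y) := by nlinarith [hb.1]
  have hbpos : (0:ℝ) < 1 - b := by linarith [hb.2]
  have hDx0 : 0 < 1 - b * Real.exp (-x) := lt_of_lt_of_le hbpos hDx
  have hDy0 : 0 < 1 - b * Real.exp (-y) := lt_of_lt_of_le hbpos hDy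
  have hee : Real.exp (-y) ≤ Real.exp (-x) := Real.exp_le_exp.mpr (by linarith)
  have heq : 1 / (1 - b * Real.exp (-x)) - 1 / (1 - b * Real.exp (-y))
      = b * (Real.exp (-x) - Real.exp (-y)) / ((1 - b * Real.exp (-x)) * (1 - b * Real.exp (-y))) := by
    field_simp; ring
  constructor
  · rw [heq]
    apply div_nonneg (by nlinarith [hb.1]) (by positivity)
  · rw [heq]
    have hnum : b * (Real.exp (-x) - Real.exp (-y)) ≤ b * (y - x) := by
      nlinarith [hb.1, exp_neg_lip hx hxy]
    have hden : (1 - b)^2 ≤ (1 - b * Real.exp (-x)) * (1 - b * Real.exp (-y)) := by nlinarith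
    calc b * (Real.exp (-x) - Real.exp (-y)) / ((1 - b * Real.exp (-x)) * (1 - b * Real.exp (-y)))
        ≤ b * (Real.exp (-x) - Real.exp (-y)) / (1 - b)^2 := by
          apply div_le_div_of_nonneg_left _ (by positivity) hden
          · nlinarith [hb.1]
      _ ≤ b * (y - x) / (1 - b)^2 := by
          apply div_le_div_of_nonneg_right ?_ (by positivity)
          · nlinarith [hb.1, exp_neg_lip hx hxy]
  
/-- Lipschitz-type bound in τ. -/
lemma chi0_lip_tau (hb : b ∈ Set.Ioo (0:ℝ) 1) (hc : 0 < c) (hz : 0 ≤ z)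
    {τ' : ℝ} (hτ : 0 ≤ τ) (hττ : τ ≤ τ') :
    chi0 b c τ z - chi0 b c τ' z ≤ b * (z * c) * (τ' - τ) / (1 - b)^2 := by
  have hx : 0 ≤ z * c * τ := by positivity
  have hxy : z * c * τ ≤ z * c * τ' := by nlinarith [mul_nonneg (mul_nonneg hz hc.le) (sub_nonneg.2 hττ)]
  have h := (frac_diff_bounds hb hx hxy).2
  unfold chi0
  have : b * (z * c * τ' - z * c * τ) / (1-b)^2 = b * (z * c) * (τ' - τ) / (1-b)^2 := by ring
  linarith [this ▸ h]

/-- Lipschitz-type bound in c (both directions). -/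
lemma chi0_lip_c (hb : b ∈ Set.Ioo (0:ℝ) 1) (hc : 0 < c) (hz : 0 ≤ z)
    {c' : ℝ} (hτ : 0 ≤ τ) (hcc : c ≤ c') :
    chi0 b c τ z - chi0 b c' τ z ≤ z * (c' - c) * (1 + b * τ / (1 - b)^2) := by
  have hx : 0 ≤ z * c * τ := by positivity
  have hxy : z * c * τ ≤ z * c' * τ := by nlinarith
  have h := (frac_diff_bounds hb hx hxy).2
  have hbpos : (0:ℝ) < 1 - b := by linarith [hb.2]
  unfold chi0
  have h2 : b * (z * c' * τ - z * c * τ) / (1-b)^2 = z * (c' - c) * (b * τ / (1-b)^2) := by ring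
  have h3 : 1 / (1 - b * Real.exp (-(z * c * τ))) - 1 / (1 - b * Real.exp (-(z * c' * τ)))
      ≤ z * (c' - c) * (b * τ / (1-b)^2) := by linarith [h2 ▸ h]
  nlinarith [h3]

end lip

section cont
variable {b c τ : ℝ}

lemma chi0_contOn (hb : b ∈ Set.Ioo (0:ℝ) 1) (hc : 0 < c) (hτ : 0 ≤ τ) :
    ContinuousOn (chi0 b c τ) (Set.Ici 0) := by
  apply ContinuousOn.add
  · exact (Continuous.sub (continuous_pow 2) (continuous_const.mul continuous_id)).continuousOn
  · apply ContinuousOn.div continuousOn_const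
    · exact (Continuous.sub continuous_const (continuous_const.mul
        ((Real.continuous_exp.comp (Continuous.neg (by continuity)))))).continuousOn
    · intro z hz
      have hz' : 0 ≤ z := hz
      exact (den_pos' hb (by positivity)).ne'

lemma exists_chi0_zero_lt (hb : b ∈ Set.Ioo (0:ℝ) 1) (hc : 0 < c) (hτ : 0 ≤ τ)
    {z0 : ℝ} (hz0 : 0 < z0) (hneg : chi0 b c τ z0 < 0) :
    ∃ z ∈ Set.Ioo 0 z0, chi0 b c τ z = 0 := by
  have hcont : ContinuousOn (chi0 b c τ) (Set.Icc 0 z0) :=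
    (chi0_contOn hb hc hτ).mono (Set.Icc_subset_Ici_self)
  have h0 := chi0_zero_pos (b := b) (c := c) (τ := τ) hb hc hτ
  have := intermediate_value_Ioo' (le_of_lt hz0) hcont
  have hmem : (0:ℝ) ∈ Set.Ioo (chi0 b c τ z0) (chi0 b c τ 0) := ⟨hneg, h0⟩
  obtain ⟨z, hz, hzz⟩ := this hmem
  exact ⟨z, hz, hzz⟩

lemma exists_chi0_zero_gt (hb : b ∈ Set.Ioo (0:ℝ) 1) (hc : 0 < c) (hτ : 0 ≤ τ)
    {z0 : ℝ} (hz0 : 0 < z0) (hneg : chi0 b c τ z0 < 0) :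
    ∃ z ∈ Set.Ioo z0 (max (c+1) (z0+1)), chi0 b c τ z = 0 := by
  set R := max (c+1) (z0+1) with hR
  have hz0R : z0 ≤ R := by
    have := le_max_right (c+1) (z0+1); linarith
  have hR0 : 0 ≤ R := le_trans (le_of_lt hz0) hz0R
  have hRc : c ≤ R := by have := le_max_left (c+1) (z0+1); linarith
  have hcont : ContinuousOn (chi0 b c τ) (Set.Icc z0 R) :=
    (chi0_contOn hb hc hτ).mono (fun x hx => le_trans (le_of_lt hz0) hx.1)
  have hpos : 0 < chi0 b c τ R := chi0_pos_of_ge hb hc hτ hR0 hRc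
  have := intermediate_value_Ioo hz0R hcont
  exact this ⟨hneg, hpos⟩

/-- Any zero with z > 0 satisfies z < c. -/
lemma zero_lt_c (hb : b ∈ Set.Ioo (0:ℝ) 1) (hc : 0 < c) (hτ : 0 ≤ τ)
    {z : ℝ} (hz : 0 < z) (h0 : chi0 b c τ z = 0) : z < c := by
  by_contra h
  push_neg at h
  exact absurd h0 (ne_of_gt (chi0_pos_of_ge hb hc hτ (le_of_lt hz) h))

end cont

section convex
variable {b c τ : ℝ}

lemma one_div_one_sub_convex {u v a a' : ℝ} (hu : u < 1) (hv : v < 1)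
    (ha : 0 ≤ a) (ha' : 0 ≤ a') (hab : a + a' = 1) :
    1 / (1 - (a*u + a'*v)) ≤ a * (1/(1-u)) + a' * (1/(1-v)) := by
  have hp : 0 < 1 - u := by linarith
  have hq : 0 < 1 - v := by linarith
  have key : a*u + a'*v < 1 := by
    rcases eq_or_lt_of_le ha with h0 | h0
    · have h1 : a' = 1 := by linarith
      rw [← h0, h1]; linarith
    · nlinarith [mul_lt_mul_of_pos_left hu h0, mul_le_mul_of_nonneg_left hv.le ha']
  have hd : 0 < 1 - (a*u + a'*v) := by linarith
  rw [div_le_iff₀ hd]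
  have e1 : a*(1/(1-u)) + a'*(1/(1-v)) = (a*(1-v) + a'*(1-u))/((1-u)*(1-v)) := by
    field_simp
  rw [e1, div_mul_eq_mul_div, le_div_iff₀ (by positivity)]
  have e2 : 1 - (a*u + a'*v) = a*(1-u) + a'*(1-v) := by linarith
  rw [e2]
  have hab2 : (a+a')^2 = 1 := by rw [hab]; ring
  have expand : (a*(1-v) + a'*(1-u)) * (a*(1-u) + a'*(1-v))
      = (1*((1-u)*(1-v)))*((a+a')^2) + a*a'*(((1-u)-(1-v))^2) - ((1-u)*(1-v))*((a+a')^2)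
        + ((1-u)*(1-v))*((a+a')^2) - a*a'*(((1-u)-(1-v))^2)
        + (a*a'*(((1-u)-(1-v))^2)) := by ring
  nlinarith [mul_nonneg (mul_nonneg ha ha') (sq_nonneg ((1-u) - (1-v))), hab2, mul_pos hp hq]

lemma chi0_strictConvexOn (hb : b ∈ Set.Ioo (0:ℝ) 1) (hc : 0 < c) (hτ : 0 ≤ τ) :
    StrictConvexOn ℝ (Set.Ici 0) (chi0 b c τ) := by
  have h2 : StrictConvexOn ℝ (Set.Ici (0:ℝ)) fun z : ℝ => z^2 := strictConvexOn_pow le_rfl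
  have hl : ConvexOn ℝ (Set.Ici (0:ℝ)) fun z : ℝ => -(c*z) :=
    ⟨convex_Ici 0, fun x _ y _ a a' _ _ _ => le_of_eq (by simp [smul_eq_mul]; ring)⟩
  have hq : StrictConvexOn ℝ (Set.Ici (0:ℝ)) fun z : ℝ => z^2 - c*z := by
    have := h2.add_convexOn hl
    simpa [sub_eq_add_neg, Pi.add_def] using this
  have hf : ConvexOn ℝ (Set.Ici (0:ℝ)) fun z : ℝ => 1/(1 - b*Real.exp (-(z*c*τ))) := by
    refine ⟨convex_Ici 0, fun x hx y hy a a' ha ha' hab => ?_⟩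
    simp only [smul_eq_mul]
    have hx' : (0:ℝ) ≤ x := hx
    have hy' : (0:ℝ) ≤ y := hy
    set ex := Real.exp (-(x*c*τ)) with hex
    set ey := Real.exp (-(y*c*τ)) with hey
    have hxb : b * ex ≤ b := by
      have : ex ≤ 1 := Real.exp_le_one_iff.mpr (by simp only [neg_nonpos]; positivity)
      nlinarith [hb.1]
    have hyb : b * ey ≤ b := by
      have : ey ≤ 1 := Real.exp_le_one_iff.mpr (by simp only [neg_nonpos]; positivity)
      nlinarith [hb.1]
    have hxp : 0 < b * ex := mul_pos hb.1 (Real.exp_pos _)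
    have hyp : 0 < b * ey := mul_pos hb.1 (Real.exp_pos _)
    -- Step A : convexity of the exponential part
    have hexp := convexOn_exp.2 (Set.mem_univ (-(x*c*τ))) (Set.mem_univ (-(y*c*τ))) ha ha' hab
    simp only [smul_eq_mul] at hexp
    have harg : a * -(x*c*τ) + a' * -(y*c*τ) = -((a*x + a'*y)*c*τ) := by ring
    rw [harg] at hexp
    have hA : b * Real.exp (-((a*x + a'*y)*c*τ)) ≤ a * (b*ex) + a' * (b*ey) := by
      nlinarith [hb.1]
    -- Step C : monotonicity
    have hcomb : a * (b*ex) + a' * (b*ey) ≤ b := by nlinarith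
    have hdpos : 0 < 1 - (a * (b*ex) + a' * (b*ey)) := by linarith [hb.2]
    have hC : 1 / (1 - b*Real.exp (-((a*x + a'*y)*c*τ)))
        ≤ 1 / (1 - (a * (b*ex) + a' * (b*ey))) :=
      one_div_le_one_div_of_le hdpos (by linarith)
    -- Step D : convexity of y ↦ 1/(1-y)
    have hD := one_div_one_sub_convex (u := b*ex) (v := b*ey)
      (by linarith [hb.2]) (by linarith [hb.2]) ha ha' hab
    calc 1/(1 - b*Real.exp (-((a*x + a'*y)*c*τ)))
        ≤ 1 / (1 - (a * (b*ex) + a' * (b*ey))) := hC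
      _ ≤ a * (1/(1 - b*ex)) + a' * (1/(1 - b*ey)) := hD
  have := hq.add_convexOn hf
  have heq : (fun z : ℝ => (z^2 - c*z) + 1/(1 - b*Real.exp (-(z*c*τ)))) = chi0 b c τ := by
    funext z; simp [chi0]
  exact heq ▸ this

/-- Strict convexity: between two zeros the function is negative. -/
lemma chi0_neg_between (hb : b ∈ Set.Ioo (0:ℝ) 1) (hc : 0 < c) (hτ : 0 ≤ τ)
    {z1 z2 t : ℝ} (hz1 : 0 ≤ z1) (h12 : z1 < t) (h2t : t < z2)
    (h1 : chi0 b c τ z1 = 0) (h2 : chi0 b c τ z2 = 0) : chi0 b c τ t < 0 := by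
  have hsc := chi0_strictConvexOn hb hc hτ
  have hz2 : (0:ℝ) ≤ z2 := by linarith
  set a := (z2 - t)/(z2 - z1) with hadef
  set a' := (t - z1)/(z2 - z1) with ha'def
  have hden : 0 < z2 - z1 := by linarith
  have ha : 0 < a := div_pos (by linarith) hden
  have ha' : 0 < a' := div_pos (by linarith) hden
  have hab : a + a' = 1 := by
    simp only [hadef, ha'def]
    field_simp
    ring
  have hco : a • z1 + a' • z2 = t := by
    simp only [hadef, ha'def, smul_eq_mul]
    field_simp
    ring
  have := hsc.2 hz1 hz2 (by linarith : z1 ≠ z2) ha ha' hab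
  rw [hco, h1, h2] at this
  simpa using this

end convex

/-- The set of wave speeds admitting a positive zero. -/
def Scrit (b τ : ℝ) : Set ℝ := {c | 0 < c ∧ ∃ z > 0, chi0 b c τ z = 0}

/-- The critical speed. -/
noncomputable def cstarF (b τ : ℝ) : ℝ := sInf (Scrit b τ)

section scrit
variable {b τ : ℝ}

lemma Scrit_subset (hb : b ∈ Set.Ioo (0:ℝ) 1) (hτ : 0 ≤ τ) : Scrit b τ ⊆ Set.Ioi 2 := by
  rintro c ⟨hc, z, hz, h0⟩
  by_contra h
  simp only [Set.mem_Ioi, not_lt] at h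
  exact absurd h0 (ne_of_gt (chi0_pos_of_c_le_two hb hc h hτ (le_of_lt hz)))

lemma Scrit_bddBelow (hb : b ∈ Set.Ioo (0:ℝ) 1) (hτ : 0 ≤ τ) : BddBelow (Scrit b τ) :=
  ⟨2, fun c hc => le_of_lt (Scrit_subset hb hτ hc)⟩

lemma Scrit_nonempty (hb : b ∈ Set.Ioo (0:ℝ) 1) (hτ : 0 ≤ τ) : (Scrit b τ).Nonempty := by
  set c0 : ℝ := 2 + 1/(1-b) with hc0
  have hb1 : (0:ℝ) < 1 - b := by linarith [hb.2]
  have hc0p : 0 < c0 := by positivity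
  have hneg : chi0 b c0 τ 1 < 0 := by
    have h := frac_le (b := b) (z := 1) (c := c0) (τ := τ) hb (by positivity)
    unfold chi0
    rw [hc0] at *
    nlinarith
  obtain ⟨z, hz, h0⟩ := exists_chi0_zero_lt hb hc0p hτ one_pos hneg
  exact ⟨c0, hc0p, z, hz.1, h0⟩

lemma Scrit_upward (hb : b ∈ Set.Ioo (0:ℝ) 1) (hτ : 0 ≤ τ) {c c' : ℝ}
    (hc : c ∈ Scrit b τ) (hcc : c < c') : c' ∈ Scrit b τ := by
  obtain ⟨hcp, z, hz, h0⟩ := hc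
  have hc'p : 0 < c' := lt_trans hcp hcc
  have hneg : chi0 b c' τ z < 0 := h0 ▸ chi0_strict_anti_c hb hcp hcc hτ hz
  obtain ⟨w, hw, hw0⟩ := exists_chi0_zero_lt hb hc'p hτ hz hneg
  exact ⟨hc'p, w, hw.1, hw0⟩

lemma cstarF_ge_two (hb : b ∈ Set.Ioo (0:ℝ) 1) (hτ : 0 ≤ τ) : 2 ≤ cstarF b τ :=
  le_csInf (Scrit_nonempty hb hτ) (fun c hc => le_of_lt (Scrit_subset hb hτ hc))

lemma cstarF_pos (hb : b ∈ Set.Ioo (0:ℝ) 1) (hτ : 0 ≤ τ) : 0 < cstarF b τ :=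
  lt_of_lt_of_le (by norm_num) (cstarF_ge_two hb hτ)

/-- The key fact: the infimum is attained. -/
lemma cstarF_mem (hb : b ∈ Set.Ioo (0:ℝ) 1) (hτ : 0 ≤ τ) : cstarF b τ ∈ Scrit b τ := by
  by_contra h
  set c1 := cstarF b τ with hc1
  have hc1two : 2 ≤ c1 := cstarF_ge_two hb hτ
  have hc1p : 0 < c1 := by linarith
  have hb1 : (0:ℝ) < 1 - b := by linarith [hb.2]
  -- χ₀(c1, ·) > 0 on [0, ∞)
  have hpos : ∀ z, 0 ≤ z → 0 < chi0 b c1 τ z := by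
    intro z hz
    rcases eq_or_lt_of_le hz with hz0 | hz0
    · exact hz0 ▸ chi0_zero_pos hb hc1p hτ
    rcases lt_trichotomy (chi0 b c1 τ z) 0 with hneg | heq | hposs
    · obtain ⟨w, hw, hw0⟩ := exists_chi0_zero_lt hb hc1p hτ hz0 hneg
      exact absurd ⟨hc1p, w, hw.1, hw0⟩ h
    · exact absurd ⟨hc1p, z, hz0, heq⟩ h
    · exact hposs
  -- minimum on the compact interval [0, c1+1]
  have hK : IsCompact (Set.Icc (0:ℝ) (c1+1)) := isCompact_Icc
  have hKne : (Set.Icc (0:ℝ) (c1+1)).Nonempty := ⟨0, by constructor <;> norm_num <;> linarith⟩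
  have hcont : ContinuousOn (chi0 b c1 τ) (Set.Icc (0:ℝ) (c1+1)) :=
    (chi0_contOn hb hc1p hτ).mono Set.Icc_subset_Ici_self
  obtain ⟨zm, hzm, hmin⟩ := hK.exists_isMinOn hKne hcont
  set m := chi0 b c1 τ zm with hm
  have hmpos : 0 < m := hpos zm hzm.1
  set L : ℝ := 1 + b*τ/(1-b)^2 with hL
  have hLnn : 0 ≤ b*τ/(1-b)^2 := div_nonneg (mul_nonneg hb.1.le hτ) (sq_nonneg _)
  have hLpos : 0 < L := by rw [hL]; linarith
  have h2L : 0 < 2*L*(c1+1) := by nlinarith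
  set δ : ℝ := min 1 (m/(2*L*(c1+1))) with hδ
  have hδpos : 0 < δ := lt_min one_pos (div_pos hmpos h2L)
  clear_value c1 m L δ
  -- no element of S in (c1, c1+δ)
  have hnoS : ∀ c, c1 < c → c < c1 + δ → c ∉ Scrit b τ := by
    rintro c hlt hlt' ⟨hcp, z0, hz0, h0⟩
    have hz0c : z0 < c := zero_lt_c hb hcp hτ hz0 h0
    have hz0K : z0 ≤ c1 + 1 := by
      have : δ ≤ 1 := by rw [hδ]; exact min_le_left _ _
      linarith
    have hlip := chi0_lip_c hb hc1p (le_of_lt hz0) hτ (le_of_lt hlt)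
    rw [h0, ← hL] at hlip
    have h1 : chi0 b c1 τ z0 ≥ m := by
      have := hmin ⟨le_of_lt hz0, hz0K⟩
      rw [hm]; exact this
    have h2 : z0 * (c - c1) * L ≤ (c1+1) * δ * L := by
      apply mul_le_mul_of_nonneg_right _ (le_of_lt hLpos)
      apply mul_le_mul hz0K (by linarith) (by linarith) (by linarith)
    have h3 : (c1+1) * δ * L ≤ m / 2 := by
      have hδ2 : δ ≤ m/(2*L*(c1+1)) := by rw [hδ]; exact min_le_right _ _
      have h4 : (c1+1) * δ * L ≤ (c1+1) * (m/(2*L*(c1+1))) * L :=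
        mul_le_mul_of_nonneg_right (mul_le_mul_of_nonneg_left hδ2 (by linarith)) (le_of_lt hLpos)
      have h5 : (c1+1) * (m/(2*L*(c1+1))) * L = m / 2 := by field_simp
      linarith
    have hA : m ≤ z0 * (c - c1) * L := by linarith
    have hB : m ≤ (c1+1) * δ * L := le_trans hA h2
    linarith
  -- contradiction with sInf
  have hlb : c1 + δ ≤ c1 := by
    have h' : ∀ s ∈ Scrit b τ, c1 + δ ≤ s := by
      intro s hs
      have hs1 : c1 ≤ s := by rw [hc1, cstarF]; exact csInf_le (Scrit_bddBelow hb hτ) hs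
      rcases eq_or_lt_of_le hs1 with hseq | hslt
      · exact absurd (hseq ▸ hs) h
      by_contra hcon
      push_neg at hcon
      exact hnoS s hslt hcon hs
    calc c1 + δ ≤ sInf (Scrit b τ) := le_csInf (Scrit_nonempty hb hτ) h'
      _ = c1 := by rw [hc1, cstarF]
  linarith

/-- χ₀ at the critical speed is nonnegative on [0, ∞). -/
lemma chi0_cstarF_nonneg (hb : b ∈ Set.Ioo (0:ℝ) 1) (hτ : 0 ≤ τ) {z : ℝ} (hz : 0 ≤ z) :
    0 ≤ chi0 b (cstarF b τ) τ z := by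
  by_contra hcon
  push_neg at hcon
  set c1 := cstarF b τ with hc1
  have hc1two : 2 ≤ c1 := cstarF_ge_two hb hτ
  have hc1p : 0 < c1 := by linarith
  have hz0 : 0 < z := by
    rcases eq_or_lt_of_le hz with h0 | h0
    · exfalso; rw [← h0] at hcon; linarith [chi0_zero_pos hb hc1p hτ]
    · exact h0
  have hb1 : (0:ℝ) < 1 - b := by linarith [hb.2]
  set η : ℝ := -chi0 b c1 τ z with hη
  have hηpos : 0 < η := by simp [hη]; linarith
  set L : ℝ := 1 + b*τ/(1-b)^2 with hL
  have hLnn : 0 ≤ b*τ/(1-b)^2 := div_nonneg (mul_nonneg hb.1.le hτ) (sq_nonneg _)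
  have hLpos : 0 < L := by rw [hL]; linarith
  have h2L : 0 < 2*z*L := by nlinarith
  set δ : ℝ := min 1 (η/(2*z*L)) with hδ
  have hδpos : 0 < δ := lt_min one_pos (div_pos hηpos h2L)
  set c := c1 - δ with hc
  clear_value c1 η L δ c
  have hcp : 0 < c := by
    have : δ ≤ 1 := by rw [hδ]; exact min_le_left _ _
    rw [hc]; linarith
  have hlip := chi0_lip_c hb hcp (le_of_lt hz0) hτ (show c ≤ c1 by rw [hc]; linarith)
  rw [← hL] at hlip
  have hc1c : c1 - c = δ := by rw [hc]; ring
  have hηeq : chi0 b c1 τ z = -η := by rw [hη]; ring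
  have hneg : chi0 b c τ z < 0 := by
    rw [hc1c, hηeq] at hlip
    have h3 : z * δ * L ≤ η / 2 := by
      have hδ2 : δ ≤ η/(2*z*L) := by rw [hδ]; exact min_le_right _ _
      have h4 : z * δ * L ≤ z * (η/(2*z*L)) * L :=
        mul_le_mul_of_nonneg_right (mul_le_mul_of_nonneg_left hδ2 hz0.le) (le_of_lt hLpos)
      have h5 : z * (η/(2*z*L)) * L = η / 2 := by field_simp
      linarith
    linarith
  obtain ⟨w, hw, hw0⟩ := exists_chi0_zero_lt hb hcp hτ hz0 hneg
  have hfin : c1 ≤ c := by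
    rw [hc1, cstarF]; exact csInf_le (Scrit_bddBelow hb hτ) ⟨hcp, w, hw.1, hw0⟩
  rw [hc] at hfin
  linarith

end scrit

section conclusions
variable {b τ c : ℝ}

lemma chi0_zero_iff (hb : b ∈ Set.Ioo (0:ℝ) 1) (hτ : 0 ≤ τ) (hc : 0 < c) :
    (∃ z > (0:ℝ), chi0 b c τ z = 0) ↔ cstarF b τ ≤ c := by
  constructor
  · rintro ⟨z, hz, h0⟩
    exact csInf_le (Scrit_bddBelow hb hτ) ⟨hc, z, hz, h0⟩
  · intro hle
    rcases eq_or_lt_of_le hle with heq | hlt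
    · obtain ⟨_, z, hz, h0⟩ := cstarF_mem hb hτ
      exact ⟨z, hz, heq ▸ h0⟩
    · obtain ⟨_, z, hz, h0⟩ := Scrit_upward hb hτ (cstarF_mem hb hτ) hlt
      exact ⟨z, hz, h0⟩

lemma chi0_two_zeros (hb : b ∈ Set.Ioo (0:ℝ) 1) (hτ : 0 ≤ τ) (hgt : cstarF b τ < c) :
    ∃ l₂ l₁ : ℝ, 0 < l₂ ∧ l₂ < l₁ ∧ chi0 b c τ l₂ = 0 ∧ chi0 b c τ l₁ = 0 ∧
      ∀ z > (0 : ℝ), chi0 b c τ z = 0 → z = l₂ ∨ z = l₁ := by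
  have hc1p := cstarF_pos hb hτ
  have hcp : 0 < c := lt_trans hc1p hgt
  obtain ⟨_, z0, hz0, h00⟩ := cstarF_mem hb hτ
  have hneg : chi0 b c τ z0 < 0 := h00 ▸ chi0_strict_anti_c hb hc1p hgt hτ hz0
  obtain ⟨l₂, hl₂, h₂0⟩ := exists_chi0_zero_lt hb hcp hτ hz0 hneg
  obtain ⟨l₁, hl₁, h₁0⟩ := exists_chi0_zero_gt hb hcp hτ hz0 hneg
  refine ⟨l₂, l₁, hl₂.1, lt_trans hl₂.2 hl₁.1, h₂0, h₁0, ?_⟩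
  intro z hz h0
  rcases lt_trichotomy z l₂ with h | h | h
  · exfalso
    have : chi0 b c τ l₂ < 0 :=
      chi0_neg_between hb hcp hτ (le_of_lt hz) h (lt_trans hl₂.2 hl₁.1) h0 h₁0
    linarith [h₂0 ▸ this]
  · exact Or.inl h
  rcases lt_trichotomy z l₁ with h' | h' | h'
  · exfalso
    have : chi0 b c τ z < 0 :=
      chi0_neg_between hb hcp hτ (le_of_lt hl₂.1) h h' h₂0 h₁0
    linarith [h0 ▸ this]
  · exact Or.inr h'
  · exfalso
    have : chi0 b c τ l₁ < 0 :=
      chi0_neg_between hb hcp hτ (le_of_lt hl₂.1) (lt_trans hl₂.2 hl₁.1) h' h₂0 h0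
    linarith [h₁0 ▸ this]

lemma chi0_double_zero (hb : b ∈ Set.Ioo (0:ℝ) 1) (hτ : 0 ≤ τ) :
    ∃ z > (0:ℝ), chi0 b (cstarF b τ) τ z = 0 ∧ deriv (chi0 b (cstarF b τ) τ) z = 0 ∧
      ∀ w > (0:ℝ), chi0 b (cstarF b τ) τ w = 0 → w = z := by
  have hc1p := cstarF_pos hb hτ
  obtain ⟨_, z0, hz0, h00⟩ := cstarF_mem hb hτ
  refine ⟨z0, hz0, h00, ?_, ?_⟩
  · -- local minimum ⇒ zero derivative
    have hmin : IsLocalMin (chi0 b (cstarF b τ) τ) z0 := by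
      apply Filter.eventually_of_mem (isOpen_Ioi.mem_nhds hz0)
      intro w hw
      rw [h00]
      exact chi0_cstarF_nonneg hb hτ (le_of_lt hw)
    exact hmin.deriv_eq_zero
  · intro w hw hw0
    by_contra hne
    rcases lt_or_gt_of_ne hne with h | h
    · have : chi0 b (cstarF b τ) τ ((w + z0)/2) < 0 :=
        chi0_neg_between hb hc1p hτ (le_of_lt hw) (by linarith) (by linarith) hw0 h00
      linarith [chi0_cstarF_nonneg hb hτ (show (0:ℝ) ≤ (w + z0)/2 by linarith)]
    · have : chi0 b (cstarF b τ) τ ((z0 + w)/2) < 0 :=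
        chi0_neg_between hb hc1p hτ (le_of_lt hz0) (by linarith) (by linarith) h00 hw0
      linarith [chi0_cstarF_nonneg hb hτ (show (0:ℝ) ≤ (z0 + w)/2 by linarith)]

end conclusions

section mono
variable {b τ c : ℝ}

lemma cstarF_gt_two (hb : b ∈ Set.Ioo (0:ℝ) 1) (hτ : 0 ≤ τ) : 2 < cstarF b τ :=
  Scrit_subset hb hτ (cstarF_mem hb hτ)

lemma cstarF_lt_of_neg (hb : b ∈ Set.Ioo (0:ℝ) 1) (hτ : 0 ≤ τ) {z : ℝ} (hc : 0 < c)
    (hz : 0 < z) (hneg : chi0 b c τ z < 0) : cstarF b τ < c := by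
  obtain ⟨w, hw, hw0⟩ := exists_chi0_zero_lt hb hc hτ hz hneg
  have hle : cstarF b τ ≤ c := csInf_le (Scrit_bddBelow hb hτ) ⟨hc, w, hw.1, hw0⟩
  rcases eq_or_lt_of_le hle with heq | hlt
  · exact absurd hneg (not_lt.mpr (heq ▸ chi0_cstarF_nonneg hb hτ (le_of_lt hz)))
  · exact hlt

lemma chi0_pos_of_lt_cstarF (hb : b ∈ Set.Ioo (0:ℝ) 1) (hτ : 0 ≤ τ) (hc : 0 < c)
    (hlt : c < cstarF b τ) {z : ℝ} (hz : 0 ≤ z) : 0 < chi0 b c τ z := by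
  rcases eq_or_lt_of_le hz with h0 | h0
  · exact h0 ▸ chi0_zero_pos hb hc hτ
  rcases lt_trichotomy (chi0 b c τ z) 0 with hneg | heq | hpos
  · exact absurd hlt (not_lt.mpr (le_of_lt (cstarF_lt_of_neg hb hτ hc h0 hneg)))
  · have : cstarF b τ ≤ c := csInf_le (Scrit_bddBelow hb hτ) ⟨hc, z, h0, heq⟩
    linarith
  · exact hpos

lemma cstarF_strictAntiOn (hb : b ∈ Set.Ioo (0:ℝ) 1) :
    StrictAntiOn (cstarF b) (Set.Ici 0) := by
  intro τ1 hτ1 τ2 hτ2 h12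
  have hτ1' : (0:ℝ) ≤ τ1 := hτ1
  have hτ2' : (0:ℝ) ≤ τ2 := hτ2
  obtain ⟨hc1p, z0, hz0, h00⟩ := cstarF_mem hb hτ1'
  have hneg : chi0 b (cstarF b τ1) τ2 z0 < 0 :=
    h00 ▸ chi0_strict_anti_tau hb hc1p hτ1' h12 hz0
  exact cstarF_lt_of_neg hb hτ2' hc1p hz0 hneg

lemma cstarF_antitoneOn (hb : b ∈ Set.Ioo (0:ℝ) 1) {τ1 τ2 : ℝ} (hτ1 : 0 ≤ τ1)
    (h12 : τ1 ≤ τ2) : cstarF b τ2 ≤ cstarF b τ1 := by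
  rcases eq_or_lt_of_le h12 with heq | hlt
  · rw [heq]
  · exact le_of_lt (cstarF_strictAntiOn hb hτ1 (le_trans hτ1 h12) hlt)

/-- Two-sided Lipschitz-type upper bound in τ. -/
lemma chi0_le_lip (hb : b ∈ Set.Ioo (0:ℝ) 1) (hc : 0 < c) {z : ℝ} (hz : 0 ≤ z)
    {τ0 : ℝ} (hτ : 0 ≤ τ) (hτ0 : 0 ≤ τ0) :
    chi0 b c τ z ≤ chi0 b c τ0 z + b * (z * c) * |τ - τ0| / (1 - b)^2 := by
  have hb1 : (0:ℝ) < 1 - b := by linarith [hb.2]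
  have habs : 0 ≤ b * (z * c) * |τ - τ0| / (1 - b)^2 :=
    div_nonneg (mul_nonneg (mul_nonneg hb.1.le (mul_nonneg hz hc.le)) (abs_nonneg _))
      (sq_nonneg _)
  rcases le_total τ τ0 with h | h
  · have := chi0_lip_tau hb hc hz hτ h
    have habs' : |τ - τ0| = τ0 - τ := by rw [abs_of_nonpos (by linarith)]; ring
    rw [habs']; linarith
  · rcases eq_or_lt_of_le h with heq | hlt
    · rw [heq]; simp
    · have := chi0_strict_anti_tau hb hc hτ0 hlt (z := z)
      rcases eq_or_lt_of_le hz with hz0 | hz0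
      · rw [← hz0]; simp [chi0]
      · linarith [this hz0]

end mono

section continuity
variable {b : ℝ}

lemma cstarF_cont_upper (hb : b ∈ Set.Ioo (0:ℝ) 1) {τ0 : ℝ} (hτ0 : 0 ≤ τ0) {ε : ℝ}
    (hε : 0 < ε) : ∃ δ > 0, ∀ τ, 0 ≤ τ → |τ - τ0| < δ → cstarF b τ < cstarF b τ0 + ε := by
  obtain ⟨hc1p, z0, hz0, h00⟩ := cstarF_mem hb hτ0
  set c1 := cstarF b τ0 with hc1
  have hb1 : (0:ℝ) < 1 - b := by linarith [hb.2]
  have hneg0 : chi0 b (c1 + ε) τ0 z0 < 0 :=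
    h00 ▸ chi0_strict_anti_c hb hc1p (by linarith) hτ0 hz0
  set η := -chi0 b (c1 + ε) τ0 z0 with hη
  have hηpos : 0 < η := by rw [hη]; linarith
  set B := b * (z0 * (c1 + ε)) / (1 - b)^2 with hB
  have hBnn : 0 ≤ B := by
    rw [hB]
    exact div_nonneg (mul_nonneg hb.1.le (mul_nonneg hz0.le (by linarith))) (sq_nonneg _)
  refine ⟨η / (B + 1), by positivity, fun τ hτ hdist => ?_⟩
  have hlip := chi0_le_lip hb (show 0 < c1 + ε by linarith) hz0.le hτ hτ0 (τ0 := τ0)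
  have hzb : b * (z0 * (c1 + ε)) * |τ - τ0| / (1 - b)^2 = B * |τ - τ0| := by
    rw [hB]; ring
  rw [hzb] at hlip
  have hBd : B * |τ - τ0| ≤ B * (η / (B + 1)) :=
    mul_le_mul_of_nonneg_left hdist.le hBnn
  have hBd2 : B * (η / (B + 1)) < η := by
    rw [mul_div_assoc'] at *
    rw [div_lt_iff₀ (by linarith)]
    nlinarith
  have hneg : chi0 b (c1 + ε) τ z0 < 0 := by
    have : chi0 b (c1 + ε) τ0 z0 = -η := by rw [hη]; ring
    nlinarith [hlip]
  exact cstarF_lt_of_neg hb hτ (by linarith) hz0 hneg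

lemma cstarF_cont_lower (hb : b ∈ Set.Ioo (0:ℝ) 1) {τ0 : ℝ} (hτ0 : 0 ≤ τ0) {ε : ℝ}
    (hε : 0 < ε) : ∃ δ > 0, ∀ τ, τ0 ≤ τ → τ - τ0 < δ → cstarF b τ0 - ε < cstarF b τ := by
  set c1 := cstarF b τ0 with hc1
  have hc1two : 2 < c1 := cstarF_gt_two hb hτ0
  have hb1 : (0:ℝ) < 1 - b := by linarith [hb.2]
  set ε' := min (ε/2) ((c1 - 2)/2) with hε'
  have hε'pos : 0 < ε' := lt_min (by linarith) (by linarith)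
  have hε'le : ε' ≤ ε/2 := min_le_left _ _
  have hε'lt : ε' ≤ (c1 - 2)/2 := min_le_right _ _
  set c2 := c1 - ε' with hc2
  have hc2two : 2 < c2 := by rw [hc2]; linarith
  have hc2pos : 0 < c2 := by linarith
  have hc2lt : c2 < c1 := by rw [hc2]; linarith
  -- minimum of chi0 at (c2, τ0) over [0, c1+1]
  have hcont : ContinuousOn (chi0 b c2 τ0) (Set.Icc 0 (c1+1)) :=
    (chi0_contOn hb hc2pos hτ0).mono Set.Icc_subset_Ici_self
  obtain ⟨zm, hzm, hmin⟩ := isCompact_Icc.exists_isMinOn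
    ⟨0, by constructor <;> norm_num <;> linarith⟩ hcont
  set m := chi0 b c2 τ0 zm with hm
  have hmpos : 0 < m := chi0_pos_of_lt_cstarF hb hτ0 hc2pos hc2lt hzm.1
  set B := b * ((c1 + 1) * c2) / (1 - b)^2 with hB
  have hBnn : 0 ≤ B := by
    rw [hB]
    exact div_nonneg (mul_nonneg hb.1.le (mul_nonneg (by linarith) hc2pos.le)) (sq_nonneg _)
  refine ⟨m / (B + 1), by positivity, fun τ hτ hdist => ?_⟩
  have hτ' : 0 ≤ τ := le_trans hτ0 hτ
  -- c2 is a lower bound for Scrit b τ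
  have hlb : ∀ s ∈ Scrit b τ, c2 ≤ s := by
    intro s hs
    by_contra hcon
    push_neg at hcon
    obtain ⟨hsp, z, hz, h0⟩ := hs
    have hzs : z < s := zero_lt_c hb hsp hτ' hz h0
    have hzK : z ∈ Set.Icc (0:ℝ) (c1+1) := ⟨hz.le, by linarith⟩
    -- chi0 at (c2, τ, z) ≤ 0
    have hle0 : chi0 b c2 τ z ≤ 0 := h0 ▸ chi0_anti_c hb hsp hcon.le hτ' hz.le
    -- but also > 0 by lipschitz
    have hlip := chi0_lip_tau hb hc2pos hz.le hτ0 hτ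
    have hmz : m ≤ chi0 b c2 τ0 z := hmin hzK
    have hzb : b * (z * c2) * (τ - τ0) / (1-b)^2 ≤ B * (τ - τ0) := by
      rw [hB, div_mul_eq_mul_div]
      apply div_le_div_of_nonneg_right _ (by positivity)
      apply mul_le_mul_of_nonneg_right _ (by linarith)
      apply mul_le_mul_of_nonneg_left _ hb.1.le
      apply mul_le_mul_of_nonneg_right _ hc2pos.le
      linarith [hzK.2]
    have hBd : B * (τ - τ0) ≤ B * (m / (B + 1)) := mul_le_mul_of_nonneg_left hdist.le hBnn
    have hBd2 : B * (m / (B + 1)) < m := by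
      rw [mul_div_assoc']
      rw [div_lt_iff₀ (by linarith)]
      nlinarith
    linarith
  have : c2 ≤ cstarF b τ := le_csInf (Scrit_nonempty hb hτ') hlb
  rw [hc2] at this
  linarith

lemma cstarF_continuousOn (hb : b ∈ Set.Ioo (0:ℝ) 1) :
    ContinuousOn (cstarF b) (Set.Ici 0) := by
  intro τ0 hτ0
  have hτ0' : (0:ℝ) ≤ τ0 := hτ0
  rw [Metric.continuousWithinAt_iff]
  intro ε hε
  obtain ⟨δ1, hδ1, h1⟩ := cstarF_cont_upper hb hτ0' hε
  obtain ⟨δ2, hδ2, h2⟩ := cstarF_cont_lower hb hτ0' hε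
  refine ⟨min δ1 δ2, lt_min hδ1 hδ2, fun τ hτ hdist => ?_⟩
  have hτ' : (0:ℝ) ≤ τ := hτ
  rw [Real.dist_eq] at hdist ⊢
  have hd1 : |τ - τ0| < δ1 := lt_of_lt_of_le hdist (min_le_left _ _)
  have hd2 : |τ - τ0| < δ2 := lt_of_lt_of_le hdist (min_le_right _ _)
  have hupper : cstarF b τ < cstarF b τ0 + ε := h1 τ hτ' hd1
  have hlower : cstarF b τ0 - ε < cstarF b τ := by
    rcases le_total τ0 τ with h | h
    · exact h2 τ h (lt_of_le_of_lt (le_abs_self _) hd2)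
    · have := cstarF_antitoneOn hb hτ' h
      linarith
  rw [abs_lt]
  constructor <;> linarith

end continuity

section endpoints
variable {b : ℝ}

lemma chi0_tau_zero (b c z : ℝ) : chi0 b c 0 z = z^2 - c*z + 1/(1-b) := by
  simp [chi0]

lemma cstarF_zero (hb : b ∈ Set.Ioo (0:ℝ) 1) : cstarF b 0 = 2 * (1-b) ^ (-(1:ℝ)/2) := by
  have hb1 : (0:ℝ) < 1 - b := by linarith [hb.2]
  set K : ℝ := 1/(1-b) with hK
  have hKpos : 0 < K := by positivity
  set r := Real.sqrt K with hr
  have hrpos : 0 < r := Real.sqrt_pos.mpr hKpos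
  have hr2 : r^2 = K := Real.sq_sqrt hKpos.le
  -- 2r ∈ Scrit b 0
  have hmem : 2*r ∈ Scrit b 0 := by
    refine ⟨by linarith, r, hrpos, ?_⟩
    rw [chi0_tau_zero, ← hK]
    nlinarith
  -- lower bound
  have hlb : ∀ s ∈ Scrit b 0, 2*r ≤ s := by
    rintro s ⟨hsp, z, hz, h0⟩
    rw [chi0_tau_zero, ← hK] at h0
    nlinarith [sq_nonneg (z - r)]
  have : cstarF b 0 = 2*r :=
    le_antisymm (csInf_le (Scrit_bddBelow hb le_rfl) hmem)
      (le_csInf (Scrit_nonempty hb le_rfl) hlb)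
  rw [this, hr, hK]
  rw [show -(1:ℝ)/2 = -(1/2) by norm_num, Real.rpow_neg hb1.le, ← Real.sqrt_eq_rpow,
    one_div, Real.sqrt_inv]

lemma cstarF_tendsto (hb : b ∈ Set.Ioo (0:ℝ) 1) :
    Tendsto (cstarF b) atTop (nhds 2) := by
  have hb1 : (0:ℝ) < 1 - b := by linarith [hb.2]
  rw [tendsto_order]
  constructor
  · intro a ha
    filter_upwards [eventually_ge_atTop (0:ℝ)] with τ hτ
    exact lt_trans ha (cstarF_gt_two hb hτ)
  · intro a ha
    set c := (2 + a)/2 with hc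
    have hc2 : 2 < c := by rw [hc]; linarith
    have hca : c < a := by rw [hc]; linarith
    have hcp : 0 < c := by linarith
    set θ : ℝ := 1 - 4/c^2 with hθ
    have hθpos : 0 < θ := by
      rw [hθ]
      have : 4/c^2 < 1 := by rw [div_lt_one (by positivity)]; nlinarith
      linarith
    -- the exponential term eventually drops below θ
    have hk : Tendsto (fun τ : ℝ => (c/2*c) * τ) atTop atTop :=
      Tendsto.const_mul_atTop (by positivity) tendsto_id
    have hkn : Tendsto (fun τ : ℝ => -((c/2*c) * τ)) atTop atBot :=
      tendsto_neg_atTop_atBot.comp hk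
    have hexp : Tendsto (fun τ : ℝ => b * Real.exp (-(c/2 * c * τ))) atTop (nhds 0) := by
      have := (Real.tendsto_exp_atBot.comp hkn).const_mul b
      simpa using this
    have hev : ∀ᶠ τ in atTop, b * Real.exp (-(c/2 * c * τ)) < θ :=
      hexp.eventually_lt_const hθpos
    filter_upwards [hev, eventually_ge_atTop (0:ℝ)] with τ hτθ hτ0
    -- χ₀ at z = c/2 is negative
    have hcc : 0 ≤ (c/2) * c * τ := by positivity
    have hden : 0 < 1 - b * Real.exp (-((c/2) * c * τ)) := den_pos' hb hcc
    have hneg : chi0 b c τ (c/2) < 0 := by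
      unfold chi0
      have h1 : 1 - b * Real.exp (-(c/2 * c * τ)) > 4/c^2 := by
        rw [hθ] at hτθ; linarith
      have h2 : 1 / (1 - b * Real.exp (-(c/2 * c * τ))) < c^2/4 := by
        rw [div_lt_iff₀ hden]
        have h3 : c^2/4 * (4/c^2) = 1 := by field_simp
        nlinarith [mul_lt_mul_of_pos_left h1 (show (0:ℝ) < c^2/4 by positivity)]
      nlinarith
    exact lt_trans (cstarF_lt_of_neg hb hτ0 hcp (by linarith) hneg) hca

end endpoints

/-- For fixed `b ∈ (0,1)` there is a strictly decreasing continuous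
critical-speed function `c_* : [0,∞) → (2,∞)`, with `c_*(0) = 2(1−b)^{−1/2}` and
`c_*(+∞) = 2`, such that `χ₀` has a positive real zero iff `c ≥ c_*(τ)`; for `c > c_*(τ)`
there are exactly two positive zeros `λ₂ < λ₁`, and for `c = c_*(τ)` exactly one positive
zero, which is a double zero. -/
theorem critical_speed_cstar (b : ℝ) (hb : b ∈ Set.Ioo (0 : ℝ) 1) :
    ∃ cstar : ℝ → ℝ,
      ContinuousOn cstar (Set.Ici 0) ∧
      StrictAntiOn cstar (Set.Ici 0) ∧
      (∀ τ ∈ Set.Ici (0 : ℝ), 2 < cstar τ) ∧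
      cstar 0 = 2 * (1 - b) ^ (-(1 : ℝ) / 2) ∧
      Tendsto cstar atTop (nhds 2) ∧
      ∀ τ ∈ Set.Ici (0 : ℝ), ∀ c > (0 : ℝ),
        ((∃ z > (0 : ℝ), chi0 b c τ z = 0) ↔ cstar τ ≤ c) ∧
        (cstar τ < c →
          ∃ l₂ l₁ : ℝ, 0 < l₂ ∧ l₂ < l₁ ∧ chi0 b c τ l₂ = 0 ∧ chi0 b c τ l₁ = 0 ∧
            ∀ z > (0 : ℝ), chi0 b c τ z = 0 → z = l₂ ∨ z = l₁) ∧
        (c = cstar τ →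
          ∃ z > (0 : ℝ), chi0 b c τ z = 0 ∧ deriv (chi0 b c τ) z = 0 ∧
            ∀ w > (0 : ℝ), chi0 b c τ w = 0 → w = z) := by
  refine ⟨cstarF b, cstarF_continuousOn hb, cstarF_strictAntiOn hb,
    fun τ hτ => cstarF_gt_two hb hτ, cstarF_zero hb, cstarF_tendsto hb, ?_⟩
  intro τ hτ c hc
  refine ⟨chi0_zero_iff hb hτ hc, fun hgt => chi0_two_zeros hb hτ hgt, fun hceq => ?_⟩
  rw [hceq]
  exact chi0_double_zero hb hτ
end

section
/- Let b ∈ (0,1), c, τ > 0, and suppose χ₀ has positive real zeros (i.e., c ≥ c_*(τ)); let λ₂ denote the smallest positive real zero of χ₀. Then every complex zero z of χ₀ lying in the half-plane Re z > ln b/(cτ) that is not a positive real number satisfies Re z < λ₂. -/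
open Complex

/-- Characteristic function χ₀ as a complex function. -/
noncomputable def chi0C (b c τ : ℝ) (z : ℂ) : ℂ :=
  z ^ 2 - (c : ℂ) * z + 1 / (1 - (b : ℂ) * Complex.exp (-(z * (c : ℂ) * (τ : ℂ))))

/-!
Write `z = x + iy` with `y ≠ 0` and suppose `x ≥ λ₂`. Taking real and imaginary parts of
`c z - z² = 1 / (1 - b e^{-zcτ})`, and using `|1 - b e^{-zcτ}| ≥ 1 - b e^{-xcτ}` together with
`y sin (ycτ) ≤ cτ y²`, gives `χ₀(x) ≥ y² > 0` and `χ₀'(x) ≤ 0`. As `χ₀` is convex on the reals,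
`0 = χ₀(λ₂) ≥ χ₀(x) + χ₀'(x) (λ₂ - x) ≥ χ₀(x) > 0`, a contradiction.
-/

noncomputable def delayWeight (b c τ t : ℝ) : ℝ :=
  b * Real.exp (-(t * c * τ))

noncomputable def chi0Deriv (b c τ t : ℝ) : ℝ :=
  2 * t - c - c * τ * delayWeight b c τ t / (1 - delayWeight b c τ t) ^ 2

lemma mul_sin_mul_le (y a : ℝ) (ha : 0 ≤ a) : y * Real.sin (y * a) ≤ a * y ^ 2 :=
  calc y * Real.sin (y * a) ≤ |y| * |Real.sin (y * a)| := by
        rw [← abs_mul]; exact le_abs_self _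
    _ ≤ |y| * |y * a| := mul_le_mul_of_nonneg_left Real.abs_sin_le_abs (abs_nonneg y)
    _ = a * y ^ 2 := by rw [abs_mul, abs_of_nonneg ha, ← sq_abs y]; ring

lemma inv_one_sub_add_le {u v : ℝ} (hu : u < 1) (hv : v < 1) :
    (1 - u)⁻¹ + (v - u) / (1 - u) ^ 2 ≤ (1 - v)⁻¹ := by
  have hu' : 0 < 1 - u := by linarith
  have hv' : 0 < 1 - v := by linarith
  have hdiff : (1 - v)⁻¹ - ((1 - u)⁻¹ + (v - u) / (1 - u) ^ 2)
      = (v - u) ^ 2 / ((1 - u) ^ 2 * (1 - v)) := by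
    field_simp; ring
  have hnonneg : 0 ≤ (v - u) ^ 2 / ((1 - u) ^ 2 * (1 - v)) := by positivity
  linarith

section

variable {b c τ : ℝ}

lemma delayWeight_lt_one (hb : b < 1) (hk : 0 ≤ c * τ) {t : ℝ} (ht : 0 ≤ t) :
    delayWeight b c τ t < 1 := by
  have hexp : Real.exp (-(t * c * τ)) ≤ 1 :=
    Real.exp_le_one_iff.2 (by nlinarith [mul_assoc t c τ])
  unfold delayWeight
  nlinarith [Real.exp_pos (-(t * c * τ))]

lemma delayWeight_mul_le (hb : 0 ≤ b) (s t : ℝ) :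
    delayWeight b c τ t * (1 + c * τ * (t - s)) ≤ delayWeight b c τ s := by
  have hsplit :
      Real.exp (-(s * c * τ)) = Real.exp (-(t * c * τ)) * Real.exp (c * τ * (t - s)) := by
    rw [← Real.exp_add]; ring_nf
  unfold delayWeight
  rw [hsplit, ← mul_assoc]
  gcongr
  linarith [Real.add_one_le_exp (c * τ * (t - s))]

lemma chi0_eq (t : ℝ) : chi0 b c τ t = t ^ 2 - c * t + (1 - delayWeight b c τ t)⁻¹ := by
  rw [chi0, delayWeight, one_div]

lemma chi0_add_chi0Deriv_mul_le (hb : 0 ≤ b) {s t : ℝ}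
    (ht : delayWeight b c τ t < 1) (hs : delayWeight b c τ s < 1) :
    chi0 b c τ t + chi0Deriv b c τ t * (s - t) ≤ chi0 b c τ s := by
  set u := delayWeight b c τ t
  have hweight := delayWeight_mul_le (c := c) (τ := τ) hb s t
  have htangent := inv_one_sub_add_le ht hs
  have hslope :
      u * (c * τ * (t - s)) / (1 - u) ^ 2 ≤ (delayWeight b c τ s - u) / (1 - u) ^ 2 := by
    gcongr; linarith
  rw [chi0_eq, chi0_eq, chi0Deriv]
  have hlinear : c * τ * u / (1 - u) ^ 2 * (s - t) = -(u * (c * τ * (t - s)) / (1 - u) ^ 2) := by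
    ring
  nlinarith [sq_nonneg (s - t)]

variable {z : ℂ}

lemma norm_one_sub_mul_exp_ge (hb : 0 ≤ b) (z : ℂ) :
    1 - delayWeight b c τ z.re ≤ ‖1 - (b : ℂ) * Complex.exp (-(z * c * τ))‖ := by
  have h := norm_sub_norm_le (1 : ℂ) ((b : ℂ) * Complex.exp (-(z * c * τ)))
  have hnorm : ‖(b : ℂ) * Complex.exp (-(z * c * τ))‖ = delayWeight b c τ z.re := by
    simp [delayWeight, Complex.norm_exp, abs_of_nonneg hb]
  rwa [norm_one, hnorm] at h

lemma im_one_sub_mul_exp (z : ℂ) :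
    (1 - (b : ℂ) * Complex.exp (-(z * c * τ))).im =
      delayWeight b c τ z.re * Real.sin (z.im * c * τ) := by
  simp [delayWeight, Complex.exp_im]
  ring

lemma inv_eq_of_chi0C_eq_zero (h : chi0C b c τ z = 0) :
    (1 - (b : ℂ) * Complex.exp (-(z * c * τ)))⁻¹ = c * z - z ^ 2 := by
  rw [chi0C, one_div] at h
  linear_combination h

lemma sq_im_le_chi0_re (hb : 0 ≤ b) (hq : delayWeight b c τ z.re < 1)
    (h : chi0C b c τ z = 0) : z.im ^ 2 ≤ chi0 b c τ z.re := by
  set w := 1 - (b : ℂ) * Complex.exp (-(z * c * τ))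
  have hnorm : ‖w⁻¹‖ ≤ (1 - delayWeight b c τ z.re)⁻¹ := by
    rw [norm_inv]
    exact inv_anti₀ (by linarith) (norm_one_sub_mul_exp_ge hb z)
  have hre : (w⁻¹).re = c * z.re - z.re ^ 2 + z.im ^ 2 := by
    rw [inv_eq_of_chi0C_eq_zero h]; simp [pow_two]; ring
  rw [chi0_eq]
  linarith [Complex.re_le_norm w⁻¹]

lemma chi0Deriv_re_nonpos (hb : 0 ≤ b) (hk : 0 ≤ c * τ) (hq : delayWeight b c τ z.re < 1)
    (h : chi0C b c τ z = 0) (hy : z.im ≠ 0) : chi0Deriv b c τ z.re ≤ 0 := by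
  set w := 1 - (b : ℂ) * Complex.exp (-(z * c * τ))
  set u := delayWeight b c τ z.re
  have hu : 0 ≤ u := by unfold u delayWeight; positivity
  have hw : 1 - u ≤ ‖w‖ := norm_one_sub_mul_exp_ge hb z
  have him : z.im * (2 * z.re - c) = u * Real.sin (z.im * c * τ) / ‖w‖ ^ 2 := by
    have hrhs : ((c : ℂ) * z - z ^ 2).im = c * z.im - 2 * z.re * z.im := by
      simp [pow_two]; ring
    have hinv := congrArg Complex.im (inv_eq_of_chi0C_eq_zero h)
    rw [Complex.inv_im, ← Complex.sq_norm, im_one_sub_mul_exp, hrhs, neg_div] at hinv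
    linarith
  have hsin := mul_sin_mul_le z.im (c * τ) hk
  rw [← mul_assoc] at hsin
  have hscaled : z.im ^ 2 * (2 * z.re - c) ≤ z.im ^ 2 * (c * τ * u / (1 - u) ^ 2) :=
    calc z.im ^ 2 * (2 * z.re - c) = u * (z.im * Real.sin (z.im * c * τ)) / ‖w‖ ^ 2 := by
          rw [pow_two, mul_assoc, him]; ring
      _ ≤ u * (c * τ * z.im ^ 2) / (1 - u) ^ 2 := by gcongr
      _ = z.im ^ 2 * (c * τ * u / (1 - u) ^ 2) := by ring
  have hslope := le_of_mul_le_mul_left hscaled (by positivity)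
  rw [chi0Deriv]
  linarith

end

theorem complex_zeros_re_lt_general (b c τ l₂ : ℝ) (hb : b ∈ Set.Ioo (0 : ℝ) 1)
    (hc : 0 < c) (hτ : 0 < τ)
    (hl₂pos : 0 < l₂) (hl₂zero : chi0 b c τ l₂ = 0)
    (z : ℂ) (hzero : chi0C b c τ z = 0)
    (hnotpos : ¬ ∃ x : ℝ, 0 < x ∧ z = (x : ℂ)) :
    z.re < l₂ := by
  by_contra! hle
  have hk : 0 ≤ c * τ := by positivity
  have hx : 0 < z.re := hl₂pos.trans_le hle
  have hy : z.im ≠ 0 := fun hy => hnotpos ⟨z.re, hx, Complex.ext rfl (by simp [hy])⟩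
  have hq := delayWeight_lt_one hb.2 hk hx.le
  have hchi : 0 < chi0 b c τ z.re := (pow_two_pos_of_ne_zero hy).trans_le
    (sq_im_le_chi0_re hb.1.le hq hzero)
  have hderiv := chi0Deriv_re_nonpos hb.1.le hk hq hzero hy
  have htangent := chi0_add_chi0Deriv_mul_le hb.1.le hq (delayWeight_lt_one hb.2 hk hl₂pos.le)
  nlinarith

/-- If `χ₀` has positive real zeros with smallest positive real zero `λ₂`,
then every complex zero of `χ₀` in the half-plane `Re z > ln b/(cτ)` that is not a positive
real number satisfies `Re z < λ₂`. -/
theorem complex_zeros_re_lt (b c τ l₂ : ℝ) (hb : b ∈ Set.Ioo (0 : ℝ) 1)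
    (hc : 0 < c) (hτ : 0 < τ)
    (hl₂pos : 0 < l₂) (hl₂zero : chi0 b c τ l₂ = 0)
    (hl₂min : ∀ x : ℝ, 0 < x → chi0 b c τ x = 0 → l₂ ≤ x)
    (z : ℂ) (hre : Real.log b / (c * τ) < z.re) (hzero : chi0C b c τ z = 0)
    (hnotpos : ¬ ∃ x : ℝ, 0 < x ∧ z = (x : ℂ)) :
    z.re < l₂ :=
  complex_zeros_re_lt_general b c τ l₂ hb hc hτ hl₂pos hl₂zero z hzero hnotpos
end

section
/- For each σ ∈ (0,1), set τ = σ²·e^{−σ}, b = (1−σ)·e^{−σ}, and z₀ = −σ/τ. Then b ∈ (0,1), τ > 0, z₀ < 0, and z₀ is a double root of the equation −z = 1/(e^{zτ} − b), namely: −z₀ = 1/(e^{z₀·τ} − b) and 1 = τ·e^{z₀·τ}/(e^{z₀·τ} − b)². -/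
/-! The parametrisation is chosen so that `z₀ τ = -σ`. Then `e^{z₀τ} - b = σ e^{-σ}`, and both
equations reduce to the identity `τ = σ² e^{-σ}`. -/

open Real Set

lemma one_sub_mul_exp_neg_mem_Ioo {σ : ℝ} (hσ : σ ∈ Ioo (0 : ℝ) 1) :
    (1 - σ) * exp (-σ) ∈ Ioo (0 : ℝ) 1 := by
  obtain ⟨hσ₀, hσ₁⟩ := hσ
  have hexp_lt_one : exp (-σ) < 1 := exp_lt_one_iff.mpr (neg_lt_zero.mpr hσ₀)
  exact ⟨mul_pos (sub_pos.mpr hσ₁) (exp_pos _), by nlinarith [exp_pos (-σ)]⟩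

/-- For `σ ∈ (0,1)`, setting `τ = σ²e^{−σ}`, `b = (1−σ)e^{−σ}`,
`z₀ = −σ/τ`, one has `b ∈ (0,1)`, `τ > 0`, `z₀ < 0`, and `z₀` is a double root of
`−z = 1/(e^{zτ} − b)`:  `−z₀ = 1/(e^{z₀τ} − b)` and `1 = τ·e^{z₀τ}/(e^{z₀τ} − b)²`. -/
theorem parametric_double_root (σ : ℝ) (hσ : σ ∈ Set.Ioo (0 : ℝ) 1) :
    let τ : ℝ := σ ^ 2 * Real.exp (-σ)
    let b : ℝ := (1 - σ) * Real.exp (-σ)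
    let z₀ : ℝ := -σ / τ
    b ∈ Set.Ioo (0 : ℝ) 1 ∧ 0 < τ ∧ z₀ < 0 ∧
      -z₀ = 1 / (Real.exp (z₀ * τ) - b) ∧
      1 = τ * Real.exp (z₀ * τ) / (Real.exp (z₀ * τ) - b) ^ 2 := by
  intro τ b z₀
  have hσ₀ : 0 < σ := hσ.1
  have hτ : 0 < τ := by positivity
  have hz₀τ : z₀ * τ = -σ := div_mul_cancel₀ _ hτ.ne'
  have hgap : exp (z₀ * τ) - b = σ * exp (-σ) := by rw [hz₀τ]; ring
  refine ⟨one_sub_mul_exp_neg_mem_Ioo hσ, hτ, div_neg_of_neg_of_pos (neg_neg_of_pos hσ₀) hτ,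
    ?_, ?_⟩
  · rw [hgap]
    simp only [z₀, τ]
    field_simp
  · rw [hgap, hz₀τ]
    simp only [τ]
    field_simp
end

section
/- Let b ∈ (0,1). The curves c = c_*(τ) (defined for τ > 0) and c = c_#(τ) (defined for τ > τ(b)) intersect at exactly one point: there exists a unique τ₀ > τ(b) such that c_*(τ₀) = c_#(τ₀). -/
open Filter Set

/-- Characteristic function χ₁(z) = z² − c·z − e^{−z·c·τ}/(1 − b·e^{−z·c·τ}). -/
noncomputable def chi1 (b c τ z : ℝ) : ℝ :=
  z ^ 2 - c * z - Real.exp (-(z * c * τ)) / (1 - b * Real.exp (-(z * c * τ)))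

/-!
The substitution `t = z c τ` turns `χ₀(z)` into `t²/(cτ)² − t/τ + 1/(1 − b e^{−t})`, and
`t = −z c τ` turns `χ₁(z)` into `t²/(cτ)² + t/τ − e^t/(1 − b e^t)`. At the minimal speed `c_*(τ)`
the rescaled `χ₀` is nonnegative for `t > 0`, and at the maximal speed `c_#(τ)` the rescaled `χ₁`
is nonpositive wherever it is defined; comparing with the zeros at a larger delay shows that
`τ c_*(τ)` is strictly increasing and `τ c_#(τ)` strictly decreasing, so the curves meet at most
once. They do meet, by the intermediate value theorem: `χ₀(1/(1 − b)) ≤ 0` at speed `2/(1 − b)`,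
so `c_* ≤ 2/(1 − b)`; `c_#` exceeds this bound just after `τ(b)`, by continuity from `τ(b)` where
every speed admits a negative zero; and `c_# < 2 < c_*` once `τ ≥ −2 log b`.
-/

open Real Topology

section Rescaling

variable {b c τ : ℝ}

lemma chi0_div_mul (t : ℝ) (hc : c ≠ 0) (hτ : τ ≠ 0) :
    chi0 b c τ (t / (c * τ)) = t ^ 2 / (c * τ) ^ 2 - t / τ + 1 / (1 - b * exp (-t)) := by
  have ht : t / (c * τ) * c * τ = t := by field_simp
  rw [chi0, ht]
  field_simp

lemma chi1_neg_div_mul (t : ℝ) (hc : c ≠ 0) (hτ : τ ≠ 0) :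
    chi1 b c τ (-(t / (c * τ))) = t ^ 2 / (c * τ) ^ 2 + t / τ - exp t / (1 - b * exp t) := by
  have ht : -(-(t / (c * τ)) * c * τ) = t := by field_simp
  rw [chi1, ht]
  field_simp
  ring

end Rescaling

section Zeros

variable {b c τ : ℝ}

lemma one_sub_mul_exp_neg_pos (hb0 : 0 ≤ b) (hb1 : b < 1) {x : ℝ} (hx : 0 ≤ x) :
    0 < 1 - b * exp (-x) := by
  have : b * exp (-x) ≤ b := mul_le_of_le_one_right hb0 (exp_le_one_iff.mpr (neg_nonpos.mpr hx))
  linarith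

lemma continuousAt_chi0 {z : ℝ} (h : 1 - b * exp (-(z * c * τ)) ≠ 0) :
    ContinuousAt (chi0 b c τ) z := by
  unfold chi0
  fun_prop (disch := exact h)

lemma continuousAt_chi1 {z : ℝ} (h : 1 - b * exp (-(z * c * τ)) ≠ 0) :
    ContinuousAt (chi1 b c τ) z := by
  unfold chi1
  fun_prop (disch := exact h)

lemma exists_pos_chi0_eq_zero_of_nonpos (hb0 : 0 ≤ b) (hb1 : b < 1) (hc : 0 ≤ c) (hτ : 0 ≤ τ)
    {z₁ : ℝ} (hz₁ : 0 < z₁) (h : chi0 b c τ z₁ ≤ 0) : ∃ z > 0, chi0 b c τ z = 0 := by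
  have hcont : ContinuousOn (chi0 b c τ) (Icc z₁ (z₁ + c)) := by
    intro z hz
    have hden := one_sub_mul_exp_neg_pos hb0 hb1 (x := z * c * τ) (by
      have := hz₁.trans_le hz.1; positivity)
    exact (continuousAt_chi0 hden.ne').continuousWithinAt
  have hend : 0 < chi0 b c τ (z₁ + c) := by
    have := one_sub_mul_exp_neg_pos hb0 hb1 (x := (z₁ + c) * c * τ) (by positivity)
    have : 0 < 1 / (1 - b * exp (-((z₁ + c) * c * τ))) := by positivity
    unfold chi0
    nlinarith
  obtain ⟨z, hz, hz0⟩ := intermediate_value_Icc (by linarith) hcont ⟨h, hend.le⟩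
  exact ⟨z, hz₁.trans_le hz.1, hz0⟩

lemma exists_neg_chi1_eq_zero (hb0 : 0 ≤ b) (hb1 : b < 1) (hc : 0 < c) (hτ : 0 < τ)
    {t : ℝ} (ht : 0 < t) (hbt : b * exp t < 1)
    (h : 0 ≤ t ^ 2 / (c * τ) ^ 2 + t / τ - exp t / (1 - b * exp t)) :
    ∃ z < 0, chi1 b c τ z = 0 := by
  have hz₁ : -(t / (c * τ)) < 0 := neg_neg_of_pos (by positivity)
  have hcont : ContinuousOn (chi1 b c τ) (Icc (-(t / (c * τ))) 0) := by
    intro z hz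
    have hzt : -(z * c * τ) ≤ t := by
      have := mul_le_mul_of_nonneg_right hz.1 (by positivity : 0 ≤ c * τ)
      rw [neg_mul, div_mul_cancel₀ _ (by positivity)] at this
      linarith
    have hden : 1 - b * exp (-(z * c * τ)) ≠ 0 := by
      have := mul_le_mul_of_nonneg_left (exp_le_exp.mpr hzt) hb0
      linarith
    exact (continuousAt_chi1 hden).continuousWithinAt
  have hzero : chi1 b c τ 0 < 0 := by
    have : 0 < 1 / (1 - b) := one_div_pos.mpr (by linarith)
    simpa [chi1] using this
  obtain ⟨z, hz, hz0⟩ := intermediate_value_Icc' hz₁.le hcont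
    ⟨hzero.le, by rwa [chi1_neg_div_mul t hc.ne' hτ.ne']⟩
  exact ⟨z, lt_of_le_of_ne hz.2 (by rintro rfl; linarith), hz0⟩

lemma mul_exp_lt_one_of_chi1_eq_zero (hc : 0 ≤ c) {z : ℝ} (hz : z < 0) (h : chi1 b c τ z = 0) :
    b * exp (-(z * c * τ)) < 1 := by
  have hpos : 0 < z ^ 2 - c * z := by nlinarith
  have hratio : exp (-(z * c * τ)) / (1 - b * exp (-(z * c * τ))) = z ^ 2 - c * z := by
    unfold chi1 at h; linarith
  by_contra! hle
  have : exp (-(z * c * τ)) / (1 - b * exp (-(z * c * τ))) ≤ 0 :=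
    div_nonpos_of_nonneg_of_nonpos (exp_pos _).le (by linarith)
  linarith

end Zeros

section CriticalSpeed

variable {b τ c₁ : ℝ}

lemma chi0_nonneg_of_forall_le (hb0 : 0 ≤ b) (hb1 : b < 1) (hτ : 0 < τ) (hc₁ : 0 < c₁)
    (h : ∀ c > 0, (∃ z > 0, chi0 b c τ z = 0) → c₁ ≤ c) {z : ℝ} (hz : 0 < z) :
    0 ≤ chi0 b c₁ τ z := by
  by_contra! hneg
  set t := z * c₁ * τ
  have ht : 0 < t := by positivity
  rw [show z = t / (c₁ * τ) by simp only [t]; field_simp, chi0_div_mul t hc₁.ne' hτ.ne'] at hneg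
  have hF : ContinuousAt (fun c => t ^ 2 / (c * τ) ^ 2 - t / τ + 1 / (1 - b * exp (-t))) c₁ := by
    have : (c₁ * τ) ^ 2 ≠ 0 := by positivity
    fun_prop (disch := exact this)
  obtain ⟨c, hcc₁, hFc, hc⟩ :=
    ((hF.eventually (eventually_lt_nhds hneg)).and (eventually_gt_nhds hc₁)).exists_lt
  obtain ⟨w, hw, hw0⟩ := exists_pos_chi0_eq_zero_of_nonpos hb0 hb1 hc.le hτ.le
    (z₁ := t / (c * τ)) (by positivity) (by rw [chi0_div_mul t hc.ne' hτ.ne']; exact hFc.le)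
  exact hcc₁.not_ge (h c hc ⟨w, hw, hw0⟩)

lemma chi1_nonpos_of_forall_le (hb0 : 0 ≤ b) (hb1 : b < 1) (hτ : 0 < τ) (hc₁ : 0 < c₁)
    (h : ∀ c > 0, (∃ z < 0, chi1 b c τ z = 0) → c ≤ c₁) {z : ℝ} (hz : z < 0)
    (hbz : b * exp (-(z * c₁ * τ)) < 1) : chi1 b c₁ τ z ≤ 0 := by
  by_contra! hpos
  set t := -(z * c₁ * τ)
  have ht : 0 < t := by
    have : z * c₁ * τ < 0 := mul_neg_of_neg_of_pos (mul_neg_of_neg_of_pos hz hc₁) hτ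
    linarith
  rw [show z = -(t / (c₁ * τ)) by simp only [t]; field_simp,
    chi1_neg_div_mul t hc₁.ne' hτ.ne'] at hpos
  have hF : ContinuousAt
      (fun c => t ^ 2 / (c * τ) ^ 2 + t / τ - exp t / (1 - b * exp t)) c₁ := by
    have : (c₁ * τ) ^ 2 ≠ 0 := by positivity
    fun_prop (disch := exact this)
  obtain ⟨c, hc₁c, hFc⟩ := (hF.eventually (eventually_gt_nhds hpos)).exists_gt
  have hc : 0 < c := hc₁.trans hc₁c
  exact hc₁c.not_ge (h c hc (exists_neg_chi1_eq_zero hb0 hb1 hc hτ ht hbz hFc.le))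

lemma lt_of_sq_div_lt_sq_div {s p q : ℝ} (hs : 0 < s) (hp : 0 < p) (hq : 0 < q)
    (h : s ^ 2 / q ^ 2 < s ^ 2 / p ^ 2) : p < q :=
  (pow_lt_pow_iff_left₀ hp.le hq.le two_ne_zero).mp
    ((div_lt_div_iff_of_pos_left (by positivity) (by positivity) (by positivity)).mp h)

variable {τ₁ τ₂ c₂ : ℝ}

lemma mul_lt_mul_of_chi0_eq_zero (hb0 : 0 ≤ b) (hb1 : b < 1) (hτ₁ : 0 < τ₁) (hτ : τ₁ < τ₂)
    (hc₁ : 0 < c₁) (hc₂ : 0 < c₂) (h : ∀ c > 0, (∃ z > 0, chi0 b c τ₁ z = 0) → c₁ ≤ c)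
    {z : ℝ} (hz : 0 < z) (hz0 : chi0 b c₂ τ₂ z = 0) : c₁ * τ₁ < c₂ * τ₂ := by
  have hτ₂ : 0 < τ₂ := hτ₁.trans hτ
  set s := z * c₂ * τ₂
  have hs : 0 < s := by positivity
  have h₂ := hz0
  rw [show z = s / (c₂ * τ₂) by simp only [s]; field_simp, chi0_div_mul s hc₂.ne' hτ₂.ne'] at h₂
  have h₁ := chi0_nonneg_of_forall_le hb0 hb1 hτ₁ hc₁ h (z := s / (c₁ * τ₁)) (by positivity)
  rw [chi0_div_mul s hc₁.ne' hτ₁.ne'] at h₁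
  have hsτ : s / τ₂ < s / τ₁ := div_lt_div_of_pos_left hs hτ₁ hτ
  exact lt_of_sq_div_lt_sq_div hs (by positivity) (by positivity) (by linarith)

lemma mul_lt_mul_of_chi1_eq_zero (hb0 : 0 ≤ b) (hb1 : b < 1) (hτ₁ : 0 < τ₁) (hτ : τ₁ < τ₂)
    (hc₁ : 0 < c₁) (hc₂ : 0 < c₂) (h : ∀ c > 0, (∃ z < 0, chi1 b c τ₁ z = 0) → c ≤ c₁)
    {z : ℝ} (hz : z < 0) (hz0 : chi1 b c₂ τ₂ z = 0) : c₂ * τ₂ < c₁ * τ₁ := by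
  have hτ₂ : 0 < τ₂ := hτ₁.trans hτ
  have hbs := mul_exp_lt_one_of_chi1_eq_zero hc₂.le hz hz0
  set s := -(z * c₂ * τ₂)
  have hs : 0 < s := by
    have : z * c₂ * τ₂ < 0 := mul_neg_of_neg_of_pos (mul_neg_of_neg_of_pos hz hc₂) hτ₂
    linarith
  have h₂ := hz0
  rw [show z = -(s / (c₂ * τ₂)) by simp only [s]; field_simp,
    chi1_neg_div_mul s hc₂.ne' hτ₂.ne'] at h₂
  have h₁ := chi1_nonpos_of_forall_le hb0 hb1 hτ₁ hc₁ h (z := -(s / (c₁ * τ₁)))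
    (neg_neg_of_pos (by positivity)) (by field_simp; exact hbs)
  rw [chi1_neg_div_mul s hc₁.ne' hτ₁.ne'] at h₁
  have hsτ : s / τ₂ < s / τ₁ := div_lt_div_of_pos_left hs hτ₁ hτ
  exact lt_of_sq_div_lt_sq_div hs (by positivity) (by positivity) (by linarith)

end CriticalSpeed

section Bounds

variable {b τ : ℝ}

lemma exists_pos_chi0_two_div_eq_zero (hb0 : 0 ≤ b) (hb1 : b < 1) (hτ : 0 ≤ τ) :
    ∃ z > 0, chi0 b (2 / (1 - b)) τ z = 0 := by
  have hb : 0 < 1 - b := by linarith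
  have hr : 1 ≤ 1 / (1 - b) := by rw [le_div_iff₀ hb]; linarith
  refine exists_pos_chi0_eq_zero_of_nonpos hb0 hb1 (by positivity) hτ
    (z₁ := 1 / (1 - b)) (by positivity) ?_
  set x := 1 / (1 - b) * (2 / (1 - b)) * τ
  have hden : 1 - b ≤ 1 - b * exp (-x) := by
    have : b * exp (-x) ≤ b :=
      mul_le_of_le_one_right hb0 (exp_le_one_iff.mpr (neg_nonpos.mpr (by positivity)))
    linarith
  have hquot : 1 / (1 - b * exp (-x)) ≤ 1 / (1 - b) := one_div_le_one_div_of_le hb hden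
  have hsq : 1 / (1 - b) ≤ (1 / (1 - b)) ^ 2 := by nlinarith
  have hexpand : (1 / (1 - b)) ^ 2 - 2 / (1 - b) * (1 / (1 - b)) = -(1 / (1 - b)) ^ 2 := by ring
  rw [chi0, hexpand]
  linarith

lemma not_exists_neg_chi1_two_eq_zero (hb0 : 0 < b) (hτ : 0 < τ) (hτb : -2 * log b ≤ τ) :
    ¬∃ z < 0, chi1 b 2 τ z = 0 := by
  rintro ⟨z, hz, hz0⟩
  have hbu := mul_exp_lt_one_of_chi1_eq_zero zero_le_two hz hz0
  set u := -(z * 2 * τ)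
  have hu : 0 < u := by nlinarith
  have hratio : exp u / (1 - b * exp u) = z ^ 2 - 2 * z := by
    unfold chi1 at hz0; linarith
  have hgt : 1 < exp u / (1 - b * exp u) := by
    have := one_lt_exp_iff.mpr hu
    rw [one_lt_div (by linarith)]
    nlinarith [exp_pos u]
  have hlog : log b + u < 0 := by
    rwa [← log_exp u, ← log_mul hb0.ne' (exp_pos u).ne', log_neg_iff (by positivity)]
  have hz4 : -z < 1 / 4 := by nlinarith
  nlinarith

lemma eventually_exists_neg_chi1_eq_zero (hb0 : 0 ≤ b) (hb1 : b < 1) {c c' : ℝ} (hc' : 0 < c')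
    (hc'c : c' < c) (hτ : 0 < τ) {z : ℝ} (hz : z < 0) (hz0 : chi1 b c τ z = 0) :
    ∀ᶠ τ' in 𝓝 τ, ∃ w < 0, chi1 b c' τ' w = 0 := by
  have hc : 0 < c := hc'.trans hc'c
  have hbt := mul_exp_lt_one_of_chi1_eq_zero hc.le hz hz0
  set t := -(z * c * τ)
  have ht : 0 < t := by
    have : z * c * τ < 0 := mul_neg_of_neg_of_pos (mul_neg_of_neg_of_pos hz hc) hτ
    linarith
  rw [show z = -(t / (c * τ)) by simp only [t]; field_simp, chi1_neg_div_mul t hc.ne' hτ.ne']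
    at hz0
  have hslower : t ^ 2 / (c * τ) ^ 2 < t ^ 2 / (c' * τ) ^ 2 := by gcongr
  have hG : ContinuousAt
      (fun τ' => t ^ 2 / (c' * τ') ^ 2 + t / τ' - exp t / (1 - b * exp t)) τ := by
    have : (c' * τ) ^ 2 ≠ 0 := by positivity
    fun_prop (disch := first | exact this | exact hτ.ne')
  filter_upwards [hG.eventually (eventually_gt_nhds (by linarith : (0 : ℝ) < _)),
    eventually_gt_nhds hτ] with τ' hGτ' hτ'
  exact exists_neg_chi1_eq_zero hb0 hb1 hc' hτ' ht hbt hGτ'.le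

end Bounds

section Curves

variable {b τb : ℝ} {cstar csharp : ℝ → ℝ}

lemma strictMonoOn_mul_of_chi0 (hb0 : 0 ≤ b) (hb1 : b < 1) (hpos : ∀ τ > 0, 0 < cstar τ)
    (hchar : ∀ τ > (0 : ℝ), ∀ c > (0 : ℝ), ((∃ z > (0 : ℝ), chi0 b c τ z = 0) ↔ cstar τ ≤ c)) :
    StrictMonoOn (fun τ => cstar τ * τ) (Ioi 0) := by
  intro τ₁ hτ₁ τ₂ hτ₂ hτ
  obtain ⟨z, hz, hz0⟩ := (hchar τ₂ hτ₂ _ (hpos τ₂ hτ₂)).mpr le_rfl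
  exact mul_lt_mul_of_chi0_eq_zero hb0 hb1 hτ₁ hτ (hpos τ₁ hτ₁) (hpos τ₂ hτ₂)
    (fun c hc => (hchar τ₁ hτ₁ c hc).mp) hz hz0

lemma strictAntiOn_mul_of_chi1 (hb0 : 0 ≤ b) (hb1 : b < 1) (hτb : 0 ≤ τb)
    (hpos : ∀ τ > τb, 0 < csharp τ)
    (hchar : ∀ τ > τb, ∀ c > (0 : ℝ), ((∃ z < (0 : ℝ), chi1 b c τ z = 0) ↔ c ≤ csharp τ)) :
    StrictAntiOn (fun τ => csharp τ * τ) (Ioi τb) := by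
  intro τ₁ hτ₁ τ₂ hτ₂ hτ
  obtain ⟨z, hz, hz0⟩ := (hchar τ₂ hτ₂ _ (hpos τ₂ hτ₂)).mpr le_rfl
  exact mul_lt_mul_of_chi1_eq_zero hb0 hb1 (hτb.trans_lt hτ₁) hτ (hpos τ₁ hτ₁) (hpos τ₂ hτ₂)
    (fun c hc => (hchar τ₁ hτ₁ c hc).mp) hz hz0

lemma exists_gt_cstar_le_csharp (hb0 : 0 ≤ b) (hb1 : b < 1) (hτb : 0 < τb)
    (hcs_char : ∀ τ > (0 : ℝ), ∀ c > (0 : ℝ), ((∃ z > (0 : ℝ), chi0 b c τ z = 0) ↔ cstar τ ≤ c))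
    (hsh_char : ∀ τ > τb, ∀ c > (0 : ℝ), ((∃ z < (0 : ℝ), chi1 b c τ z = 0) ↔ c ≤ csharp τ))
    (hsmall : ∀ c > (0 : ℝ), ∃ z < (0 : ℝ), chi1 b c τb z = 0) :
    ∃ τ > τb, cstar τ ≤ csharp τ := by
  have hC : 0 < 2 / (1 - b) := div_pos two_pos (by linarith)
  obtain ⟨z, hz, hz0⟩ := hsmall (2 / (1 - b) + 1) (by linarith)
  obtain ⟨τ, hτ, w, hw, hw0⟩ := (eventually_exists_neg_chi1_eq_zero hb0 hb1 hC
    (lt_add_one _) hτb hz hz0).exists_gt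
  have hτ0 : 0 < τ := hτb.trans hτ
  have hcs : cstar τ ≤ 2 / (1 - b) :=
    (hcs_char τ hτ0 _ hC).mp (exists_pos_chi0_two_div_eq_zero hb0 hb1 hτ0.le)
  exact ⟨τ, hτ, hcs.trans ((hsh_char τ hτ _ hC).mp ⟨w, hw, hw0⟩)⟩

lemma exists_gt_csharp_lt_cstar (hb0 : 0 < b) (hcs_gt2 : ∀ τ > (0 : ℝ), 2 < cstar τ)
    (hsh_char : ∀ τ > τb, ∀ c > (0 : ℝ), ((∃ z < (0 : ℝ), chi1 b c τ z = 0) ↔ c ≤ csharp τ))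
    {τ₁ : ℝ} (hτ₁ : τb < τ₁) (hτ₁0 : 0 < τ₁) : ∃ τ > τ₁, csharp τ < cstar τ := by
  set τ := max τ₁ (-2 * log b) + 1
  have hτ : τ₁ < τ := by linarith [le_max_left τ₁ (-2 * log b)]
  have hτ0 : 0 < τ := hτ₁0.trans hτ
  have hlog : -2 * log b ≤ τ := by linarith [le_max_right τ₁ (-2 * log b)]
  refine ⟨τ, hτ, (lt_of_not_ge fun h => ?_).trans (hcs_gt2 τ hτ0)⟩
  exact not_exists_neg_chi1_two_eq_zero hb0 hτ0 hlog ((hsh_char τ (hτ₁.trans hτ) 2 two_pos).mpr h)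

end Curves

theorem curves_intersect_once_general (b : ℝ) (hb : b ∈ Set.Ioo (0 : ℝ) 1)
    (τb : ℝ) (hτb : 0 < τb) (cstar csharp : ℝ → ℝ)
    (hcs_cont : ContinuousOn cstar (Set.Ioi 0))
    (hcs_gt2 : ∀ τ > (0 : ℝ), 2 < cstar τ)
    (hcs_char : ∀ τ > (0 : ℝ), ∀ c > (0 : ℝ),
      ((∃ z > (0 : ℝ), chi0 b c τ z = 0) ↔ cstar τ ≤ c))
    (hsh_cont : ContinuousOn csharp (Set.Ioi τb))
    (hsh_pos : ∀ τ > τb, 0 < csharp τ)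
    (hsh_char : ∀ τ > τb, ∀ c > (0 : ℝ),
      ((∃ z < (0 : ℝ), chi1 b c τ z = 0) ↔ c ≤ csharp τ))
    (hsmall : ∀ τ : ℝ, 0 < τ → τ ≤ τb → ∀ c > (0 : ℝ), ∃ z < (0 : ℝ), chi1 b c τ z = 0) :
    ∃! τ₀ : ℝ, τb < τ₀ ∧ cstar τ₀ = csharp τ₀ := by
  obtain ⟨hb0, hb1⟩ := hb
  obtain ⟨τ₁, hτ₁, h₁⟩ := exists_gt_cstar_le_csharp hb0.le hb1 hτb hcs_char hsh_char
    (hsmall τb hτb le_rfl)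
  obtain ⟨τ₂, hτ₂, h₂⟩ := exists_gt_csharp_lt_cstar hb0 hcs_gt2 hsh_char hτ₁ (hτb.trans hτ₁)
  have hIcc : Icc τ₁ τ₂ ⊆ Ioi τb := fun τ hτ => hτ₁.trans_le hτ.1
  obtain ⟨τ₀, hτ₀, heq⟩ := intermediate_value_Icc hτ₂.le
    ((hcs_cont.mono (hIcc.trans (Ioi_subset_Ioi hτb.le))).sub (hsh_cont.mono hIcc))
    ⟨sub_nonpos.mpr h₁, sub_nonneg.mpr h₂.le⟩
  have hcs_pos : ∀ τ > 0, 0 < cstar τ := fun τ hτ => two_pos.trans (hcs_gt2 τ hτ)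
  have hinj : InjOn (fun τ => cstar τ * τ + -(csharp τ * τ)) (Ioi τb) :=
    (((strictMonoOn_mul_of_chi0 hb0.le hb1 hcs_pos hcs_char).mono (Ioi_subset_Ioi hτb.le)).add
      (strictAntiOn_mul_of_chi1 hb0.le hb1 hτb.le hsh_pos hsh_char).neg).injOn
  refine ⟨τ₀, ⟨hIcc hτ₀, sub_eq_zero.mp heq⟩, fun τ ⟨hτ, hτeq⟩ => hinj hτ (hIcc hτ₀) ?_⟩
  simp only [hτeq, sub_eq_zero.mp heq, add_neg_cancel]

/-- The critical-speed curves `c = c_*(τ)` (τ > 0) and `c = c_#(τ)`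
(τ > τ(b)) intersect at exactly one point. -/
theorem curves_intersect_once (b : ℝ) (hb : b ∈ Set.Ioo (0 : ℝ) 1)
    (τb : ℝ) (hτb : 0 < τb) (cstar csharp : ℝ → ℝ)
    (hcs_cont : ContinuousOn cstar (Set.Ioi 0))
    (hcs_anti : StrictAntiOn cstar (Set.Ioi 0))
    (hcs_gt2 : ∀ τ > (0 : ℝ), 2 < cstar τ)
    (hcs_char : ∀ τ > (0 : ℝ), ∀ c > (0 : ℝ),
      ((∃ z > (0 : ℝ), chi0 b c τ z = 0) ↔ cstar τ ≤ c))
    (hsh_cont : ContinuousOn csharp (Set.Ioi τb))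
    (hsh_anti : StrictAntiOn csharp (Set.Ioi τb))
    (hsh_pos : ∀ τ > τb, 0 < csharp τ)
    (hsh_char : ∀ τ > τb, ∀ c > (0 : ℝ),
      ((∃ z < (0 : ℝ), chi1 b c τ z = 0) ↔ c ≤ csharp τ))
    (hsmall : ∀ τ : ℝ, 0 < τ → τ ≤ τb → ∀ c > (0 : ℝ), ∃ z < (0 : ℝ), chi1 b c τ z = 0) :
    ∃! τ₀ : ℝ, τb < τ₀ ∧ cstar τ₀ = csharp τ₀ :=
  curves_intersect_once_general b hb τb hτb cstar csharp hcs_cont hcs_gt2 hcs_char hsh_cont hsh_pos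
    hsh_char hsmall
end

section
/- Let ρ > 0, m ∈ ℕ, and let UC_ρ denote the space of functions g : (−∞,0] → ℝ^m such that t ↦ g(t)·e^{ρt} is bounded and uniformly continuous, with norm |g|_ρ = sup_{s≤0} |g(s)·e^{ρs}|. Let L : UC_ρ → ℝ^m be a continuous linear operator and let M : (−∞,0] × UC_ρ → ℝ^m be a continuous function satisfying |M(t,φ)| ≤ μ(t)·|φ|_ρ for some bounded nonnegative μ with μ(t) → 0 as t → −∞. Suppose x : (−∞,0] → ℝ^m is continuously differentiable, satisfies x'(t) = L(x_t) + M(t, x_t) for all t ≤ 0 (where x_t(s) := x(t+s) for s ≤ 0), and is exponentially small at −∞, i.e., for every γ ∈ ℝ, x(t)·e^{γt} → 0 as t → −∞. Then x is identically zero. -/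
open Filter Set

/-- The ρ-weighted sup norm `|g|_ρ = sup_{s≤0} |g(s)e^{ρs}|` on histories. -/
noncomputable def ucNorm (ρ : ℝ) {m : ℕ} (g : ℝ → EuclideanSpace ℝ (Fin m)) : ℝ :=
  ⨆ s : Set.Iic (0 : ℝ), ‖g (s : ℝ)‖ * Real.exp (ρ * (s : ℝ))

/-- Membership in the fading memory space `UC_ρ`: `g(t)e^{ρt}` is bounded and uniformly
continuous on `(−∞,0]`. -/
def MemUC (ρ : ℝ) {m : ℕ} (g : ℝ → EuclideanSpace ℝ (Fin m)) : Prop :=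
  UniformContinuousOn (fun s => Real.exp (ρ * s) • g s) (Set.Iic 0) ∧
  ∃ C : ℝ, ∀ s ≤ (0 : ℝ), ‖g s‖ * Real.exp (ρ * s) ≤ C

/-- The history segment `x_t(s) = x(t+s)`, `s ≤ 0`. -/
def hist {m : ℕ} (x : ℝ → EuclideanSpace ℝ (Fin m)) (t : ℝ) :
    ℝ → EuclideanSpace ℝ (Fin m) := fun s => x (t + s)

/-- A functional differential equation `x' = Lx_t + M(t,x_t)` with `L`
continuous linear on `UC_ρ` and `|M(t,φ)| ≤ μ(t)|φ|_ρ`, `μ(t) → 0` as `t → −∞`, admits no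
nontrivial solution on `(−∞,0]` which is exponentially small at `−∞`. -/
theorem no_superexponential_solutions (ρ : ℝ) (hρ : 0 < ρ) (m : ℕ)
    (L : (ℝ → EuclideanSpace ℝ (Fin m)) → EuclideanSpace ℝ (Fin m))
    (M : ℝ → (ℝ → EuclideanSpace ℝ (Fin m)) → EuclideanSpace ℝ (Fin m))
    (μ : ℝ → ℝ)
    (hLadd : ∀ f g, MemUC ρ f → MemUC ρ g → L (f + g) = L f + L g)
    (hLsmul : ∀ (a : ℝ) (f), MemUC ρ f → L (a • f) = a • L f)
    (hLbdd : ∃ K : ℝ, ∀ f, MemUC ρ f → ‖L f‖ ≤ K * ucNorm ρ f)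
    (hMbound : ∀ t ≤ (0 : ℝ), ∀ φ, MemUC ρ φ → ‖M t φ‖ ≤ μ t * ucNorm ρ φ)
    (hMcont : ∀ t ≤ (0 : ℝ), ∀ φ, MemUC ρ φ → ∀ ε > (0 : ℝ), ∃ δ > (0 : ℝ),
      ∀ t' ≤ (0 : ℝ), ∀ ψ, MemUC ρ ψ → |t' - t| < δ → ucNorm ρ (ψ - φ) < δ →
        ‖M t' ψ - M t φ‖ < ε)
    (hμ0 : ∀ t, 0 ≤ μ t) (hμbd : ∃ C, ∀ t, μ t ≤ C)
    (hμlim : Tendsto μ atBot (nhds 0))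
    (x : ℝ → EuclideanSpace ℝ (Fin m))
    (hxUC : ∀ t ≤ (0 : ℝ), MemUC ρ (hist x t))
    (hx : ∀ t ≤ (0 : ℝ),
      HasDerivWithinAt x (L (hist x t) + M t (hist x t)) (Set.Iic 0) t)
    (hxsmall : ∀ γ : ℝ, Tendsto (fun t => ‖x t‖ * Real.exp (γ * t)) atBot (nhds 0)) :
    ∀ t ≤ (0 : ℝ), x t = 0 := by
  obtain ⟨K, hK⟩ := hLbdd
  obtain ⟨B, hB⟩ := hμbd
  set C : ℝ := max K 0 + max B 0 + 1 with hCdef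
  have hC1 : 1 ≤ C := by
    simp only [hCdef]; linarith [le_max_right K 0, le_max_right B 0]
  have hCpos : 0 < C := lt_of_lt_of_le one_pos hC1
  set h : ℝ := 1 / (2 * C) with hhdef
  have hhpos : 0 < h := by positivity
  set w : ℝ → ℝ := fun t => ucNorm ρ (hist x t) with hwdef
  haveI : Nonempty (Set.Iic (0:ℝ)) := ⟨⟨0, Set.mem_Iic.mpr le_rfl⟩⟩
  have hxcont : ContinuousOn x (Iic 0) := fun t ht => (hx t ht).continuousWithinAt
  have hbdd : ∀ t ≤ (0:ℝ), BddAbove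
      (Set.range fun s : Set.Iic (0:ℝ) => ‖x (t + (s:ℝ))‖ * Real.exp (ρ * (s:ℝ))) := by
    intro t ht
    obtain ⟨D, hD⟩ := (hxUC t ht).2
    refine ⟨D, ?_⟩
    rintro _ ⟨⟨s, hs⟩, rfl⟩
    exact hD s hs
  have hterm : ∀ t ≤ (0:ℝ), ∀ s ≤ (0:ℝ), ‖x (t + s)‖ * Real.exp (ρ * s) ≤ w t := by
    intro t ht s hs
    exact le_ciSup (hbdd t ht) ⟨s, hs⟩
  have hw0 : ∀ t, 0 ≤ w t := by
    intro t
    apply Real.iSup_nonneg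
    intro s
    positivity
  have hxle : ∀ t ≤ (0:ℝ), ‖x t‖ ≤ w t := by
    intro t ht
    have := hterm t ht 0 le_rfl
    simpa using this
  have hder : ∀ t ≤ (0:ℝ), ‖L (hist x t) + M t (hist x t)‖ ≤ C * w t := by
    intro t ht
    have h1 := hK _ (hxUC t ht)
    have h2 := hMbound t ht _ (hxUC t ht)
    have h3 : K * ucNorm ρ (hist x t) ≤ max K 0 * w t :=
      mul_le_mul_of_nonneg_right (le_max_left _ _) (hw0 t)
    have h4 : μ t * ucNorm ρ (hist x t) ≤ max B 0 * w t :=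
      mul_le_mul_of_nonneg_right (le_trans (hB t) (le_max_left _ _)) (hw0 t)
    calc ‖L (hist x t) + M t (hist x t)‖ ≤ ‖L (hist x t)‖ + ‖M t (hist x t)‖ := norm_add_le _ _
      _ ≤ max K 0 * w t + max B 0 * w t := add_le_add (le_trans h1 h3) (le_trans h2 h4)
      _ ≤ C * w t := by simp only [hCdef]; nlinarith [hw0 t]
  -- split bound: on `[a,b]` the history norm is dominated by `max (w a) (sup ‖x‖)`
  have hsplit : ∀ a ≤ (0:ℝ), ∀ b ≤ (0:ℝ), a ≤ b → ∀ V, w a ≤ V →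
      (∀ u ∈ Icc a b, ‖x u‖ ≤ V) → ∀ u ∈ Icc a b, w u ≤ V := by
    intro a ha b hb hab V hVa hVx u hu
    have hV0 : 0 ≤ V := le_trans (hw0 a) hVa
    refine ciSup_le ?_
    rintro ⟨s, hs⟩
    simp only
    have hs' : s ≤ 0 := hs
    show ‖x (u + s)‖ * Real.exp (ρ * s) ≤ V
    rcases le_or_gt a (u + s) with hcase | hcase
    · have hmem : u + s ∈ Icc a b := ⟨hcase, by linarith [hu.2]⟩
      have he : Real.exp (ρ * s) ≤ 1 := by
        rw [Real.exp_le_one_iff]; nlinarith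
      calc ‖x (u + s)‖ * Real.exp (ρ * s) ≤ V * 1 :=
            mul_le_mul (hVx _ hmem) he (Real.exp_nonneg _) hV0
        _ = V := mul_one V
    · have hσ : u + s - a ≤ 0 := by linarith
      have key : ‖x (a + (u + s - a))‖ * Real.exp (ρ * (u + s - a)) ≤ w a :=
        hterm a ha _ hσ
      have hrw : ‖x (u + s)‖ * Real.exp (ρ * s)
          = (‖x (a + (u + s - a))‖ * Real.exp (ρ * (u + s - a))) * Real.exp (ρ * (a - u)) := by
        have harg : a + (u + s - a) = u + s := by ring
        rw [harg, mul_assoc, ← Real.exp_add]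
        congr 2
        ring
      rw [hrw]
      have he : Real.exp (ρ * (a - u)) ≤ 1 := by
        rw [Real.exp_le_one_iff]; nlinarith [hu.1]
      calc (‖x (a + (u + s - a))‖ * Real.exp (ρ * (u + s - a))) * Real.exp (ρ * (a - u))
          ≤ w a * 1 := mul_le_mul key he (Real.exp_nonneg _) (hw0 a)
        _ ≤ V := by rw [mul_one]; exact hVa
  -- doubling step
  have hstep : ∀ b ≤ (0:ℝ), w b ≤ 2 * w (b - h) := by
    intro b hb
    set a : ℝ := b - h with hadef
    have ha : a ≤ 0 := by simp only [hadef]; linarith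
    have hab : a ≤ b := by simp only [hadef]; linarith
    have hcont : ContinuousOn (fun u => ‖x u‖) (Icc a b) :=
      (hxcont.mono (fun u hu => le_trans (hu.2 : u ≤ b) hb)).norm
    obtain ⟨v, hvmem, hvmax⟩ := isCompact_Icc.exists_isMaxOn (nonempty_Icc.mpr hab) hcont
    set V : ℝ := max (w a) ‖x v‖ with hVdef
    have hV0 : 0 ≤ V := le_trans (hw0 a) (le_max_left _ _)
    have hVx : ∀ u ∈ Icc a b, ‖x u‖ ≤ V := fun u hu => le_trans (hvmax hu) (le_max_right _ _)
    have hwV : ∀ u ∈ Icc a b, w u ≤ V :=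
      hsplit a ha b hb hab V (le_max_left _ _) hVx
    have hsub : Icc a b ⊆ Iic (0:ℝ) := fun u hu => le_trans hu.2 hb
    have hmv : ‖x v - x a‖ ≤ (C * V) * ‖v - a‖ := by
      apply Convex.norm_image_sub_le_of_norm_hasDerivWithin_le
        (f' := fun u => L (hist x u) + M u (hist x u))
        (fun u hu => ((hx u (hsub hu)).mono hsub))
        (fun u hu => le_trans (hder u (hsub hu))
          (mul_le_mul_of_nonneg_left (hwV u hu) (le_of_lt hCpos)))
        (convex_Icc a b) (left_mem_Icc.mpr hab) hvmem
    have hnorm : ‖v - a‖ ≤ h := by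
      rw [Real.norm_eq_abs, abs_of_nonneg (by linarith [hvmem.1])]
      have hvb : v ≤ b := hvmem.2
      simp only [hadef]
      linarith
    have hxv : ‖x v‖ ≤ w a + V / 2 := by
      have h1 : ‖x v‖ - ‖x a‖ ≤ ‖x v - x a‖ := norm_sub_norm_le (x v) (x a)
      have h2 : (C * V) * ‖v - a‖ ≤ (C * V) * h :=
        mul_le_mul_of_nonneg_left hnorm (by positivity)
      have h3 : (C * V) * h = V / 2 := by
        simp only [hhdef]
        field_simp
      have h4 : ‖x a‖ ≤ w a := hxle a ha
      have h5 : ‖x v - x a‖ ≤ V / 2 := by rw [← h3]; exact le_trans hmv h2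
      linarith [h1, h4, h5]
    have hVle : V ≤ 2 * w a := by
      rcases max_cases (w a) ‖x v‖ with ⟨hEq, _⟩ | ⟨hEq, hlt⟩
      · rw [hVdef, hEq]; linarith [hw0 a]
      · have hVeq : V = ‖x v‖ := by rw [hVdef, hEq]
        rw [hVeq] at hxv ⊢
        linarith
    calc w b ≤ V := hwV b (right_mem_Icc.mpr hab)
      _ ≤ 2 * w a := hVle
  -- iterate the doubling step
  have hiter : ∀ n : ℕ, ∀ b ≤ (0:ℝ), w b ≤ 2 ^ n * w (b - n * h) := by
    intro n
    induction n with
    | zero => intro b hb; simp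
    | succ n ih =>
      intro b hb
      have h1 := hstep b hb
      have h2 := ih (b - h) (by linarith)
      have h3 : b - h - n * h = b - (n + 1 : ℕ) * h := by push_cast; ring
      rw [h3] at h2
      calc w b ≤ 2 * w (b - h) := h1
        _ ≤ 2 * (2 ^ n * w (b - (n + 1 : ℕ) * h)) := by linarith
        _ = 2 ^ (n + 1) * w (b - (n + 1 : ℕ) * h) := by ring
  -- superexponential tail bound on the history norm
  have htail : ∃ U ≤ (0:ℝ), ∀ T ≤ U, w T ≤ Real.exp (2 * C * T) := by
    have hts := hxsmall (-(2 * C))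
    have hev : ∀ᶠ u in atBot, ‖x u‖ * Real.exp (-(2 * C) * u) ≤ 1 :=
      hts.eventually (eventually_le_nhds (by norm_num : (0:ℝ) < 1))
    obtain ⟨U₀, hU₀⟩ := eventually_atBot.mp hev
    refine ⟨min U₀ 0, min_le_right _ _, ?_⟩
    intro T hT
    have hT0 : T ≤ 0 := le_trans hT (min_le_right _ _)
    refine ciSup_le ?_
    rintro ⟨s, hs⟩
    simp only
    have hs' : s ≤ 0 := hs
    show ‖x (T + s)‖ * Real.exp (ρ * s) ≤ Real.exp (2 * C * T)
    have hTs : T + s ≤ U₀ := by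
      have := le_trans hT (min_le_left _ _); linarith
    have h1 : ‖x (T + s)‖ * Real.exp (-(2 * C) * (T + s)) ≤ 1 := hU₀ _ hTs
    have hmulone : Real.exp (-(2 * C) * (T + s)) * Real.exp (2 * C * (T + s)) = 1 := by
      rw [← Real.exp_add]
      have : -(2 * C) * (T + s) + 2 * C * (T + s) = 0 := by ring
      rw [this, Real.exp_zero]
    have h2 : ‖x (T + s)‖ ≤ Real.exp (2 * C * (T + s)) := by
      have hc := Real.exp_pos (2 * C * (T + s))
      nlinarith [mul_le_mul_of_nonneg_right h1 hc.le, norm_nonneg (x (T + s))]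
    calc ‖x (T + s)‖ * Real.exp (ρ * s) ≤ Real.exp (2 * C * (T + s)) * Real.exp (ρ * s) :=
          mul_le_mul_of_nonneg_right h2 (Real.exp_nonneg _)
      _ = Real.exp (2 * C * T) * Real.exp ((2 * C + ρ) * s) := by
          rw [← Real.exp_add, ← Real.exp_add]; ring_nf
      _ ≤ Real.exp (2 * C * T) * 1 := by
          apply mul_le_mul_of_nonneg_left _ (Real.exp_nonneg _)
          rw [Real.exp_le_one_iff]
          nlinarith
      _ = Real.exp (2 * C * T) := mul_one _
  obtain ⟨U, hU0, hUle⟩ := htail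
  -- conclusion
  intro t ht
  have h2Ch : 2 * C * h = 1 := by
    simp only [hhdef]
    field_simp
  have key : ∀ᶠ n : ℕ in atTop, ‖x t‖ ≤ Real.exp (2 * C * t) * (2 * Real.exp (-1)) ^ n := by
    have htend : Tendsto (fun n : ℕ => t - n * h) atTop atBot := by
      have h1 : Tendsto (fun n : ℕ => (n : ℝ) * h) atTop atTop :=
        tendsto_natCast_atTop_atTop.atTop_mul_const hhpos
      have h2 := tendsto_atBot_add_const_left atTop t (tendsto_neg_atTop_atBot.comp h1)
      simpa [sub_eq_add_neg, Function.comp] using h2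
    filter_upwards [htend.eventually (eventually_le_atBot U)] with n hn
    have h1 : ‖x t‖ ≤ w t := hxle t ht
    have h2 : w t ≤ 2 ^ n * w (t - n * h) := hiter n t ht
    have h3 : w (t - n * h) ≤ Real.exp (2 * C * (t - n * h)) := hUle _ hn
    have h4 : Real.exp (2 * C * (t - n * h)) = Real.exp (2 * C * t) * Real.exp (-1) ^ n := by
      rw [← Real.exp_nat_mul, ← Real.exp_add]
      congr 1
      have : 2 * C * (t - n * h) = 2 * C * t - n * (2 * C * h) := by ring
      rw [this, h2Ch]
      ring
    have h5 : (2:ℝ) ^ n * Real.exp (2 * C * (t - n * h))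
        ≤ Real.exp (2 * C * t) * (2 * Real.exp (-1)) ^ n := by
      rw [h4, mul_pow]
      exact le_of_eq (by ring)
    calc ‖x t‖ ≤ 2 ^ n * w (t - n * h) := le_trans h1 h2
      _ ≤ 2 ^ n * Real.exp (2 * C * (t - n * h)) :=
          mul_le_mul_of_nonneg_left h3 (by positivity)
      _ ≤ Real.exp (2 * C * t) * (2 * Real.exp (-1)) ^ n := h5
  have hq0 : (0:ℝ) ≤ 2 * Real.exp (-1) := by positivity
  have hq1 : 2 * Real.exp (-1) < 1 := by
    have he1 : Real.exp (-1) * Real.exp 1 = 1 := by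
      rw [← Real.exp_add]; norm_num
    nlinarith [Real.exp_one_gt_d9, Real.exp_pos (-1)]
  have htendq : Tendsto (fun n : ℕ => Real.exp (2 * C * t) * (2 * Real.exp (-1)) ^ n)
      atTop (nhds 0) := by
    have := (tendsto_pow_atTop_nhds_zero_of_lt_one hq0 hq1).const_mul (Real.exp (2 * C * t))
    simpa using this
  have hx0 : ‖x t‖ ≤ 0 := ge_of_tendsto htendq key
  exact norm_le_zero_iff.mp hx0
end

section
/- Let m ∈ ℕ, σ > 0, and let x : (−∞,0] → ℝ^m be continuous with |x_t|_C := sup_{s≤t} |x(s)| > 0 for every t ≤ 0. Suppose that for every ν ∈ ℝ one has |x_t|_C·e^{ν·t} → 0 as t → −∞. Then inf_{t≤0} ( |x_{t−σ}|_C / |x_t|_C ) = 0. -/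
open Filter Set

/-- `|x_t|_C = sup_{s ≤ t} |x(s)|`. -/
noncomputable def normC {m : ℕ} (x : ℝ → EuclideanSpace ℝ (Fin m)) (t : ℝ) : ℝ :=
  ⨆ s : Set.Iic t, ‖x (s : ℝ)‖

/-!
If the infimum `c` of `f (t - σ) / f t` over `t ≤ 0` were positive, then iterating
`c * f t ≤ f (t - σ)` gives `c ^ n * f 0 ≤ f (-n σ)`, i.e. `f` decays at most exponentially
along `t = -n σ`: with `ν = log c / σ` one has `f (-n σ) * exp (ν * (-n σ)) ≥ f 0 > 0`,
contradicting super-exponential decay.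
-/

lemma normC_nonneg {m : ℕ} (x : ℝ → EuclideanSpace ℝ (Fin m)) (t : ℝ) : 0 ≤ normC x t :=
  Real.iSup_nonneg fun _ => norm_nonneg _

section ShiftRatio

variable {f : ℝ → ℝ} {c σ : ℝ}

lemma pow_mul_le_of_mul_le_shift (hc : 0 ≤ c) (hσ : 0 ≤ σ)
    (hstep : ∀ t ≤ (0 : ℝ), c * f t ≤ f (t - σ)) (n : ℕ) :
    c ^ n * f 0 ≤ f (-(n * σ)) := by
  induction n with
  | zero => simp
  | succ n ih =>
    have hn : -((n : ℝ) * σ) ≤ 0 := neg_nonpos.mpr (by positivity)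
    calc c ^ (n + 1) * f 0 = c * (c ^ n * f 0) := by ring
      _ ≤ c * f (-(n * σ)) := mul_le_mul_of_nonneg_left ih hc
      _ ≤ f (-(n * σ) - σ) := hstep _ hn
      _ = f (-((n + 1 : ℕ) * σ)) := by push_cast; ring_nf

lemma exp_log_div_mul_neg_nat_mul (hc : 0 < c) (hσ : σ ≠ 0) (n : ℕ) :
    Real.exp (Real.log c / σ * -(n * σ)) = (c ^ n)⁻¹ := by
  have harg : Real.log c / σ * -(n * σ) = -(n * Real.log c) := by field_simp
  rw [harg, Real.exp_neg, Real.exp_nat_mul, Real.exp_log hc]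

lemma not_tendsto_mul_exp_of_pow_mul_le (hc : 0 < c) (hσ : 0 < σ) (hf0 : 0 < f 0)
    (hgrowth : ∀ n : ℕ, c ^ n * f 0 ≤ f (-(n * σ))) :
    ¬ Tendsto (fun t => f t * Real.exp (Real.log c / σ * t)) atBot (nhds 0) := by
  intro hdecay
  have hseq : Tendsto (fun n : ℕ => -((n : ℝ) * σ)) atTop atBot :=
    tendsto_neg_atTop_atBot.comp (tendsto_natCast_atTop_atTop.atTop_mul_const hσ)
  have hlower : ∀ n : ℕ, f 0 ≤ f (-(n * σ)) * Real.exp (Real.log c / σ * -(n * σ)) := by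
    intro n
    rw [exp_log_div_mul_neg_nat_mul hc hσ.ne', ← div_eq_mul_inv,
      le_div_iff₀ (pow_pos hc n), mul_comm]
    exact hgrowth n
  exact hf0.not_ge (ge_of_tendsto (hdecay.comp hseq) (Eventually.of_forall hlower))

lemma iInf_shift_div_eq_zero (hσ : 0 < σ) (hf : ∀ t, 0 ≤ f t) (hpos : ∀ t ≤ (0 : ℝ), 0 < f t)
    (hdecay : ∀ ν : ℝ, Tendsto (fun t => f t * Real.exp (ν * t)) atBot (nhds 0)) :
    ⨅ t : Iic (0 : ℝ), f (t - σ) / f t = 0 := by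
  set c := ⨅ t : Iic (0 : ℝ), f (t - σ) / f t
  have hratio_nonneg : ∀ t, 0 ≤ f (t - σ) / f t := fun t => div_nonneg (hf _) (hf _)
  have hc_nonneg : 0 ≤ c := Real.iInf_nonneg fun t => hratio_nonneg t
  refine (hc_nonneg.eq_or_lt.resolve_right fun hc => ?_).symm
  have hstep : ∀ t ≤ (0 : ℝ), c * f t ≤ f (t - σ) := fun t ht =>
    (le_div_iff₀ (hpos t ht)).mp <|
      ciInf_le ⟨0, by rintro _ ⟨s, rfl⟩; exact hratio_nonneg s⟩ (⟨t, ht⟩ : Iic (0 : ℝ))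
  exact not_tendsto_mul_exp_of_pow_mul_le hc hσ (hpos 0 le_rfl)
    (pow_mul_le_of_mul_le_shift hc.le hσ.le hstep) (hdecay _)

end ShiftRatio

theorem superexp_decay_ratio_inf_general (m : ℕ) (σ : ℝ) (hσ : 0 < σ)
    (x : ℝ → EuclideanSpace ℝ (Fin m))
    (hpos : ∀ t ≤ (0 : ℝ), 0 < normC x t)
    (hdecay : ∀ ν : ℝ, Tendsto (fun t => normC x t * Real.exp (ν * t)) atBot (nhds 0)) :
    ⨅ t : Set.Iic (0 : ℝ), normC x ((t : ℝ) - σ) / normC x (t : ℝ) = 0 :=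
  iInf_shift_div_eq_zero hσ (normC_nonneg x) hpos hdecay

/-- If a continuous `x : (−∞,0] → ℝ^m` satisfies `|x_t|_C > 0` for all
`t ≤ 0` and decays super-exponentially (`|x_t|_C e^{νt} → 0` as `t → −∞` for every `ν`),
then `inf_{t ≤ 0} |x_{t−σ}|_C / |x_t|_C = 0`. -/
theorem superexp_decay_ratio_inf (m : ℕ) (σ : ℝ) (hσ : 0 < σ)
    (x : ℝ → EuclideanSpace ℝ (Fin m)) (hx : Continuous x)
    (hpos : ∀ t ≤ (0 : ℝ), 0 < normC x t)
    (hdecay : ∀ ν : ℝ, Tendsto (fun t => normC x t * Real.exp (ν * t)) atBot (nhds 0)) :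
    ⨅ t : Set.Iic (0 : ℝ), normC x ((t : ℝ) - σ) / normC x (t : ℝ) = 0 :=
  superexp_decay_ratio_inf_general m σ hσ x hpos hdecay
end

section
/- Let b ∈ (0,1) and (τ,c) ∈ 𝔇 with c > c_*(τ). Let λ₂ be the smallest positive real zero of χ₀ and μ₁ the largest negative real zero of χ₁. Then there exist a > 0 and ζ ∈ ℝ such that the function φ₊ defined by φ₊(t) = 1 − e^{μ₁·t} for t ≥ ζ and φ₊(t) = a·e^{λ₂·t} for t ≤ ζ is continuously differentiable on ℝ, nondecreasing, satisfies 1 − e^{μ₁·t} < a·e^{λ₂·t} for all t < ζ, and satisfies the super-solution inequality φ₊''(t) − c·φ₊'(t) + (Bφ₊)(t)·(1 − (1−b)·(SBφ₊)(t)) ≤ 0 for all t ≠ ζ. -/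
open Filter

/-- The domain 𝔇: χ₀ has a positive real zero and χ₁ has a negative real zero. -/
def inD (b τ c : ℝ) : Prop :=
  (∃ z > (0 : ℝ), chi0 b c τ z = 0) ∧ (∃ z < (0 : ℝ), chi1 b c τ z = 0)

/-- `(Bφ)(t) = Σ_{j≥0} b^j φ(t − j·c·τ)`. -/
noncomputable def Bop (b c τ : ℝ) (φ : ℝ → ℝ) (t : ℝ) : ℝ :=
  ∑' j : ℕ, b ^ j * φ (t - (j : ℝ) * c * τ)

/-- `(SBφ)(t) = Σ_{j≥0} b^j φ(t − (j+1)·c·τ)`. -/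
noncomputable def SBop (b c τ : ℝ) (φ : ℝ → ℝ) (t : ℝ) : ℝ :=
  ∑' j : ℕ, b ^ j * φ (t - ((j : ℝ) + 1) * c * τ)

set_option maxHeartbeats 1000000 in
theorem aux_main (b c τ l₂ μ₁ a ζ : ℝ)
    (hb0 : 0 < b) (hb1 : b < 1) (hτ : 0 < τ) (hc : 0 < c)
    (hl₂pos : 0 < l₂) (hμneg : μ₁ < 0)
    (hl₂zero : chi0 b c τ l₂ = 0) (hμzero : chi1 b c τ μ₁ = 0)
    (ha : 0 < a)
    (hval : a * Real.exp (l₂ * ζ) = 1 - Real.exp (μ₁ * ζ))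
    (hder : a * l₂ * Real.exp (l₂ * ζ) = -μ₁ * Real.exp (μ₁ * ζ)) :
    ContDiff ℝ 1 (fun t => if t ≤ ζ then a * Real.exp (l₂ * t) else 1 - Real.exp (μ₁ * t)) ∧
    Monotone (fun t => if t ≤ ζ then a * Real.exp (l₂ * t) else 1 - Real.exp (μ₁ * t)) ∧
    (∀ t < ζ, 1 - Real.exp (μ₁ * t) < a * Real.exp (l₂ * t)) ∧
    ∀ t : ℝ, t ≠ ζ →
      deriv (deriv (fun t => if t ≤ ζ then a * Real.exp (l₂ * t) else 1 - Real.exp (μ₁ * t))) t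
        - c * deriv (fun t => if t ≤ ζ then a * Real.exp (l₂ * t) else 1 - Real.exp (μ₁ * t)) t
        + Bop b c τ (fun t => if t ≤ ζ then a * Real.exp (l₂ * t) else 1 - Real.exp (μ₁ * t)) t *
          (1 - (1 - b) * SBop b c τ
            (fun t => if t ≤ ζ then a * Real.exp (l₂ * t) else 1 - Real.exp (μ₁ * t)) t) ≤ 0 := by
  set f : ℝ → ℝ := fun t => if t ≤ ζ then a * Real.exp (l₂ * t) else 1 - Real.exp (μ₁ * t) with hf
  set ψ : ℝ → ℝ := fun t => if t ≤ ζ then a * (l₂ * Real.exp (l₂ * t)) else -(μ₁ * Real.exp (μ₁ * t)) with hψ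
  have hf_le : ∀ t ≤ ζ, f t = a * Real.exp (l₂ * t) := fun t ht => if_pos ht
  have hf_gt : ∀ t, ζ < t → f t = 1 - Real.exp (μ₁ * t) := fun t ht => if_neg (not_le.mpr ht)
  have hψ_le : ∀ t ≤ ζ, ψ t = a * (l₂ * Real.exp (l₂ * t)) := fun t ht => if_pos ht
  have hψ_gt : ∀ t, ζ < t → ψ t = -(μ₁ * Real.exp (μ₁ * t)) := fun t ht => if_neg (not_le.mpr ht)
  -- exp derivative helper
  have hExp : ∀ (k t : ℝ), HasDerivAt (fun s : ℝ => Real.exp (k * s)) (k * Real.exp (k * t)) t := by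
    intro k t
    have h1 : HasDerivAt (fun s : ℝ => k * s) k t := by
      simpa using (hasDerivAt_id t).const_mul k
    simpa [mul_comm] using h1.exp
  -- ζ > 0
  have hζpos : 0 < ζ := by
    have h1 : Real.exp (μ₁ * ζ) < 1 := by nlinarith [Real.exp_pos (l₂ * ζ), hval]
    have h2 : μ₁ * ζ < 0 := by
      by_contra h
      exact absurd h1 (not_lt.mpr (Real.one_le_exp (not_lt.mp h)))
    nlinarith
  -- χ₀ identity
  set F := Real.exp (-(l₂ * c * τ)) with hFdef
  have hF1 : F < 1 := by
    rw [hFdef]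
    apply Real.exp_lt_one_iff.mpr
    nlinarith [mul_pos (mul_pos hl₂pos hc) hτ]
  have hF0 : 0 < F := Real.exp_pos _
  have hbF1 : b * F < 1 := by nlinarith
  have h1bF : 0 < 1 - b * F := by linarith
  have hchi0' : l₂ ^ 2 - c * l₂ = -(1 - b * F)⁻¹ := by
    have h := hl₂zero
    unfold chi0 at h
    rw [one_div] at h
    linarith
  -- χ₁ identity
  set E := Real.exp (-(μ₁ * c * τ)) with hEdef
  have hE0 : 0 < E := Real.exp_pos _
  have hq : 0 < μ₁ ^ 2 - c * μ₁ := by nlinarith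
  have hchiE : μ₁ ^ 2 - c * μ₁ - E / (1 - b * E) = 0 := hμzero
  have h1bE : 0 < 1 - b * E := by
    rcases lt_trichotomy (1 - b * E) 0 with h' | h' | h'
    · have : E / (1 - b * E) < 0 := div_neg_of_pos_of_neg hE0 h'
      linarith
    · rw [h', div_zero] at hchiE; linarith
    · exact h'
  have hbE1 : b * E < 1 := by linarith
  have hchi1' : μ₁ ^ 2 - c * μ₁ = E * (1 - b * E)⁻¹ := by
    rw [div_eq_mul_inv] at hchiE; linarith
  -- function g and its properties
  set g : ℝ → ℝ := fun t => a * Real.exp (l₂ * t) + Real.exp (μ₁ * t) - 1 with hg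
  set g' : ℝ → ℝ := fun t => a * (l₂ * Real.exp (l₂ * t)) + μ₁ * Real.exp (μ₁ * t) with hg'
  have hgd : ∀ t, HasDerivAt g (g' t) t := by
    intro t
    exact (((hExp l₂ t).const_mul a).add (hExp μ₁ t)).sub_const 1
  have hg'd : ∀ t, HasDerivAt g' (a * (l₂ * (l₂ * Real.exp (l₂ * t))) + μ₁ * (μ₁ * Real.exp (μ₁ * t))) t := by
    intro t
    exact (((hExp l₂ t).const_mul l₂).const_mul a).add ((hExp μ₁ t).const_mul μ₁)
  have hg'mono : StrictMono g' := by
    apply strictMono_of_deriv_pos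
    intro x
    rw [(hg'd x).deriv]
    have h1 : 0 < a * (l₂ * (l₂ * Real.exp (l₂ * x))) := by positivity
    have h2 : 0 ≤ μ₁ * (μ₁ * Real.exp (μ₁ * x)) := by
      have : μ₁ * (μ₁ * Real.exp (μ₁ * x)) = μ₁ ^ 2 * Real.exp (μ₁ * x) := by ring
      rw [this]; positivity
    linarith
  have hg'ζ : g' ζ = 0 := by
    have : a * (l₂ * Real.exp (l₂ * ζ)) = a * l₂ * Real.exp (l₂ * ζ) := by ring
    simp only [hg']
    rw [this, hder]; ring
  have hgζ : g ζ = 0 := by simp only [hg]; linarith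
  have hganti : StrictAntiOn g (Set.Iic ζ) := by
    apply strictAntiOn_of_deriv_neg (convex_Iic ζ)
    · exact fun x _ => (hgd x).continuousAt.continuousWithinAt
    · intro x hx
      rw [interior_Iic] at hx
      rw [(hgd x).deriv]
      have := hg'mono hx
      rw [hg'ζ] at this
      exact this
  have hgpos : ∀ t < ζ, 0 < g t := by
    intro t ht
    have := hganti (Set.mem_Iic.mpr ht.le) (Set.mem_Iic.mpr le_rfl) ht
    linarith [hgζ ▸ this]
  have hcond3 : ∀ t < ζ, 1 - Real.exp (μ₁ * t) < a * Real.exp (l₂ * t) := by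
    intro t ht
    have := hgpos t ht
    simp only [hg] at this
    linarith
  -- bounds on f
  have hub : ∀ s, f s ≤ 1 := by
    intro s
    by_cases hs : s ≤ ζ
    · rw [hf_le s hs]
      have h1 : a * Real.exp (l₂ * s) ≤ a * Real.exp (l₂ * ζ) :=
        mul_le_mul_of_nonneg_left (Real.exp_le_exp.mpr (by nlinarith)) ha.le
      nlinarith [Real.exp_pos (μ₁ * ζ)]
    · rw [hf_gt s (not_le.mp hs)]
      nlinarith [Real.exp_pos (μ₁ * s)]
  have hlb0 : ∀ s, 0 ≤ f s := by
    intro s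
    by_cases hs : s ≤ ζ
    · rw [hf_le s hs]; positivity
    · rw [hf_gt s (not_le.mp hs)]
      have : μ₁ * s < 0 := by nlinarith [not_le.mp hs]
      nlinarith [Real.exp_lt_one_iff.mpr this]
  have hlbexp : ∀ s, 1 - Real.exp (μ₁ * s) ≤ f s := by
    intro s
    by_cases hs : s ≤ ζ
    · rw [hf_le s hs]
      rcases eq_or_lt_of_le hs with h | h
      · subst h; linarith
      · exact (hcond3 s h).le
    · rw [hf_gt s (not_le.mp hs)]
  -- derivative of f everywhere
  have hfd : ∀ t, HasDerivAt f (ψ t) t := by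
    intro t
    rcases lt_trichotomy t ζ with ht | ht | ht
    · rw [hψ_le t ht.le]
      apply ((hExp l₂ t).const_mul a).congr_of_eventuallyEq
      filter_upwards [Iio_mem_nhds ht] with s hs
      exact hf_le s (le_of_lt hs)
    · subst ht
      rw [hψ_le t le_rfl]
      have hIic : HasDerivWithinAt f (a * (l₂ * Real.exp (l₂ * t))) (Set.Iic t) t := by
        apply (((hExp l₂ t).const_mul a).hasDerivWithinAt).congr
        · exact fun y hy => hf_le y hy
        · exact hf_le t le_rfl
      have hIci : HasDerivWithinAt f (a * (l₂ * Real.exp (l₂ * t))) (Set.Ici t) t := by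
        have hbase : HasDerivAt (fun s => 1 - Real.exp (μ₁ * s)) (-(μ₁ * Real.exp (μ₁ * t))) t :=
          (hExp μ₁ t).const_sub 1
        have heq : a * (l₂ * Real.exp (l₂ * t)) = -(μ₁ * Real.exp (μ₁ * t)) := by
          have : a * (l₂ * Real.exp (l₂ * t)) = a * l₂ * Real.exp (l₂ * t) := by ring
          rw [this, hder]; ring
        rw [heq]
        apply hbase.hasDerivWithinAt.congr
        · intro y hy
          rcases eq_or_lt_of_le (Set.mem_Ici.mp hy) with h | h
          · rw [← h, hf_le t le_rfl]; linarith
          · exact hf_gt y h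
        · rw [hf_le t le_rfl]; linarith
      have := hIic.union hIci
      rw [Set.Iic_union_Ici] at this
      rw [hasDerivWithinAt_univ] at this
      exact this
    · rw [hψ_gt t ht]
      apply ((hExp μ₁ t).const_sub 1).congr_of_eventuallyEq
      filter_upwards [Ioi_mem_nhds ht] with s hs
      exact hf_gt s hs
  have hderiv : deriv f = ψ := funext fun t => (hfd t).deriv
  have hψcont : Continuous ψ := by
    rw [hψ]
    apply Continuous.if_le
    · continuity
    · continuity
    · exact continuous_id
    · exact continuous_const
    · intro x hx
      subst hx
      have : a * (l₂ * Real.exp (l₂ * x)) = a * l₂ * Real.exp (l₂ * x) := by ring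
      rw [this, hder]; ring
  have hcd : ContDiff ℝ 1 f := by
    rw [contDiff_one_iff_deriv]
    exact ⟨fun t => (hfd t).differentiableAt, hderiv ▸ hψcont⟩
  have hmono : Monotone f := by
    apply monotone_of_deriv_nonneg (fun t => (hfd t).differentiableAt)
    intro x
    rw [hderiv]
    by_cases hx : x ≤ ζ
    · rw [hψ_le x hx]; positivity
    · rw [hψ_gt x (not_le.mp hx)]
      nlinarith [Real.exp_pos (μ₁ * x)]
  -- exp shift identities
  have key : ∀ (k t : ℝ) (j : ℕ), Real.exp (k * (t - (j : ℝ) * c * τ))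
      = Real.exp (k * t) * (Real.exp (-(k * c * τ))) ^ j := by
    intro k t j
    rw [← Real.exp_nat_mul, ← Real.exp_add]
    congr 1
    push_cast
    ring
  have key2 : ∀ (k t : ℝ) (j : ℕ), Real.exp (k * (t - ((j : ℝ) + 1) * c * τ))
      = Real.exp (k * t) * Real.exp (-(k * c * τ)) * (Real.exp (-(k * c * τ))) ^ j := by
    intro k t j
    rw [← Real.exp_nat_mul, ← Real.exp_add, ← Real.exp_add]
    congr 1
    push_cast
    ring
  -- summability and bounds for the series
  have hsumgeo : Summable (fun j : ℕ => b ^ j) := summable_geometric_of_lt_one hb0.le hb1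
  have hsumB : ∀ t, Summable (fun j : ℕ => b ^ j * f (t - (j : ℝ) * c * τ)) := by
    intro t
    refine Summable.of_nonneg_of_le (fun j => mul_nonneg (pow_nonneg hb0.le j) (hlb0 _))
      (fun j => ?_) hsumgeo
    calc b ^ j * f (t - (j : ℝ) * c * τ) ≤ b ^ j * 1 :=
          mul_le_mul_of_nonneg_left (hub _) (pow_nonneg hb0.le j)
      _ = b ^ j := mul_one _
  have hsumSB : ∀ t, Summable (fun j : ℕ => b ^ j * f (t - ((j : ℝ) + 1) * c * τ)) := by
    intro t
    refine Summable.of_nonneg_of_le (fun j => mul_nonneg (pow_nonneg hb0.le j) (hlb0 _))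
      (fun j => ?_) hsumgeo
    calc b ^ j * f (t - ((j : ℝ) + 1) * c * τ) ≤ b ^ j * 1 :=
          mul_le_mul_of_nonneg_left (hub _) (pow_nonneg hb0.le j)
      _ = b ^ j := mul_one _
  have hB0 : ∀ t, 0 ≤ Bop b c τ f t :=
    fun t => tsum_nonneg fun j => mul_nonneg (pow_nonneg hb0.le j) (hlb0 _)
  have hBle : ∀ t, Bop b c τ f t ≤ (1 - b)⁻¹ := by
    intro t
    have h1 : Bop b c τ f t ≤ ∑' j : ℕ, b ^ j := by
      refine Summable.tsum_le_tsum (fun j => ?_) (hsumB t) hsumgeo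
      calc b ^ j * f (t - (j : ℝ) * c * τ) ≤ b ^ j * 1 :=
            mul_le_mul_of_nonneg_left (hub _) (pow_nonneg hb0.le j)
        _ = b ^ j := mul_one _
    rwa [tsum_geometric_of_lt_one hb0.le hb1] at h1
  have hSB0 : ∀ t, 0 ≤ SBop b c τ f t :=
    fun t => tsum_nonneg fun j => mul_nonneg (pow_nonneg hb0.le j) (hlb0 _)
  have hSBle : ∀ t, SBop b c τ f t ≤ (1 - b)⁻¹ := by
    intro t
    have h1 : SBop b c τ f t ≤ ∑' j : ℕ, b ^ j := by
      refine Summable.tsum_le_tsum (fun j => ?_) (hsumSB t) hsumgeo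
      calc b ^ j * f (t - ((j : ℝ) + 1) * c * τ) ≤ b ^ j * 1 :=
            mul_le_mul_of_nonneg_left (hub _) (pow_nonneg hb0.le j)
        _ = b ^ j := mul_one _
    rwa [tsum_geometric_of_lt_one hb0.le hb1] at h1
  have hbne : (1 : ℝ) - b ≠ 0 := by linarith
  have hfac0 : ∀ t, 0 ≤ 1 - (1 - b) * SBop b c τ f t := by
    intro t
    have h2 : (1 - b) * SBop b c τ f t ≤ (1 - b) * (1 - b)⁻¹ :=
      mul_le_mul_of_nonneg_left (hSBle t) (by linarith)
    rw [mul_inv_cancel₀ hbne] at h2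
    linarith
  have hfac1 : ∀ t, 1 - (1 - b) * SBop b c τ f t ≤ 1 := by
    intro t
    have := mul_nonneg (by linarith : (0:ℝ) ≤ 1 - b) (hSB0 t)
    linarith
  refine ⟨hcd, hmono, hcond3, ?_⟩
  intro t htζ
  rcases lt_or_gt_of_ne htζ with ht | ht
  · -- t < ζ
    have hd1 : deriv f t = a * (l₂ * Real.exp (l₂ * t)) := by rw [hderiv]; exact hψ_le t ht.le
    have hd2 : deriv (deriv f) t = a * (l₂ * (l₂ * Real.exp (l₂ * t))) := by
      rw [hderiv]
      have hEq : ψ =ᶠ[nhds t] (fun s => a * (l₂ * Real.exp (l₂ * s))) := by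
        filter_upwards [Iio_mem_nhds ht] with s hs
        exact hψ_le s hs.le
      rw [hEq.deriv_eq]
      exact (((hExp l₂ t).const_mul l₂).const_mul a).deriv
    have hBval : Bop b c τ f t = a * Real.exp (l₂ * t) * (1 - b * F)⁻¹ := by
      have hterm : ∀ j : ℕ, b ^ j * f (t - (j : ℝ) * c * τ)
          = (a * Real.exp (l₂ * t)) * (b * F) ^ j := by
        intro j
        have harg : t - (j : ℝ) * c * τ ≤ ζ := by
          have h0 : 0 ≤ (j : ℝ) * c * τ := by positivity
          linarith
        rw [hf_le _ harg, key l₂ t j, ← hFdef]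
        ring
      unfold Bop
      rw [tsum_congr hterm, tsum_mul_left, tsum_geometric_of_lt_one (by positivity) hbF1]
    have hBf : Bop b c τ f t * (1 - (1 - b) * SBop b c τ f t)
        ≤ a * Real.exp (l₂ * t) * (1 - b * F)⁻¹ := by
      calc Bop b c τ f t * (1 - (1 - b) * SBop b c τ f t) ≤ Bop b c τ f t * 1 :=
            mul_le_mul_of_nonneg_left (hfac1 t) (hB0 t)
        _ = a * Real.exp (l₂ * t) * (1 - b * F)⁻¹ := by rw [mul_one, hBval]
    rw [hd1, hd2]
    have heq : a * (l₂ * (l₂ * Real.exp (l₂ * t))) - c * (a * (l₂ * Real.exp (l₂ * t)))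
        = -(a * Real.exp (l₂ * t) * (1 - b * F)⁻¹) := by
      rw [show a * (l₂ * (l₂ * Real.exp (l₂ * t))) - c * (a * (l₂ * Real.exp (l₂ * t)))
          = a * Real.exp (l₂ * t) * (l₂ ^ 2 - c * l₂) from by ring, hchi0']
      ring
    linarith
  · -- t > ζ
    have hd1 : deriv f t = -(μ₁ * Real.exp (μ₁ * t)) := by rw [hderiv]; exact hψ_gt t ht
    have hd2 : deriv (deriv f) t = -(μ₁ * (μ₁ * Real.exp (μ₁ * t))) := by
      rw [hderiv]
      have hEq : ψ =ᶠ[nhds t] (fun s => -(μ₁ * Real.exp (μ₁ * s))) := by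
        filter_upwards [Ioi_mem_nhds ht] with s hs
        exact hψ_gt s hs
      rw [hEq.deriv_eq]
      exact (((hExp μ₁ t).const_mul μ₁).neg).deriv
    have hlow : ∀ j : ℕ, b ^ j * (1 - Real.exp (μ₁ * (t - ((j : ℝ) + 1) * c * τ)))
        ≤ b ^ j * f (t - ((j : ℝ) + 1) * c * τ) :=
      fun j => mul_le_mul_of_nonneg_left (hlbexp _) (pow_nonneg hb0.le j)
    have hform : ∀ j : ℕ, b ^ j * (1 - Real.exp (μ₁ * (t - ((j : ℝ) + 1) * c * τ)))
        = b ^ j - (Real.exp (μ₁ * t) * E) * (b * E) ^ j := by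
      intro j
      rw [key2 μ₁ t j, ← hEdef]
      ring
    have hsum2 : Summable (fun j : ℕ => (Real.exp (μ₁ * t) * E) * (b * E) ^ j) :=
      (summable_geometric_of_lt_one (by positivity) hbE1).mul_left _
    have hsumlow : Summable (fun j : ℕ => b ^ j * (1 - Real.exp (μ₁ * (t - ((j : ℝ) + 1) * c * τ)))) := by
      rw [funext hform]
      exact hsumgeo.sub hsum2
    have hsumlowval : ∑' j : ℕ, b ^ j * (1 - Real.exp (μ₁ * (t - ((j : ℝ) + 1) * c * τ)))
        = (1 - b)⁻¹ - Real.exp (μ₁ * t) * E * (1 - b * E)⁻¹ := by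
      rw [tsum_congr hform, Summable.tsum_sub hsumgeo hsum2, tsum_mul_left,
        tsum_geometric_of_lt_one hb0.le hb1, tsum_geometric_of_lt_one (by positivity) hbE1]
    have hSBge : (1 - b)⁻¹ - Real.exp (μ₁ * t) * E * (1 - b * E)⁻¹ ≤ SBop b c τ f t := by
      rw [← hsumlowval]
      exact Summable.tsum_le_tsum hlow hsumlow (hsumSB t)
    have hfacle : 1 - (1 - b) * SBop b c τ f t
        ≤ (1 - b) * (Real.exp (μ₁ * t) * E * (1 - b * E)⁻¹) := by
      have h2 : (1 - b) * ((1 - b)⁻¹ - Real.exp (μ₁ * t) * E * (1 - b * E)⁻¹)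
          ≤ (1 - b) * SBop b c τ f t := mul_le_mul_of_nonneg_left hSBge (by linarith)
      rw [mul_sub, mul_inv_cancel₀ hbne] at h2
      linarith
    have hprod : Bop b c τ f t * (1 - (1 - b) * SBop b c τ f t)
        ≤ (1 - b)⁻¹ * ((1 - b) * (Real.exp (μ₁ * t) * E * (1 - b * E)⁻¹)) :=
      mul_le_mul (hBle t) hfacle (hfac0 t) (inv_nonneg.mpr (by linarith))
    have hprod2 : Bop b c τ f t * (1 - (1 - b) * SBop b c τ f t)
        ≤ Real.exp (μ₁ * t) * E * (1 - b * E)⁻¹ := by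
      rwa [← mul_assoc, inv_mul_cancel₀ hbne, one_mul] at hprod
    rw [hd1, hd2]
    have heq : -(μ₁ * (μ₁ * Real.exp (μ₁ * t))) - c * -(μ₁ * Real.exp (μ₁ * t))
        = -(Real.exp (μ₁ * t) * E * (1 - b * E)⁻¹) := by
      rw [show -(μ₁ * (μ₁ * Real.exp (μ₁ * t))) - c * -(μ₁ * Real.exp (μ₁ * t))
          = -(Real.exp (μ₁ * t) * (μ₁ ^ 2 - c * μ₁)) from by ring, hchi1']
      ring
    linarith

/-- For `(τ,c) ∈ 𝔇` with `c > c_*(τ)` (i.e. the positive zeros of χ₀ are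
distinct, `λ₂` being the smallest positive zero of χ₀, and `μ₁` the largest negative zero
of χ₁), there exist `a > 0` and `ζ ∈ ℝ` such that `φ₊(t) = 1 − e^{μ₁t}` for `t ≥ ζ` and
`φ₊(t) = a e^{λ₂t}` for `t ≤ ζ` is a `C¹`, nondecreasing super-solution:
`φ₊'' − cφ₊' + (Bφ₊)(1 − (1−b)(SBφ₊)) ≤ 0` for `t ≠ ζ`, with
`1 − e^{μ₁t} < a e^{λ₂t}` for `t < ζ`. -/
theorem supersolution_exists (b c τ l₂ μ₁ : ℝ) (hb : b ∈ Set.Ioo (0 : ℝ) 1)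
    (hτ : 0 < τ) (hc : 0 < c) (hD : inD b τ c)
    (hl₂pos : 0 < l₂) (hl₂zero : chi0 b c τ l₂ = 0)
    (hl₂min : ∀ z : ℝ, 0 < z → chi0 b c τ z = 0 → l₂ ≤ z)
    (hsimple : ∃ l₁ : ℝ, l₂ < l₁ ∧ chi0 b c τ l₁ = 0)
    (hμneg : μ₁ < 0) (hμzero : chi1 b c τ μ₁ = 0)
    (hμmax : ∀ z : ℝ, z < 0 → chi1 b c τ z = 0 → z ≤ μ₁) :
    ∃ a > (0 : ℝ), ∃ ζ : ℝ,
      let φp : ℝ → ℝ := fun t => if t ≤ ζ then a * Real.exp (l₂ * t) else 1 - Real.exp (μ₁ * t)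
      ContDiff ℝ 1 φp ∧ Monotone φp ∧
      (∀ t < ζ, 1 - Real.exp (μ₁ * t) < a * Real.exp (l₂ * t)) ∧
      ∀ t : ℝ, t ≠ ζ →
        deriv (deriv φp) t - c * deriv φp t
          + Bop b c τ φp t * (1 - (1 - b) * SBop b c τ φp t) ≤ 0 := by
  obtain ⟨hb0, hb1⟩ := hb
  have hden : 0 < l₂ - μ₁ := by linarith
  have hμne : μ₁ ≠ 0 := ne_of_lt hμneg
  set r : ℝ := l₂ / (l₂ - μ₁) with hrdef
  have hr0 : 0 < r := div_pos hl₂pos hden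
  have hr1 : r < 1 := (div_lt_one hden).mpr (by linarith)
  set ζ : ℝ := Real.log r / μ₁ with hζdef
  have hexpζ : Real.exp (μ₁ * ζ) = r := by
    rw [hζdef, show μ₁ * (Real.log r / μ₁) = Real.log r from by field_simp, Real.exp_log hr0]
  set a : ℝ := (1 - r) * Real.exp (-(l₂ * ζ)) with hadef
  have ha : 0 < a := mul_pos (by linarith) (Real.exp_pos _)
  have hcancel : Real.exp (-(l₂ * ζ)) * Real.exp (l₂ * ζ) = 1 := by
    rw [← Real.exp_add, neg_add_cancel, Real.exp_zero]
  have hval : a * Real.exp (l₂ * ζ) = 1 - Real.exp (μ₁ * ζ) := by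
    rw [hexpζ, hadef, mul_assoc, hcancel, mul_one]
  have hder : a * l₂ * Real.exp (l₂ * ζ) = -μ₁ * Real.exp (μ₁ * ζ) := by
    rw [hexpζ, hadef]
    have h1 : (1 - r) * Real.exp (-(l₂ * ζ)) * l₂ * Real.exp (l₂ * ζ)
        = l₂ * (1 - r) * (Real.exp (-(l₂ * ζ)) * Real.exp (l₂ * ζ)) := by ring
    rw [h1, hcancel, mul_one]
    have hr : r * (l₂ - μ₁) = l₂ := by
      rw [hrdef]
      exact div_mul_cancel₀ _ hden.ne'
    linear_combination -hr
  obtain ⟨h1, h2, h3, h4⟩ := aux_main b c τ l₂ μ₁ a ζ hb0 hb1 hτ hc hl₂pos hμneg hl₂zero hμzero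
    ha hval hder
  exact ⟨a, ha, ζ, h1, h2, h3, h4⟩
end

section
/- Let b ∈ (0,1) and (τ,c) ∈ 𝔇 with c > c_*(τ), and let λ₂ < λ₁ be the two positive real zeros of χ₀. Then for every a > 0 there exist M > 1 and ε ∈ (0, λ₂) with λ₂ + ε < λ₁ such that, setting ξ = −(ln M)/ε, the function φ₋ defined by φ₋(t) = a·e^{λ₂·t}·(1 − M·e^{ε·t}) for t ≤ ξ and φ₋(t) = 0 for t ≥ ξ is continuous, nonnegative, non-constant, and satisfies the sub-solution inequality φ₋''(t) − c·φ₋'(t) + (Bφ₋)(t)·(1 − (1−b)·(SBφ₋)(t)) ≥ 0 for all t ≠ ξ. -/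
open Filter

lemma qpos {b c τ z : ℝ} (hb0 : 0 < b) (hb1 : b < 1) (hτ : 0 < τ) (hc : 0 < c) (hz : 0 < z) :
    0 < 1 - b * Real.exp (-(z * c * τ)) := by
  have h1 : Real.exp (-(z * c * τ)) < 1 := by
    rw [Real.exp_lt_one_iff]
    have := mul_pos (mul_pos hz hc) hτ; linarith
  nlinarith [Real.exp_pos (-(z * c * τ))]

lemma hasDerivAt_chi0 (b c τ : ℝ) {z : ℝ} (hq : 1 - b * Real.exp (-(z * c * τ)) ≠ 0) :
    HasDerivAt (chi0 b c τ)
      (2 * z - c - (b * (c * τ) * Real.exp (-(z * c * τ))) /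
        (1 - b * Real.exp (-(z * c * τ))) ^ 2) z := by
  have h1 : HasDerivAt (fun x : ℝ => -(x * c * τ)) (-(c * τ)) z := by
    simpa [mul_assoc] using ((hasDerivAt_id z).mul_const (c * τ)).fun_neg
  have hqd : HasDerivAt (fun x : ℝ => 1 - b * Real.exp (-(x * c * τ)))
      (-(b * (Real.exp (-(z * c * τ)) * -(c * τ)))) z := (h1.exp.const_mul b).const_sub 1
  have hinv := hqd.fun_inv hq
  have hpoly : HasDerivAt (fun x : ℝ => x ^ 2 - c * x) (2 * z - c) z := by
    simpa using (hasDerivAt_pow 2 z).fun_sub ((hasDerivAt_id z).const_mul c)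
  have := hpoly.fun_add hinv
  have heq : chi0 b c τ = fun x : ℝ => x ^ 2 - c * x + (1 - b * Real.exp (-(x * c * τ)))⁻¹ := by
    funext x; simp [chi0, one_div]
  rw [heq]
  exact this.congr_deriv (by ring)

lemma chi0_strictConvex (b c τ : ℝ) (hb0 : 0 < b) (hb1 : b < 1) (hτ : 0 < τ) (hc : 0 < c) :
    StrictConvexOn ℝ (Set.Ioi 0) (chi0 b c τ) := by
  set Φ : ℝ → ℝ := fun z => 2 * z - c - (b * (c * τ) * Real.exp (-(z * c * τ))) /
        (1 - b * Real.exp (-(z * c * τ))) ^ 2 with hΦdef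
  have hΦd : ∀ z : ℝ, 0 < z → HasDerivAt Φ
      (2 - ((b * (c * τ) * (Real.exp (-(z * c * τ)) * -(c * τ))) *
          (1 - b * Real.exp (-(z * c * τ))) ^ 2 -
        (b * (c * τ) * Real.exp (-(z * c * τ))) *
          (2 * (1 - b * Real.exp (-(z * c * τ))) ^ 1 *
            (-(b * (Real.exp (-(z * c * τ)) * -(c * τ)))))) /
        ((1 - b * Real.exp (-(z * c * τ))) ^ 2) ^ 2) z := by
    intro z hz
    have hqz := qpos hb0 hb1 hτ hc hz
    have h1 : HasDerivAt (fun x : ℝ => -(x * c * τ)) (-(c * τ)) z := by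
      simpa [mul_assoc] using ((hasDerivAt_id z).mul_const (c * τ)).fun_neg
    have hqd : HasDerivAt (fun x : ℝ => 1 - b * Real.exp (-(x * c * τ)))
        (-(b * (Real.exp (-(z * c * τ)) * -(c * τ)))) z := (h1.exp.const_mul b).const_sub 1
    have hn : HasDerivAt (fun x : ℝ => b * (c * τ) * Real.exp (-(x * c * τ)))
        (b * (c * τ) * (Real.exp (-(z * c * τ)) * -(c * τ))) z := h1.exp.const_mul _
    have hq2 : HasDerivAt (fun x : ℝ => (1 - b * Real.exp (-(x * c * τ))) ^ 2)
        (2 * (1 - b * Real.exp (-(z * c * τ))) ^ 1 *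
          (-(b * (Real.exp (-(z * c * τ)) * -(c * τ))))) z := hqd.pow 2
    have hq2ne : (1 - b * Real.exp (-(z * c * τ))) ^ 2 ≠ 0 := pow_ne_zero _ (ne_of_gt hqz)
    have hdiv := hn.div hq2 hq2ne
    have hlin : HasDerivAt (fun x : ℝ => 2 * x - c) 2 z := by
      simpa using ((hasDerivAt_id z).const_mul 2).sub_const c
    simpa [hΦdef] using hlin.fun_sub hdiv
  have hcont : ContinuousOn (chi0 b c τ) (Set.Ioi 0) := fun x hx =>
    (hasDerivAt_chi0 b c τ (ne_of_gt (qpos hb0 hb1 hτ hc hx))).continuousAt.continuousWithinAt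
  have hderiv2 : ∀ x ∈ interior (Set.Ioi (0:ℝ)), 0 < deriv^[2] (chi0 b c τ) x := by
    intro x hx
    rw [interior_Ioi] at hx
    have hx0 : (0:ℝ) < x := hx
    have hqx := qpos hb0 hb1 hτ hc hx0
    have hEq : Set.EqOn (deriv (chi0 b c τ)) Φ (Set.Ioi 0) := by
      intro y hy
      exact (hasDerivAt_chi0 b c τ (ne_of_gt (qpos hb0 hb1 hτ hc hy))).deriv
    have h2 : deriv (deriv (chi0 b c τ)) x = deriv Φ x := by
      apply Filter.EventuallyEq.deriv_eq
      exact Filter.eventuallyEq_of_mem (isOpen_Ioi.mem_nhds hx0) hEq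
    have h3 : deriv^[2] (chi0 b c τ) x = deriv (deriv (chi0 b c τ)) x := rfl
    rw [h3, h2, (hΦd x hx0).deriv]
    set E := Real.exp (-(x * c * τ)) with hE
    have hEpos : 0 < E := Real.exp_pos _
    set q := 1 - b * E with hqdef
    have hnum : (b * (c * τ) * (E * -(c * τ))) * q ^ 2 -
        (b * (c * τ) * E) * (2 * q ^ 1 * (-(b * (E * -(c * τ))))) ≤ 0 := by
      have hkey : (b * (c * τ) * (E * -(c * τ))) * q ^ 2 -
          (b * (c * τ) * E) * (2 * q ^ 1 * (-(b * (E * -(c * τ))))) =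
          -(b * (c * τ) ^ 2 * E * q ^ 2 + 2 * b ^ 2 * (c * τ) ^ 2 * E ^ 2 * q) := by ring
      rw [hkey, neg_nonpos]
      positivity
    have hden : (0:ℝ) < (q ^ 2) ^ 2 := by positivity
    have := div_nonpos_of_nonpos_of_nonneg hnum (le_of_lt hden)
    linarith
  exact strictConvexOn_of_deriv2_pos (convex_Ioi 0) hcont hderiv2

lemma chi0_neg_between_s15 (b c τ l₂ l₁ z : ℝ) (hb0 : 0 < b) (hb1 : b < 1) (hτ : 0 < τ) (hc : 0 < c)
    (hl₂ : 0 < l₂) (hlt : l₂ < l₁) (h₂ : chi0 b c τ l₂ = 0) (h₁ : chi0 b c τ l₁ = 0)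
    (hz₂ : l₂ < z) (hz₁ : z < l₁) : chi0 b c τ z < 0 := by
  have SC := chi0_strictConvex b c τ hb0 hb1 hτ hc
  have hs : (0:ℝ) < (l₁ - z) / (l₁ - l₂) := by
    apply div_pos <;> linarith
  have ht : (0:ℝ) < (z - l₂) / (l₁ - l₂) := by
    apply div_pos <;> linarith
  have hne : l₁ - l₂ ≠ 0 := by linarith
  have hst : (l₁ - z) / (l₁ - l₂) + (z - l₂) / (l₁ - l₂) = 1 := by
    rw [← add_div]
    field_simp
    ring
  have := SC.2 (Set.mem_Ioi.mpr hl₂) (Set.mem_Ioi.mpr (lt_trans hl₂ hlt)) (ne_of_lt hlt) hs ht hst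
  rw [smul_eq_mul, smul_eq_mul, smul_eq_mul, smul_eq_mul] at this
  have hcomb : (l₁ - z) / (l₁ - l₂) * l₂ + (z - l₂) / (l₁ - l₂) * l₁ = z := by
    field_simp; ring
  rw [hcomb, h₂, h₁] at this
  simpa using this

lemma hasDerivAt_exp_mul (r t : ℝ) :
    HasDerivAt (fun x : ℝ => Real.exp (r * x)) (r * Real.exp (r * t)) t := by
  have h := ((hasDerivAt_id t).const_mul r).exp
  simpa [mul_comm] using h

set_option maxHeartbeats 2000000 in
lemma subsol_aux (b c τ l₂ a M ε ξ : ℝ)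
    (hb0 : 0 < b) (hb1 : b < 1) (hτ : 0 < τ) (hc : 0 < c)
    (hl₂pos : 0 < l₂) (ha : 0 < a)
    (hε0 : 0 < ε) (hεl₂ : ε < l₂)
    (hM1 : 1 < M) (hMa : a < M)
    (hLneg : chi0 b c τ (l₂ + ε) < 0)
    (hMD : a * ((1 - b * Real.exp (-(l₂ * c * τ)))⁻¹) ^ 2 ≤ M * (-(chi0 b c τ (l₂ + ε))))
    (hl₂zero : chi0 b c τ l₂ = 0)
    (hξ : ξ = -(Real.log M) / ε) :
    (Continuous (fun t => if t ≤ ξ then a * Real.exp (l₂ * t) * (1 - M * Real.exp (ε * t)) else 0) ∧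
     (∀ t : ℝ, 0 ≤ (fun t => if t ≤ ξ then a * Real.exp (l₂ * t) * (1 - M * Real.exp (ε * t)) else 0) t) ∧
     (∃ s t : ℝ, (fun t => if t ≤ ξ then a * Real.exp (l₂ * t) * (1 - M * Real.exp (ε * t)) else 0) s ≠
        (fun t => if t ≤ ξ then a * Real.exp (l₂ * t) * (1 - M * Real.exp (ε * t)) else 0) t) ∧
     ∀ t : ℝ, t ≠ ξ →
       0 ≤ deriv (deriv (fun t => if t ≤ ξ then a * Real.exp (l₂ * t) * (1 - M * Real.exp (ε * t)) else 0)) t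
         - c * deriv (fun t => if t ≤ ξ then a * Real.exp (l₂ * t) * (1 - M * Real.exp (ε * t)) else 0) t
         + Bop b c τ (fun t => if t ≤ ξ then a * Real.exp (l₂ * t) * (1 - M * Real.exp (ε * t)) else 0) t
           * (1 - (1 - b) * SBop b c τ (fun t => if t ≤ ξ then a * Real.exp (l₂ * t) * (1 - M * Real.exp (ε * t)) else 0) t)) := by
  have hM0 : (0:ℝ) < M := lt_trans one_pos hM1
  set φm : ℝ → ℝ := fun t => if t ≤ ξ then a * Real.exp (l₂ * t) * (1 - M * Real.exp (ε * t)) else 0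
    with hφm
  -- basic facts about ξ
  have hlogM : 0 < Real.log M := Real.log_pos hM1
  have hξneg : ξ < 0 := by
    rw [hξ]
    exact div_neg_of_neg_of_pos (neg_neg_iff_pos.mpr hlogM) hε0
  have hMexp : M * Real.exp (ε * ξ) = 1 := by
    have : ε * ξ = -Real.log M := by
      rw [hξ]; field_simp
    rw [this, Real.exp_neg, Real.exp_log hM0, mul_inv_cancel₀ (ne_of_gt hM0)]
  have hexpξ : Real.exp (l₂ * ξ) ≤ M⁻¹ := by
    have h1 : Real.log M ≤ l₂ * Real.log M / ε := by
      rw [le_div_iff₀ hε0]; nlinarith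
    have h2 : l₂ * ξ ≤ -Real.log M := by
      rw [hξ]
      have he : l₂ * (-Real.log M / ε) = -(l₂ * (Real.log M / ε)) := by ring
      rw [mul_div_assoc] at h1
      rw [he]; linarith
    calc Real.exp (l₂ * ξ) ≤ Real.exp (-Real.log M) := Real.exp_le_exp.mpr h2
      _ = M⁻¹ := by rw [Real.exp_neg, Real.exp_log hM0]
  have hC1 : a * Real.exp (l₂ * ξ) ≤ 1 := by
    calc a * Real.exp (l₂ * ξ) ≤ a * M⁻¹ := by
          exact mul_le_mul_of_nonneg_left hexpξ ha.le
      _ ≤ 1 := by rw [mul_inv_le_iff₀ hM0]; linarith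
  -- pointwise bounds
  have hpos : ∀ t : ℝ, 0 ≤ φm t := by
    intro t
    rw [hφm]
    by_cases h : t ≤ ξ
    · simp only [if_pos h]
      have h1 : Real.exp (ε * t) ≤ Real.exp (ε * ξ) :=
        Real.exp_le_exp.mpr (mul_le_mul_of_nonneg_left h hε0.le)
      have h2 : M * Real.exp (ε * t) ≤ 1 := by
        calc M * Real.exp (ε * t) ≤ M * Real.exp (ε * ξ) :=
              mul_le_mul_of_nonneg_left h1 hM0.le
          _ = 1 := hMexp
      have h3 : (0:ℝ) ≤ 1 - M * Real.exp (ε * t) := by linarith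
      have h4 : (0:ℝ) ≤ a * Real.exp (l₂ * t) := by positivity
      exact mul_nonneg h4 h3
    · simp [if_neg h]
  have hub : ∀ t : ℝ, φm t ≤ a * Real.exp (l₂ * t) := by
    intro t
    rw [hφm]
    by_cases h : t ≤ ξ
    · simp only [if_pos h]
      have h1 := Real.exp_pos (l₂ * t)
      have h2 := Real.exp_pos (ε * t)
      nlinarith [mul_nonneg (mul_nonneg ha.le h1.le) (mul_nonneg hM0.le h2.le)]
    · simp only [if_neg h]
      positivity
  have hubC : ∀ t : ℝ, φm t ≤ a * Real.exp (l₂ * ξ) := by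
    intro t
    by_cases h : t ≤ ξ
    · calc φm t ≤ a * Real.exp (l₂ * t) := hub t
        _ ≤ a * Real.exp (l₂ * ξ) := by
            exact mul_le_mul_of_nonneg_left (Real.exp_le_exp.mpr
              (mul_le_mul_of_nonneg_left h hl₂pos.le)) ha.le
    · rw [hφm]; simp only [if_neg h]; positivity
  -- value below ξ
  have hval : ∀ s : ℝ, s ≤ ξ →
      φm s = a * Real.exp (l₂ * s) - a * M * Real.exp ((l₂ + ε) * s) := by
    intro s hs
    rw [hφm]
    simp only [if_pos hs]
    rw [show (l₂ + ε) * s = l₂ * s + ε * s by ring, Real.exp_add]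
    ring
  -- derivatives below ξ
  have hg : ∀ s : ℝ, HasDerivAt (fun x => a * Real.exp (l₂ * x) - a * M * Real.exp ((l₂ + ε) * x))
      (a * (l₂ * Real.exp (l₂ * s)) - a * M * ((l₂ + ε) * Real.exp ((l₂ + ε) * s))) s := by
    intro s
    exact ((hasDerivAt_exp_mul l₂ s).const_mul a).sub
      ((hasDerivAt_exp_mul (l₂ + ε) s).const_mul (a * M))
  have hg1 : ∀ s : ℝ, HasDerivAt
      (fun x => a * (l₂ * Real.exp (l₂ * x)) - a * M * ((l₂ + ε) * Real.exp ((l₂ + ε) * x)))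
      (a * (l₂ * (l₂ * Real.exp (l₂ * s))) - a * M * ((l₂ + ε) * ((l₂ + ε) * Real.exp ((l₂ + ε) * s)))) s := by
    intro s
    exact (((hasDerivAt_exp_mul l₂ s).const_mul l₂).const_mul a).sub
      (((hasDerivAt_exp_mul (l₂ + ε) s).const_mul (l₂ + ε)).const_mul (a * M))
  have hd1 : ∀ t : ℝ, t < ξ → deriv φm t =
      a * (l₂ * Real.exp (l₂ * t)) - a * M * ((l₂ + ε) * Real.exp ((l₂ + ε) * t)) := by
    intro t ht
    have hev : φm =ᶠ[nhds t] (fun x => a * Real.exp (l₂ * x) - a * M * Real.exp ((l₂ + ε) * x)) :=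
      Filter.eventually_of_mem (Iio_mem_nhds ht) (fun s hs => hval s (le_of_lt hs))
    rw [hev.deriv_eq, (hg t).deriv]
  have hd2 : ∀ t : ℝ, t < ξ → deriv (deriv φm) t =
      a * (l₂ * (l₂ * Real.exp (l₂ * t))) - a * M * ((l₂ + ε) * ((l₂ + ε) * Real.exp ((l₂ + ε) * t))) := by
    intro t ht
    have hev : deriv φm =ᶠ[nhds t]
        (fun x => a * (l₂ * Real.exp (l₂ * x)) - a * M * ((l₂ + ε) * Real.exp ((l₂ + ε) * x))) :=
      Filter.eventually_of_mem (Iio_mem_nhds ht) (fun s hs => hd1 s hs)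
    rw [hev.deriv_eq, (hg1 t).deriv]
  -- derivatives above ξ
  have hz1 : ∀ t : ℝ, ξ < t → deriv φm t = 0 := by
    intro t ht
    have hev : φm =ᶠ[nhds t] (fun _ => (0:ℝ)) :=
      Filter.eventually_of_mem (Ioi_mem_nhds ht)
        (fun s hs => by rw [hφm]; simp only [if_neg (not_le.mpr (show ξ < s from hs))])
    rw [hev.deriv_eq, deriv_const]
  have hz2 : ∀ t : ℝ, ξ < t → deriv (deriv φm) t = 0 := by
    intro t ht
    have hev : deriv φm =ᶠ[nhds t] (fun _ => (0:ℝ)) :=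
      Filter.eventually_of_mem (Ioi_mem_nhds ht) (fun s hs => hz1 s hs)
    rw [hev.deriv_eq, deriv_const]
  -- geometric ratios
  set r₁ : ℝ := b * Real.exp (-(l₂ * c * τ)) with hr₁
  set r₂ : ℝ := b * Real.exp (-((l₂ + ε) * c * τ)) with hr₂
  have hr₁0 : 0 ≤ r₁ := by positivity
  have hr₂0 : 0 ≤ r₂ := by positivity
  have hr₁1 : r₁ < 1 := by
    have h1 : Real.exp (-(l₂ * c * τ)) < 1 := by
      rw [Real.exp_lt_one_iff]
      have := mul_pos (mul_pos hl₂pos hc) hτ; linarith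
    nlinarith [Real.exp_pos (-(l₂ * c * τ))]
  have hr₂1 : r₂ < 1 := by
    have h1 : Real.exp (-((l₂ + ε) * c * τ)) < 1 := by
      rw [Real.exp_lt_one_iff]
      have := mul_pos (mul_pos (by linarith : (0:ℝ) < l₂ + ε) hc) hτ; linarith
    nlinarith [Real.exp_pos (-((l₂ + ε) * c * τ))]
  have hr₁inv : 0 < (1 - r₁)⁻¹ := by
    have : 0 < 1 - r₁ := by linarith
    positivity
  -- summability of the two sequences for any t
  have hBsummand_nonneg : ∀ t : ℝ, ∀ j : ℕ, 0 ≤ b ^ j * φm (t - (j:ℝ) * c * τ) :=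
    fun t j => mul_nonneg (by positivity) (hpos _)
  have hSsummand_nonneg : ∀ t : ℝ, ∀ j : ℕ, 0 ≤ b ^ j * φm (t - ((j:ℝ) + 1) * c * τ) :=
    fun t j => mul_nonneg (by positivity) (hpos _)
  have hgeomb : Summable (fun j : ℕ => b ^ j * (a * Real.exp (l₂ * ξ))) :=
    (summable_geometric_of_lt_one hb0.le hb1).mul_right _
  have hBsummable : ∀ t : ℝ, Summable (fun j : ℕ => b ^ j * φm (t - (j:ℝ) * c * τ)) := by
    intro t
    apply Summable.of_nonneg_of_le (hBsummand_nonneg t) _ hgeomb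
    intro j
    exact mul_le_mul_of_nonneg_left (hubC _) (by positivity)
  have hSsummable : ∀ t : ℝ, Summable (fun j : ℕ => b ^ j * φm (t - ((j:ℝ) + 1) * c * τ)) := by
    intro t
    apply Summable.of_nonneg_of_le (hSsummand_nonneg t) _ hgeomb
    intro j
    exact mul_le_mul_of_nonneg_left (hubC _) (by positivity)
  have hBop_nonneg : ∀ t : ℝ, 0 ≤ Bop b c τ φm t :=
    fun t => tsum_nonneg (hBsummand_nonneg t)
  have hSBop_nonneg : ∀ t : ℝ, 0 ≤ SBop b c τ φm t :=
    fun t => tsum_nonneg (hSsummand_nonneg t)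
  -- global bound on SBop
  have hSBop_glob : ∀ t : ℝ, (1 - b) * SBop b c τ φm t ≤ 1 := by
    intro t
    have h1 : SBop b c τ φm t ≤ ∑' j : ℕ, b ^ j * (a * Real.exp (l₂ * ξ)) := by
      apply Summable.tsum_le_tsum _ (hSsummable t) hgeomb
      intro j
      exact mul_le_mul_of_nonneg_left (hubC _) (by positivity)
    have h2 : ∑' j : ℕ, b ^ j * (a * Real.exp (l₂ * ξ)) =
        (1 - b)⁻¹ * (a * Real.exp (l₂ * ξ)) := by
      rw [tsum_mul_right, tsum_geometric_of_lt_one hb0.le hb1]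
    have hb1' : (0:ℝ) < 1 - b := by linarith
    have h3 : (1 - b) * SBop b c τ φm t ≤ (1 - b) * ((1 - b)⁻¹ * (a * Real.exp (l₂ * ξ))) := by
      apply mul_le_mul_of_nonneg_left _ hb1'.le
      rw [← h2] at *
      linarith [h1, h2]
    rw [← mul_assoc, mul_inv_cancel₀ (ne_of_gt hb1'), one_mul] at h3
    linarith
  -- the exponent rewriting lemma
  have hexpand : ∀ (μ t : ℝ) (j : ℕ), Real.exp (μ * (t - (j:ℝ) * c * τ)) =
      Real.exp (μ * t) * Real.exp (-(μ * c * τ)) ^ j := by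
    intro μ t j
    rw [show μ * (t - (j:ℝ) * c * τ) = μ * t + (j:ℝ) * (-(μ * c * τ)) by ring,
      Real.exp_add, Real.exp_nat_mul]
  -- Bop formula below ξ
  have hBformula : ∀ t : ℝ, t < ξ → Bop b c τ φm t =
      a * Real.exp (l₂ * t) * (1 - r₁)⁻¹ - a * M * Real.exp ((l₂ + ε) * t) * (1 - r₂)⁻¹ := by
    intro t ht
    have hterm : ∀ j : ℕ, b ^ j * φm (t - (j:ℝ) * c * τ) =
        (a * Real.exp (l₂ * t)) * r₁ ^ j - (a * M * Real.exp ((l₂ + ε) * t)) * r₂ ^ j := by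
      intro j
      have harg : t - (j:ℝ) * c * τ ≤ ξ := by
        have : (0:ℝ) ≤ (j:ℝ) * c * τ := by positivity
        linarith
      rw [hval _ harg, hexpand l₂ t j, hexpand (l₂ + ε) t j, hr₁, hr₂]
      ring
    rw [Bop, tsum_congr hterm, Summable.tsum_sub (((summable_geometric_of_lt_one hr₁0 hr₁1).mul_left _))
      (((summable_geometric_of_lt_one hr₂0 hr₂1).mul_left _)),
      tsum_mul_left, tsum_mul_left, tsum_geometric_of_lt_one hr₁0 hr₁1,
      tsum_geometric_of_lt_one hr₂0 hr₂1]
  -- SBop bound below ξ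
  have hSBound : ∀ t : ℝ, t < ξ → SBop b c τ φm t ≤ a * Real.exp (l₂ * t) * (1 - r₁)⁻¹ := by
    intro t ht
    have hterm : ∀ j : ℕ, b ^ j * φm (t - ((j:ℝ) + 1) * c * τ) ≤
        (a * Real.exp (l₂ * t)) * r₁ ^ j := by
      intro j
      have h1 : φm (t - ((j:ℝ) + 1) * c * τ) ≤ a * Real.exp (l₂ * (t - ((j:ℝ) + 1) * c * τ)) :=
        hub _
      have h2 : a * Real.exp (l₂ * (t - ((j:ℝ) + 1) * c * τ)) ≤
          a * Real.exp (l₂ * (t - (j:ℝ) * c * τ)) := by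
        apply mul_le_mul_of_nonneg_left _ ha.le
        apply Real.exp_le_exp.mpr
        have : (0:ℝ) ≤ c * τ := by positivity
        nlinarith
      have h3 : b ^ j * φm (t - ((j:ℝ) + 1) * c * τ) ≤
          b ^ j * (a * Real.exp (l₂ * (t - (j:ℝ) * c * τ))) :=
        mul_le_mul_of_nonneg_left (le_trans h1 h2) (by positivity)
      calc b ^ j * φm (t - ((j:ℝ) + 1) * c * τ)
          ≤ b ^ j * (a * Real.exp (l₂ * (t - (j:ℝ) * c * τ))) := h3
        _ = (a * Real.exp (l₂ * t)) * r₁ ^ j := by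
            rw [hexpand l₂ t j, hr₁]; ring
    have h4 := Summable.tsum_le_tsum hterm (hSsummable t)
      ((summable_geometric_of_lt_one hr₁0 hr₁1).mul_left _)
    rw [tsum_mul_left, tsum_geometric_of_lt_one hr₁0 hr₁1] at h4
    rw [SBop]
    exact h4
  -- pieces of chi0
  have hchi₂ : (1 - r₁)⁻¹ = c * l₂ - l₂ ^ 2 := by
    have := hl₂zero
    rw [chi0, one_div] at this
    rw [hr₁]; linarith only [this]
  have hchiL : (1 - r₂)⁻¹ = chi0 b c τ (l₂ + ε) - (l₂ + ε) ^ 2 + c * (l₂ + ε) := by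
    have h := chi0 b c τ (l₂ + ε)
    rw [hr₂]
    have : chi0 b c τ (l₂ + ε) = (l₂ + ε) ^ 2 - c * (l₂ + ε) +
        (1 - b * Real.exp (-((l₂ + ε) * c * τ)))⁻¹ := by rw [chi0, one_div]
    linarith only [this]
  -- continuity
  have hcont : Continuous φm := by
    rw [hφm]
    apply Continuous.if_le
    · fun_prop
    · exact continuous_const
    · exact continuous_id
    · exact continuous_const
    · intro x hx
      rw [hx, hMexp]
      ring
  -- nonconstancy
  have hφξ : φm ξ = 0 := by
    rw [hφm]
    simp only [if_pos le_rfl]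
    rw [hMexp]; ring
  have hφξ1 : 0 < φm (ξ - 1) := by
    have hlab : M * Real.exp (ε * (ξ - 1)) = Real.exp (-ε) := by
      rw [show ε * (ξ - 1) = ε * ξ + -ε by ring, Real.exp_add, ← mul_assoc, hMexp, one_mul]
    have hlt1 : Real.exp (-ε) < 1 := by
      rw [Real.exp_lt_one_iff]; linarith
    rw [hφm]
    simp only [if_pos (by linarith : ξ - 1 ≤ ξ)]
    rw [hlab]
    have h7 : (0:ℝ) < a * Real.exp (l₂ * (ξ - 1)) := by positivity
    exact mul_pos h7 (by linarith)
  refine ⟨hcont, hpos, ⟨ξ - 1, ξ, by rw [hφξ]; exact ne_of_gt hφξ1⟩, ?_⟩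
  intro t ht
  rcases lt_or_gt_of_ne ht with htl | htg
  · -- t < ξ
    have hB := hBformula t htl
    have hS := hSBound t htl
    have hB0 := hBop_nonneg t
    have hS0 := hSBop_nonneg t
    set P : ℝ := a * Real.exp (l₂ * t) * (1 - r₁)⁻¹ with hP
    have hP0 : 0 ≤ P := by
      rw [hP]
      exact mul_nonneg (by positivity) hr₁inv.le
    have h12 : (0:ℝ) < 1 - r₂ := by linarith
    have hBle : Bop b c τ φm t ≤ P := by
      rw [hB, hP]
      have h6 : 0 ≤ a * M * Real.exp ((l₂ + ε) * t) * (1 - r₂)⁻¹ :=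
        mul_nonneg (by positivity) (inv_nonneg.mpr h12.le)
      linarith only [h6]
    have hprod : (1 - b) * (Bop b c τ φm t * SBop b c τ φm t) ≤ P * P := by
      have h1 : Bop b c τ φm t * SBop b c τ φm t ≤ P * P := mul_le_mul hBle hS hS0 hP0
      have h2 : 0 ≤ Bop b c τ φm t * SBop b c τ φm t := mul_nonneg hB0 hS0
      have m : 0 ≤ b * (Bop b c τ φm t * SBop b c τ φm t) := mul_nonneg hb0.le h2
      linarith only [h1, m]
    have hxx : Real.exp (l₂ * t) * Real.exp (l₂ * t) =
        Real.exp ((l₂ + ε) * t) * Real.exp ((l₂ - ε) * t) := by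
      rw [← Real.exp_add, ← Real.exp_add]; ring_nf
    have hy : Real.exp ((l₂ - ε) * t) ≤ 1 := by
      rw [show (1:ℝ) = Real.exp 0 by simp]
      apply Real.exp_le_exp.mpr
      have htneg : t < 0 := lt_trans htl hξneg
      have := mul_le_mul_of_nonneg_left htneg.le (show (0:ℝ) ≤ l₂ - ε by linarith only [hεl₂])
      simpa using this
    have hq : 0 ≤ a * ((1 - r₁)⁻¹) ^ 2 := mul_nonneg ha.le (sq_nonneg _)
    have h5 : a * ((1 - r₁)⁻¹) ^ 2 * Real.exp ((l₂ - ε) * t) ≤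
        M * (-(chi0 b c τ (l₂ + ε))) := by
      linarith only [hMD, mul_nonneg hq (sub_nonneg.mpr hy)]
    have hPPeq : P * P =
        (a * ((1 - r₁)⁻¹) ^ 2 * Real.exp ((l₂ - ε) * t)) * (a * Real.exp ((l₂ + ε) * t)) := by
      rw [hP]
      linear_combination (a * a * ((1 - r₁)⁻¹) ^ 2) * hxx
    have hPP : P * P ≤ a * M * Real.exp ((l₂ + ε) * t) * (-(chi0 b c τ (l₂ + ε))) := by
      calc P * P = (a * ((1 - r₁)⁻¹) ^ 2 * Real.exp ((l₂ - ε) * t)) *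
            (a * Real.exp ((l₂ + ε) * t)) := hPPeq
        _ ≤ (M * (-(chi0 b c τ (l₂ + ε)))) * (a * Real.exp ((l₂ + ε) * t)) :=
            mul_le_mul_of_nonneg_right h5 (by positivity)
        _ = a * M * Real.exp ((l₂ + ε) * t) * (-(chi0 b c τ (l₂ + ε))) := by ring
    have hmain : deriv (deriv φm) t - c * deriv φm t
        + Bop b c τ φm t * (1 - (1 - b) * SBop b c τ φm t)
        = a * M * Real.exp ((l₂ + ε) * t) * (-(chi0 b c τ (l₂ + ε)))
          - (1 - b) * (Bop b c τ φm t * SBop b c τ φm t) := by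
      rw [hd2 t htl, hd1 t htl, hB, hP, hchi₂, hchiL]
      ring
    rw [hmain]
    linarith only [le_trans hprod hPP]
  · -- ξ < t
    rw [hz2 t htg, hz1 t htg]
    have h1 := hSBop_glob t
    have h2 := hBop_nonneg t
    have h3 : (0:ℝ) ≤ 1 - (1 - b) * SBop b c τ φm t := by linarith
    have h4 : (0:ℝ) - c * 0 + Bop b c τ φm t * (1 - (1 - b) * SBop b c τ φm t)
        = Bop b c τ φm t * (1 - (1 - b) * SBop b c τ φm t) := by ring
    rw [h4]
    exact mul_nonneg h2 h3

/-- For `(τ,c) ∈ 𝔇` with the two positive zeros `λ₂ < λ₁` of χ₀ distinct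
(`c > c_*(τ)`) and any `a > 0`, there exist `M > 1` and `ε ∈ (0, λ₂)` with `λ₂ + ε < λ₁`
such that, with `ξ = −(ln M)/ε`, the function `φ₋(t) = a e^{λ₂t}(1 − M e^{εt})` for `t ≤ ξ`,
`φ₋(t) = 0` for `t ≥ ξ`, is a continuous, nonnegative, non-constant sub-solution:
`φ₋'' − cφ₋' + (Bφ₋)(1 − (1−b)(SBφ₋)) ≥ 0` for `t ≠ ξ`. -/
theorem subsolution_exists (b c τ l₂ l₁ : ℝ) (hb : b ∈ Set.Ioo (0 : ℝ) 1)
    (hτ : 0 < τ) (hc : 0 < c) (hD : inD b τ c)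
    (hl₂pos : 0 < l₂) (hlt : l₂ < l₁)
    (hl₂zero : chi0 b c τ l₂ = 0) (hl₁zero : chi0 b c τ l₁ = 0)
    (a : ℝ) (ha : 0 < a) :
    ∃ M > (1 : ℝ), ∃ ε : ℝ, 0 < ε ∧ ε < l₂ ∧ l₂ + ε < l₁ ∧
      (let ξ : ℝ := -(Real.log M) / ε
       let φm : ℝ → ℝ := fun t =>
         if t ≤ ξ then a * Real.exp (l₂ * t) * (1 - M * Real.exp (ε * t)) else 0
       Continuous φm ∧ (∀ t : ℝ, 0 ≤ φm t) ∧ (∃ s t : ℝ, φm s ≠ φm t) ∧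
       ∀ t : ℝ, t ≠ ξ →
         0 ≤ deriv (deriv φm) t - c * deriv φm t
           + Bop b c τ φm t * (1 - (1 - b) * SBop b c τ φm t)) := by
  obtain ⟨hb0, hb1⟩ := hb
  have hl₁l₂ : (0:ℝ) < l₁ - l₂ := by linarith
  set ε : ℝ := min l₂ (l₁ - l₂) / 2 with hεdef
  have hmin : 0 < min l₂ (l₁ - l₂) := lt_min hl₂pos hl₁l₂
  have hε0 : 0 < ε := by rw [hεdef]; positivity
  have hεl₂ : ε < l₂ := by
    have h1 := min_le_left l₂ (l₁ - l₂)
    rw [hεdef]; linarith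
  have hLl₁ : l₂ + ε < l₁ := by
    have h1 := min_le_right l₂ (l₁ - l₂)
    rw [hεdef]; linarith
  have hLneg : chi0 b c τ (l₂ + ε) < 0 :=
    chi0_neg_between_s15 b c τ l₂ l₁ (l₂ + ε) hb0 hb1 hτ hc hl₂pos hlt hl₂zero hl₁zero
      (by linarith) hLl₁
  set δ : ℝ := -(chi0 b c τ (l₂ + ε)) with hδdef
  have hδ : 0 < δ := by rw [hδdef]; linarith
  set D : ℝ := (1 - b * Real.exp (-(l₂ * c * τ)))⁻¹ with hDdef
  have hD0 : 0 < D := by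
    rw [hDdef]
    exact inv_pos.mpr (qpos hb0 hb1 hτ hc hl₂pos)
  set M : ℝ := 2 + a * D ^ 2 / δ + a with hMdef
  have hfrac : 0 ≤ a * D ^ 2 / δ := by positivity
  have hM1 : 1 < M := by rw [hMdef]; linarith
  have hMa : a < M := by rw [hMdef]; linarith
  have hMD : a * D ^ 2 ≤ M * δ := by
    have h1 : a * D ^ 2 / δ * δ = a * D ^ 2 := div_mul_cancel₀ _ (ne_of_gt hδ)
    have h2 : M * δ = 2 * δ + a * D ^ 2 / δ * δ + a * δ := by rw [hMdef]; ring
    have h3 : M * δ = 2 * δ + a * D ^ 2 + a * δ := by rw [h2, h1]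
    rw [h3]
    nlinarith [mul_pos ha hδ, hδ]
  refine ⟨M, hM1, ε, hε0, hεl₂, hLl₁, ?_⟩
  exact subsol_aux b c τ l₂ a M ε (-(Real.log M) / ε) hb0 hb1 hτ hc hl₂pos ha hε0 hεl₂
    hM1 hMa hLneg hMD hl₂zero rfl
end

section
/- Let b ∈ (0,1) and c, τ > 0, and define F(φ)(t) = (Bφ)(t) − (1−b)·(Bφ)(t)·(SBφ)(t). Then for all bounded continuous functions φ, ψ : ℝ → ℝ with 0 ≤ φ(t) ≤ ψ(t) ≤ 1 for all t ∈ ℝ, the nonstandard quasi-monotonicity inequality holds: (SB(ψ−φ))(t) + F(ψ)(t) − F(φ)(t) ≥ 0 for all t ∈ ℝ. Indeed this quantity equals ((Bψ)(t) − (Bφ)(t))·(1 − (1−b)·(SBψ)(t)) + ((SBψ)(t) − (SBφ)(t))·(1 − (1−b)·(Bφ)(t)), and both summands are nonnegative. -/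
/-- The nonlinearity `F(φ)(t) = (Bφ)(t) − (1−b)(Bφ)(t)(SBφ)(t)`. -/
noncomputable def Fop (b c τ : ℝ) (φ : ℝ → ℝ) (t : ℝ) : ℝ :=
  Bop b c τ φ t - (1 - b) * Bop b c τ φ t * SBop b c τ φ t

/-! Once `SB` is known to be additive, the identity is ring arithmetic. Each summand is a product
of two nonnegative factors: `B` and `SB` are monotone, and `(1 - b) B φ ≤ (1 - b) B 1 = 1` for
`φ ≤ 1` by the geometric series. Since `SB φ` is `B φ` evaluated one step `c τ` earlier, the facts
about `SB` are read off from those about `B`. -/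

theorem SBop_eq_Bop (b c τ : ℝ) (φ : ℝ → ℝ) (t : ℝ) :
    SBop b c τ φ t = Bop b c τ φ (t - c * τ) := by
  unfold SBop Bop
  congr 1 with j
  ring_nf

section

variable {b c τ : ℝ} (hb0 : 0 ≤ b) (hb1 : b < 1)
include hb0 hb1

theorem summable_pow_mul_of_abs_le {f : ℕ → ℝ} {C : ℝ} (hf : ∀ j, |f j| ≤ C) :
    Summable fun j => b ^ j * f j := by
  refine Summable.of_norm_bounded ((summable_geometric_of_lt_one hb0 hb1).mul_left C) fun j => ?_
  rw [Real.norm_eq_abs, abs_mul, abs_pow, abs_of_nonneg hb0, mul_comm]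
  exact mul_le_mul_of_nonneg_right (hf j) (pow_nonneg hb0 j)

theorem Bop_summable {φ : ℝ → ℝ} {C : ℝ} (hφ : ∀ r, |φ r| ≤ C) (t : ℝ) :
    Summable fun j : ℕ => b ^ j * φ (t - (j : ℝ) * c * τ) :=
  summable_pow_mul_of_abs_le hb0 hb1 fun _ => hφ _

theorem Bop_sub {φ ψ : ℝ → ℝ} {C D : ℝ} (hφ : ∀ r, |φ r| ≤ C) (hψ : ∀ r, |ψ r| ≤ D) (t : ℝ) :
    Bop b c τ (fun r => ψ r - φ r) t = Bop b c τ ψ t - Bop b c τ φ t := by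
  unfold Bop
  rw [← (Bop_summable hb0 hb1 hψ t).tsum_sub (Bop_summable hb0 hb1 hφ t)]
  simp only [mul_sub]

theorem SBop_sub {φ ψ : ℝ → ℝ} {C D : ℝ} (hφ : ∀ r, |φ r| ≤ C) (hψ : ∀ r, |ψ r| ≤ D) (t : ℝ) :
    SBop b c τ (fun r => ψ r - φ r) t = SBop b c τ ψ t - SBop b c τ φ t := by
  simp only [SBop_eq_Bop, Bop_sub hb0 hb1 hφ hψ]

theorem Bop_mono {φ ψ : ℝ → ℝ} {C D : ℝ} (hφ : ∀ r, |φ r| ≤ C) (hψ : ∀ r, |ψ r| ≤ D)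
    (hle : ∀ r, φ r ≤ ψ r) (t : ℝ) : Bop b c τ φ t ≤ Bop b c τ ψ t :=
  (Bop_summable hb0 hb1 hφ t).tsum_le_tsum
    (fun j => mul_le_mul_of_nonneg_left (hle _) (pow_nonneg hb0 j)) (Bop_summable hb0 hb1 hψ t)

theorem SBop_mono {φ ψ : ℝ → ℝ} {C D : ℝ} (hφ : ∀ r, |φ r| ≤ C) (hψ : ∀ r, |ψ r| ≤ D)
    (hle : ∀ r, φ r ≤ ψ r) (t : ℝ) : SBop b c τ φ t ≤ SBop b c τ ψ t := by
  simp only [SBop_eq_Bop]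
  exact Bop_mono hb0 hb1 hφ hψ hle _

theorem Bop_const_one (t : ℝ) : Bop b c τ (fun _ => 1) t = (1 - b)⁻¹ := by
  simp only [Bop, mul_one]
  exact tsum_geometric_of_lt_one hb0 hb1

theorem one_sub_mul_Bop_le_one {φ : ℝ → ℝ} {C : ℝ} (hφ : ∀ r, |φ r| ≤ C) (hφ1 : ∀ r, φ r ≤ 1)
    (t : ℝ) : (1 - b) * Bop b c τ φ t ≤ 1 := by
  have hle : Bop b c τ φ t ≤ (1 - b)⁻¹ := by
    rw [← Bop_const_one hb0 hb1 (c := c) (τ := τ) t]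
    exact Bop_mono hb0 hb1 hφ (fun _ => abs_one.le) hφ1 t
  calc (1 - b) * Bop b c τ φ t ≤ (1 - b) * (1 - b)⁻¹ :=
        mul_le_mul_of_nonneg_left hle (by linarith)
    _ = 1 := mul_inv_cancel₀ (by linarith)

theorem one_sub_mul_SBop_le_one {φ : ℝ → ℝ} {C : ℝ} (hφ : ∀ r, |φ r| ≤ C) (hφ1 : ∀ r, φ r ≤ 1)
    (t : ℝ) : (1 - b) * SBop b c τ φ t ≤ 1 := by
  rw [SBop_eq_Bop]
  exact one_sub_mul_Bop_le_one hb0 hb1 hφ hφ1 _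

end

theorem nonstandard_quasimonotonicity_general (b c τ : ℝ) (hb : b ∈ Set.Ioo (0 : ℝ) 1)
    (φ ψ : ℝ → ℝ)
    (hord : ∀ t : ℝ, 0 ≤ φ t ∧ φ t ≤ ψ t ∧ ψ t ≤ 1) :
    ∀ t : ℝ,
      SBop b c τ (fun r => ψ r - φ r) t + Fop b c τ ψ t - Fop b c τ φ t =
        (Bop b c τ ψ t - Bop b c τ φ t) * (1 - (1 - b) * SBop b c τ ψ t)
        + (SBop b c τ ψ t - SBop b c τ φ t) * (1 - (1 - b) * Bop b c τ φ t) ∧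
      0 ≤ (Bop b c τ ψ t - Bop b c τ φ t) * (1 - (1 - b) * SBop b c τ ψ t) ∧
      0 ≤ (SBop b c τ ψ t - SBop b c τ φ t) * (1 - (1 - b) * Bop b c τ φ t) ∧
      0 ≤ SBop b c τ (fun r => ψ r - φ r) t + Fop b c τ ψ t - Fop b c τ φ t := by
  obtain ⟨hb0, hb1⟩ := hb
  have hle r : φ r ≤ ψ r := (hord r).2.1
  have hψ1 r : ψ r ≤ 1 := (hord r).2.2
  have hφ1 r : φ r ≤ 1 := (hle r).trans (hψ1 r)
  have hφ r : |φ r| ≤ 1 := abs_le.mpr ⟨by linarith [(hord r).1], hφ1 r⟩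
  have hψ r : |ψ r| ≤ 1 := abs_le.mpr ⟨by linarith [(hord r).1, hle r], hψ1 r⟩
  intro t
  have hB := Bop_mono hb0.le hb1 hφ hψ hle (c := c) (τ := τ) t
  have hSB := SBop_mono hb0.le hb1 hφ hψ hle (c := c) (τ := τ) t
  have hBφ := one_sub_mul_Bop_le_one hb0.le hb1 hφ hφ1 (c := c) (τ := τ) t
  have hSBψ := one_sub_mul_SBop_le_one hb0.le hb1 hψ hψ1 (c := c) (τ := τ) t
  have heq : SBop b c τ (fun r => ψ r - φ r) t + Fop b c τ ψ t - Fop b c τ φ t =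
      (Bop b c τ ψ t - Bop b c τ φ t) * (1 - (1 - b) * SBop b c τ ψ t)
      + (SBop b c τ ψ t - SBop b c τ φ t) * (1 - (1 - b) * Bop b c τ φ t) := by
    rw [SBop_sub hb0.le hb1 hφ hψ, Fop, Fop]
    ring
  have h₁ : 0 ≤ (Bop b c τ ψ t - Bop b c τ φ t) * (1 - (1 - b) * SBop b c τ ψ t) :=
    mul_nonneg (by linarith) (by linarith)
  have h₂ : 0 ≤ (SBop b c τ ψ t - SBop b c τ φ t) * (1 - (1 - b) * Bop b c τ φ t) :=
    mul_nonneg (by linarith) (by linarith)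
  exact ⟨heq, h₁, h₂, heq ▸ add_nonneg h₁ h₂⟩

/-- Nonstandard quasi-monotonicity: for bounded continuous `0 ≤ φ ≤ ψ ≤ 1`,
`SB(ψ−φ) + F(ψ) − F(φ) ≥ 0`; indeed it equals
`(Bψ − Bφ)(1 − (1−b)SBψ) + (SBψ − SBφ)(1 − (1−b)Bφ)`, a sum of two nonnegative terms. -/
theorem nonstandard_quasimonotonicity (b c τ : ℝ) (hb : b ∈ Set.Ioo (0 : ℝ) 1)
    (hc : 0 < c) (hτ : 0 < τ) (φ ψ : ℝ → ℝ)
    (hφc : Continuous φ) (hψc : Continuous ψ)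
    (hord : ∀ t : ℝ, 0 ≤ φ t ∧ φ t ≤ ψ t ∧ ψ t ≤ 1) :
    ∀ t : ℝ,
      SBop b c τ (fun r => ψ r - φ r) t + Fop b c τ ψ t - Fop b c τ φ t =
        (Bop b c τ ψ t - Bop b c τ φ t) * (1 - (1 - b) * SBop b c τ ψ t)
        + (SBop b c τ ψ t - SBop b c τ φ t) * (1 - (1 - b) * Bop b c τ φ t) ∧
      0 ≤ (Bop b c τ ψ t - Bop b c τ φ t) * (1 - (1 - b) * SBop b c τ ψ t) ∧
      0 ≤ (SBop b c τ ψ t - SBop b c τ φ t) * (1 - (1 - b) * Bop b c τ φ t) ∧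
      0 ≤ SBop b c τ (fun r => ψ r - φ r) t + Fop b c τ ψ t - Fop b c τ φ t :=
  nonstandard_quasimonotonicity_general b c τ hb φ ψ hord
end
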